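/- arXiv:1212.0771 — 6 statements merged into one kernel-verified Lean document; each statement's English description precedes it below -/
import Mathlib

section
/- For a symmetric (2n)-core partition λ whose balanced flush abacus on 2n runners has its largest (highest-level) bead located at level ℓ of runner i (with 1 ≤ i ≤ 2n), the first part of λ equals 2n(ℓ−1) + i. -/
/-! Flush abaci with `r` runners, recorded by the level of the lowest bead on each runner
(runners 0-indexed by `Fin r`; entry at level `m` of runner `i` has value `m*(r+1) + (i+1)`). -/

/-- A balanced abacus on `2n` runners: the levels of symmetric runners sum to zero. -/
def BalancedAbacus (n : ℕ) (a : Fin (2*n) → ℤ) : Prop := ∀ i, a i + a i.rev = 0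

/-- `v` is the value of a bead of the flush abacus `a` on `r` runners. -/
def IsBead (r : ℕ) (a : Fin r → ℤ) (v : ℤ) : Prop :=
  ∃ i : Fin r, v % (r+1) = (i : ℤ) + 1 ∧ v ≤ (r+1) * a i + ((i : ℤ) + 1)

/-- `v` is the value of a gap (a non-bead entry) of the abacus `a`. -/
def IsGap (r : ℕ) (a : Fin r → ℤ) (v : ℤ) : Prop :=
  v % (r+1) ≠ 0 ∧ ¬ IsBead r a v

/-- The core partition of the abacus `a`: row `j` (0-indexed) is the number of gaps smaller
(in reading order) than the bead having exactly `j` beads above it. -/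
noncomputable def abacusCore (r : ℕ) (a : Fin r → ℤ) : ℕ → ℕ := fun j =>
  Nat.card {g : ℤ | IsGap r a g ∧ ∃ b : ℤ, IsBead r a b ∧
    Nat.card {b' : ℤ | IsBead r a b' ∧ b < b'} = j ∧ g < b}

/-- Level of runner `i` (0 for an out-of-range index). -/
def aget (r : ℕ) (a : Fin r → ℤ) (i : ℕ) : ℤ := if h : i < r then a ⟨i, h⟩ else 0

/-- The (0-indexed) position of the rightmost runner whose lowest bead is at the highest level. -/
noncomputable def largestRunner (r : ℕ) (a : Fin r → ℤ) : ℕ :=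
  sSup {i : ℕ | ∃ h : i < r, ∀ i', a i' ≤ a ⟨i, h⟩}

def swapIdx (p q x : ℕ) : ℕ := if x = p then q else if x = q then p else x

/-- Action of the Coxeter generator `s_t` (`0 ≤ t ≤ n`) of the affine Weyl group of type `Cₙ`
on balanced flush abaci, in terms of the level vector. -/
def genAct (n : ℕ) (t : ℕ) (a : Fin (2*n) → ℤ) : Fin (2*n) → ℤ := fun x =>
  if t = 0 then
    if x.val = 0 then aget (2*n) a (2*n-1) + 1
    else if x.val = 2*n-1 then aget (2*n) a 0 - 1
    else a x
  else if t = n then aget (2*n) a (swapIdx (n-1) n x.val)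
  else aget (2*n) a (swapIdx (t-1) t (swapIdx (2*n-1-t) (2*n-t) x.val))

/-- Apply a word in the generators to an abacus, leftmost letter first. -/
def applyWord (n : ℕ) (w : List ℕ) (a : Fin (2*n) → ℤ) : Fin (2*n) → ℤ :=
  w.foldl (fun b t => genAct n t b) a

/-- Coxeter length of the minimal coset representative corresponding to the abacus `a`:
the least length of a word in the generators carrying `a` to the identity abacus. -/
noncomputable def abacusLen (n : ℕ) (a : Fin (2*n) → ℤ) : ℕ :=
  sInf {ℓ : ℕ | ∃ w : List ℕ, (∀ t ∈ w, t ≤ n) ∧ applyWord n w a = 0 ∧ w.length = ℓ}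

def skipTwo (p q t : ℕ) : ℕ := if t < p then t else if t + 1 < q then t + 1 else t + 2

/-- Delete runner `j` and its symmetric runner `2n-1-j` from a balanced abacus on `2n` runners
(assuming `2n-1-j < j`), keeping the remaining runners in order with their levels. -/
def deleteRunners (n : ℕ) (a : Fin (2*n) → ℤ) (j : ℕ) : Fin (2*(n-1)) → ℤ :=
  fun t => aget (2*n) a (skipTwo (2*n-1-j) j t.val)

/-- Delete the single runner `j` from an abacus on `r` runners. -/
def deleteOne (r : ℕ) (a : Fin r → ℤ) (j : ℕ) : Fin (r-1) → ℤ :=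
  fun t => aget r a (if t.val < j then t.val else t.val + 1)

/-! Let `B` be the largest bead, at level `ℓ` of runner `j₀` (0-indexed). It is the only bead with
no bead above it, so the first row counts the gaps below `B`. On runner `j` these are the levels
`m` with `a j < m ≤ c j`, where `c j = ℓ` for `j < j₀` and `c j = ℓ - 1` otherwise. Maximality of
`B` gives `a j ≤ c j` for `j ≠ j₀`, while `a j₀ = ℓ = c j₀ + 1`; hence the count is
`∑ (c j - a j) + 1 = r (ℓ - 1) + j₀ + 1`, the levels `a j` cancelling because `∑ a j = 0` for a
balanced abacus. -/

namespace Abacus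

variable {r : ℕ} (a : Fin r → ℤ)

lemma runner_emod (j : Fin r) (m : ℤ) : (m * (r + 1) + (j + 1)) % (r + 1) = (j : ℤ) + 1 := by
  rw [add_comm, Int.add_mul_emod_self_right]
  exact Int.emod_eq_of_lt (by positivity) (by omega)

lemma exists_runner_eq {v : ℤ} (hv : v % (r + 1) ≠ 0) :
    ∃ (j : Fin r) (m : ℤ), v = m * (r + 1) + (j + 1) := by
  have h0 := Int.emod_nonneg v (by positivity : (r : ℤ) + 1 ≠ 0)
  have h1 := Int.emod_lt_of_pos v (by positivity : (0 : ℤ) < r + 1)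
  refine ⟨⟨(v % (r + 1) - 1).toNat, by omega⟩, v / (r + 1), ?_⟩
  have := Int.ediv_mul_add_emod v (r + 1)
  simp only
  omega

lemma isBead_runner_iff (j : Fin r) (m : ℤ) :
    IsBead r a (m * (r + 1) + (j + 1)) ↔ m ≤ a j := by
  have hr : (0 : ℤ) < r + 1 := by positivity
  constructor
  · rintro ⟨j', hj', hle⟩
    obtain rfl : j' = j := by rw [runner_emod] at hj'; ext; omega
    nlinarith
  · exact fun h => ⟨j, runner_emod j m, by nlinarith⟩

lemma isGap_runner_iff (j : Fin r) (m : ℤ) :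
    IsGap r a (m * (r + 1) + (j + 1)) ↔ a j < m := by
  rw [IsGap, runner_emod, isBead_runner_iff, not_le]
  exact and_iff_right (by omega)

lemma runner_lt_runner_iff (j j₀ : Fin r) (m ℓ : ℤ) :
    m * (r + 1) + (j + 1) < ℓ * (r + 1) + (j₀ + 1) ↔ m ≤ if j < j₀ then ℓ else ℓ - 1 := by
  have hj := j.isLt
  have hj₀ := j₀.isLt
  split_ifs with h
  · have h' : (j : ℤ) < j₀ := by exact_mod_cast h
    constructor
    · intro hlt; by_contra! hm; nlinarith
    · intro hm; nlinarith
  · have h' : (j₀ : ℤ) ≤ j := by exact_mod_cast not_lt.mp h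
    constructor
    · intro hlt; by_contra! hm; nlinarith
    · intro hm; nlinarith

lemma eq_of_runner_entry_eq {j j' : Fin r} {m m' : ℤ}
    (h : m * (r + 1) + (j + 1) = m' * (r + 1) + (j' + 1)) : j = j' := by
  have := congrArg (· % ((r : ℤ) + 1)) h
  simp only [runner_emod] at this
  ext; omega

noncomputable def runnerGapsUpTo (j : Fin r) (c : ℤ) : Finset ℤ :=
  (Finset.Ioc (a j) c).image fun m => m * (r + 1) + (j + 1)

lemma mem_runnerGapsUpTo {j : Fin r} {c g : ℤ} :
    g ∈ runnerGapsUpTo a j c ↔ ∃ m, (a j < m ∧ m ≤ c) ∧ m * (r + 1) + (j + 1) = g := by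
  simp only [runnerGapsUpTo, Finset.mem_image, Finset.mem_Ioc]

lemma card_runnerGapsUpTo (j : Fin r) (c : ℤ) :
    (runnerGapsUpTo a j c).card = (c - a j).toNat := by
  rw [runnerGapsUpTo, Finset.card_image_of_injective, Int.card_Ioc]
  intro m m' h
  exact mul_right_cancel₀ (by positivity) (add_right_cancel h)

lemma pairwiseDisjoint_runnerGapsUpTo (c : Fin r → ℤ) :
    ((Finset.univ : Finset (Fin r)) : Set (Fin r)).PairwiseDisjoint
      fun j => runnerGapsUpTo a j (c j) := by
  intro j _ j' _ hne
  refine Finset.disjoint_left.2 fun g hg hg' => hne ?_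
  obtain ⟨m, -, rfl⟩ := (mem_runnerGapsUpTo a).1 hg
  obtain ⟨m', -, h⟩ := (mem_runnerGapsUpTo a).1 hg'
  exact (eq_of_runner_entry_eq h).symm

lemma gaps_lt_eq_biUnion (j₀ : Fin r) (ℓ : ℤ) :
    {g | IsGap r a g ∧ g < ℓ * (r + 1) + (j₀ + 1)} =
      ↑(Finset.univ.biUnion fun j => runnerGapsUpTo a j (if j < j₀ then ℓ else ℓ - 1)) := by
  ext g
  simp only [Set.mem_ofPred_eq, Finset.coe_biUnion, Finset.coe_univ, Set.mem_univ,
    Set.iUnion_true, Set.mem_iUnion, Finset.mem_coe, mem_runnerGapsUpTo]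
  constructor
  · rintro ⟨hg, hlt⟩
    obtain ⟨j, m, rfl⟩ := exists_runner_eq hg.1
    exact ⟨j, m, ⟨(isGap_runner_iff a j m).1 hg, (runner_lt_runner_iff j j₀ m ℓ).1 hlt⟩, rfl⟩
  · rintro ⟨j, m, ⟨hgap, hcap⟩, rfl⟩
    exact ⟨(isGap_runner_iff a j m).2 hgap, (runner_lt_runner_iff j j₀ m ℓ).2 hcap⟩

lemma ncard_gaps_lt (j₀ : Fin r) (ℓ : ℤ) :
    {g | IsGap r a g ∧ g < ℓ * (r + 1) + (j₀ + 1)}.ncard =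
      ∑ j, ((if j < j₀ then ℓ else ℓ - 1) - a j).toNat := by
  rw [gaps_lt_eq_biUnion, Set.ncard_coe_finset,
    Finset.card_biUnion (pairwiseDisjoint_runnerGapsUpTo a _)]
  simp only [card_runnerGapsUpTo]

lemma abacusCore_zero_eq_ncard {B : ℤ} (hB : IsGreatest {v | IsBead r a v} B) :
    abacusCore r a 0 = {g | IsGap r a g ∧ g < B}.ncard := by
  have hnone : {b | IsBead r a b ∧ B < b} = ∅ :=
    Set.eq_empty_of_forall_notMem fun b hb => (hB.2 hb.1).not_gt hb.2
  rw [abacusCore, Nat.card_coe_set_eq]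
  congr 1
  ext g
  constructor
  · rintro ⟨hg, b, hb, -, hgb⟩
    exact ⟨hg, hgb.trans_le (hB.2 hb)⟩
  · rintro ⟨hg, hgB⟩
    exact ⟨hg, B, hB.1, by simp [hnone], hgB⟩

lemma sum_ite_lt_self_sub_one (j₀ : Fin r) (ℓ : ℤ) :
    ∑ j : Fin r, (if j < j₀ then ℓ else ℓ - 1) = r * (ℓ - 1) + j₀ := by
  calc ∑ j : Fin r, (if j < j₀ then ℓ else ℓ - 1)
      = ∑ j : Fin r, ((ℓ - 1) + if j < j₀ then 1 else 0) :=
        Finset.sum_congr rfl fun j _ => by split_ifs <;> ring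
    _ = r * (ℓ - 1) + j₀ := by
        rw [Finset.sum_add_distrib, Finset.sum_boole, Finset.filter_gt_eq_Iio, Fin.card_Iio]
        simp only [Finset.sum_const, Finset.card_univ, Fintype.card_fin, nsmul_eq_mul]

theorem abacusCore_zero_of_isGreatest (hsum : ∑ j, a j = 0) (j₀ : Fin r) (ℓ : ℤ)
    (hB : IsGreatest {v | IsBead r a v} (ℓ * (r + 1) + (j₀ + 1))) :
    (abacusCore r a 0 : ℤ) = r * (ℓ - 1) + (j₀ + 1) := by
  have hr : (0 : ℤ) < r + 1 := by positivity
  have hgap : ∀ j, (((if j < j₀ then ℓ else ℓ - 1) - a j).toNat : ℤ) =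
      (if j < j₀ then ℓ else ℓ - 1) - a j + if j = j₀ then 1 else 0 := by
    intro j
    have htop := hB.2 ((isBead_runner_iff a j (a j)).2 le_rfl)
    by_cases hj : j = j₀
    · subst hj
      have hℓ : ℓ ≤ a j := (isBead_runner_iff a j ℓ).1 hB.1
      have : a j ≤ ℓ := le_of_mul_le_mul_right (by simpa using htop) hr
      simp [show a j = ℓ by omega]
    · have hlt := htop.lt_of_ne fun h => hj (eq_of_runner_entry_eq h)
      have := (runner_lt_runner_iff j j₀ (a j) ℓ).1 hlt
      rw [if_neg hj, add_zero, Int.toNat_of_nonneg (by omega)]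
  rw [abacusCore_zero_eq_ncard a hB, ncard_gaps_lt, Nat.cast_sum]
  simp only [hgap, Finset.sum_add_distrib, Finset.sum_sub_distrib, sum_ite_lt_self_sub_one, hsum,
    Finset.sum_ite_eq', Finset.mem_univ, if_true]
  ring

end Abacus

lemma BalancedAbacus.sum_eq_zero {n : ℕ} {a : Fin (2 * n) → ℤ} (h : BalancedAbacus n a) :
    ∑ j, a j = 0 := by
  have hrev : ∑ j : Fin (2 * n), a j.rev = ∑ j, a j :=
    Fintype.sum_equiv Fin.revPerm _ _ fun _ => rfl
  have : ∑ j : Fin (2 * n), (a j + a j.rev) = 0 := Finset.sum_eq_zero fun j _ => h j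
  rw [Finset.sum_add_distrib, hrev] at this
  omega

theorem stmt0_general (n : ℕ) (a : Fin (2*n) → ℤ) (hbal : BalancedAbacus n a)
    (ℓ : ℤ) (i : ℕ) (hi1 : 1 ≤ i) (hi2 : i ≤ 2*n)
    (hbead : IsBead (2*n) a ((2*n+1) * ℓ + i))
    (hmax : ∀ v : ℤ, IsBead (2*n) a v → v ≤ (2*n+1) * ℓ + i) :
    (abacusCore (2*n) a 0 : ℤ) = 2*n*(ℓ-1) + i := by
  let j₀ : Fin (2 * n) := ⟨i - 1, by omega⟩
  have hj₀ : ((j₀ : ℕ) : ℤ) + 1 = i := by simp only [j₀]; omega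
  have hB : (2 * n + 1) * ℓ + i = ℓ * (((2 * n : ℕ) : ℤ) + 1) + (j₀ + 1) := by
    rw [hj₀]; push_cast; ring
  rw [hB] at hbead hmax
  rw [Abacus.abacusCore_zero_of_isGreatest a hbal.sum_eq_zero j₀ ℓ ⟨hbead, hmax⟩, hj₀]
  push_cast
  ring

/-- If the largest bead of a balanced flush abacus on `2n` runners lies at level `ℓ` of
runner `i` (1-indexed, `1 ≤ i ≤ 2n`), then the first part of the associated symmetric
`2n`-core equals `2n(ℓ-1) + i`. -/
theorem stmt0 (n : ℕ) (hn : 1 ≤ n) (a : Fin (2*n) → ℤ) (hbal : BalancedAbacus n a)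
    (ℓ : ℤ) (i : ℕ) (hi1 : 1 ≤ i) (hi2 : i ≤ 2*n)
    (hbead : IsBead (2*n) a ((2*n+1) * ℓ + i))
    (hmax : ∀ v : ℤ, IsBead (2*n) a v → v ≤ (2*n+1) * ℓ + i) :
    (abacusCore (2*n) a 0 : ℤ) = 2*n*(ℓ-1) + i :=
  stmt0_general n a hbal ℓ i hi1 hi2 hbead hmax
end

section
/- The image of Φ_n restricted to symmetric (2n)-cores with first part equal to k is contained in the set of symmetric (2n−2)-cores with first part at most k − ⌈k/n⌉. -/
/-! Partitions and cores, represented by their row-length functions `ℕ → ℕ` (0-indexed rows). -/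

/-- The length of column `j` (the conjugate partition). -/
noncomputable def colLen (f : ℕ → ℕ) (j : ℕ) : ℕ := Nat.card {i : ℕ | j < f i}

/-- `f` is a partition: weakly decreasing and eventually zero. -/
def IsPartition (f : ℕ → ℕ) : Prop := Antitone f ∧ ∃ N, ∀ i, N ≤ i → f i = 0

/-- Hook length of the box `(i, j)` (0-indexed). -/
noncomputable def hook (f : ℕ → ℕ) (i j : ℕ) : ℕ := (f i - j) + (colLen f j - i) - 1

/-- `f` is an `m`-core: no hook length of a box of `f` is divisible by `m`. -/
def IsCore (m : ℕ) (f : ℕ → ℕ) : Prop := ∀ i j, j < f i → ¬ (m ∣ hook f i j)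

/-- `f` is symmetric: it equals its conjugate. -/
def IsSymmetric (f : ℕ → ℕ) : Prop := ∀ j, colLen f j = f j

/-- Residue (mod `2n`) of the last box of row `i`, namely `j - i` for `j = f i - 1`. -/
noncomputable def rowRes (n : ℕ) (f : ℕ → ℕ) (i : ℕ) : ZMod (2*n) :=
  (((f i : ℤ) - 1 - (i : ℤ) : ℤ) : ZMod (2*n))

/-- Residue (mod `2n`) of the last box of column `j`. -/
noncomputable def colRes (n : ℕ) (f : ℕ → ℕ) (j : ℕ) : ZMod (2*n) :=
  (((j : ℤ) - ((colLen f j : ℤ) - 1) : ℤ) : ZMod (2*n))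

/-- Row `i` survives: it is nonempty and does not end in the same residue as the first row. -/
noncomputable def keptRow (n : ℕ) (f : ℕ → ℕ) (i : ℕ) : Prop :=
  0 < f i ∧ rowRes n f i ≠ rowRes n f 0

/-- Column `j` survives: it is nonempty and does not end in the same residue as the first column. -/
noncomputable def keptCol (n : ℕ) (f : ℕ → ℕ) (j : ℕ) : Prop :=
  0 < colLen f j ∧ colRes n f j ≠ colRes n f 0

/-- The map `Φₙ` on cores: delete all rows ending in the same residue (mod `2n`) as the
first row and all columns ending in the same residue as the first column.  The `i`-th row of
the result is the number of surviving columns meeting the `i`-th surviving row. -/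
noncomputable def PhiCore (n : ℕ) (f : ℕ → ℕ) : ℕ → ℕ := fun i =>
  Nat.card {j : ℕ | keptRow n f (Nat.nth (keptRow n f) i) ∧ keptCol n f j ∧
    j < f (Nat.nth (keptRow n f) i)}

/-- Delete from `f` all columns ending in the same residue (mod `2n`) as the first column. -/
noncomputable def deleteColsCore (n : ℕ) (f : ℕ → ℕ) : ℕ → ℕ := fun i =>
  Nat.card {j : ℕ | keptCol n f j ∧ j < f i}

/-!
Encode a partition by its abacus: row `i` is the bead at position `f i - 1 - i`, the column ends
`j - colLen f j` are exactly the remaining positions (the gaps), and the hook length of a box is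
the distance from the end of its row down to the end of its column. So `f` is an `m`-core iff its
beads are closed under `z ↦ z - m`, and `f` is symmetric iff its gaps are the reflections
`z ↦ -1 - z` of its beads.

Let `f` be a symmetric `2n`-core with first part `k`. On the runner of residue `k - 1` every
position `≤ k - 1` is a bead, and on the runner of residue `-k` every position `≥ -k` is a gap;
`Φₙ` deletes the corresponding rows and columns, i.e. it removes the positions of these two runners
from the window `(-k - 1, k - 1]` and closes up the abacus. Any `2n` consecutive positions of the
window contain exactly one position of each runner, so a bead sliding down by `2n` in `f` slides
down by `2n - 2` in the image, which is therefore a `(2n - 2)`-core. The runner of residue `k - 1`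
meets the window in `⌈k/n⌉` beads, all of them rows of `f`, so at least `⌈k/n⌉` of the `k` rows are
deleted.
-/

open Finset Classical

lemma mem_of_forall_sub_mem_of_modEq {S : Set ℤ} {m : ℕ} (h : ∀ y ∈ S, y - m ∈ S) {a x : ℤ}
    (ha : a ∈ S) (hmod : x ≡ a [ZMOD m]) (hxa : x ≤ a) : x ∈ S := by
  obtain ⟨t, ht⟩ := (Int.modEq_iff_dvd.1 hmod)
  have hslide : ∀ s : ℕ, a - m * s ∈ S := fun s => by
    induction s with
    | zero => simpa using ha
    | succ s ih => simpa [mul_add, sub_add_eq_sub_sub] using h _ ih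
  rcases Nat.eq_zero_or_pos m with hm | hm
  · simp_all
  · have ht0 : 0 ≤ t := by
      by_contra! h
      nlinarith
    simpa [Int.toNat_of_nonneg ht0, ← ht] using hslide t.toNat

lemma card_Ioc_filter_modEq_sub {a b r v : ℤ} (hr : 0 < r) (hab : a ≤ b - r) :
    (#{w ∈ Ioc a b | w ≡ v [ZMOD r]} : ℤ) = #{w ∈ Ioc a (b - r) | w ≡ v [ZMOD r]} + 1 := by
  have hq : ((b - r : ℤ) - v : ℚ) / r = (b - v) / r - 1 := by push_cast; field_simp; ring
  have hle : ⌊((a : ℚ) - v) / r⌋ ≤ ⌊((b - r : ℤ) - v : ℚ) / r⌋ :=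
    Int.floor_mono (by gcongr)
  rw [Int.Ioc_filter_modEq_card _ _ hr, Int.Ioc_filter_modEq_card _ _ hr, hq, Int.floor_sub_one]
  rw [hq, Int.floor_sub_one] at hle
  omega

lemma Nat.card_setOf_and_lt (p : ℕ → Prop) [DecidablePred p] (s : ℕ) :
    Nat.card {j | p j ∧ j < s} = Nat.count p s := by
  rw [Nat.count_eq_card_filter_range, ← Nat.card_eq_finsetCard]
  congr
  ext j
  simp [and_comm]

lemma Nat.lt_count_iff_nth_lt {p : ℕ → Prop} [DecidablePred p] (hp : (Set.ofPred p).Finite)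
    {j s : ℕ} :
    j < Nat.count p s ↔ j < #hp.toFinset ∧ Nat.nth p j < s := by
  refine ⟨fun h => ⟨h.trans_le (Nat.count_le_card hp s), Nat.nth_lt_of_lt_count h⟩,
    fun ⟨hj, hs⟩ => ?_⟩
  have := Nat.count_strict_mono (Nat.nth_mem_of_lt_card hp hj) hs
  rwa [Nat.count_nth_of_lt_card_finite hp hj] at this

/-- Abacus position of the end of row `i`; the rows of `f` are the beads `Set.range (beta f)`. -/
def beta (f : ℕ → ℕ) (i : ℕ) : ℤ := (f i : ℤ) - 1 - i

/-- Abacus position of the end of column `j`; these are the gaps of the abacus. -/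
noncomputable def coBeta (f : ℕ → ℕ) (j : ℕ) : ℤ := (j : ℤ) - colLen f j

lemma colLen_eq_of_forall_lt_iff {f : ℕ → ℕ} {j c : ℕ} (h : ∀ i, j < f i ↔ i < c) :
    colLen f j = c := by
  simp only [colLen, h]
  show Nat.card (Set.Iio c) = c
  simp

lemma strictAnti_beta {f : ℕ → ℕ} (hf : Antitone f) : StrictAnti (beta f) := fun i i' h => by
  have := hf h.le
  simp only [beta]
  omega

lemma beta_le {f : ℕ → ℕ} {k : ℕ} (hf : Antitone f) (hk : f 0 = k) (i : ℕ) :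
    beta f i ≤ k - 1 := by
  have := hf (Nat.zero_le i)
  simp only [beta]
  omega

namespace IsPartition

variable {f : ℕ → ℕ}

lemma lt_iff_lt_colLen (hf : IsPartition f) {i j : ℕ} : j < f i ↔ i < colLen f j := by
  have hex : ∃ i, f i ≤ j := by obtain ⟨N, hN⟩ := hf.2; exact ⟨N, by simp [hN N le_rfl]⟩
  have key : ∀ i, j < f i ↔ i < Nat.find hex := fun i => by
    rw [Nat.lt_find_iff]
    exact ⟨fun h m hm => (h.trans_le (hf.1 hm)).not_ge, fun h => not_le.1 (h i le_rfl)⟩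
  rw [colLen_eq_of_forall_lt_iff key, key]

lemma coBeta_lt_beta_iff (hf : IsPartition f) {i j : ℕ} : coBeta f j < beta f i ↔ j < f i := by
  have := hf.lt_iff_lt_colLen (i := i) (j := j)
  simp only [beta, coBeta]
  omega

lemma beta_ne_coBeta (hf : IsPartition f) (i j : ℕ) : beta f i ≠ coBeta f j := by
  have h1 := hf.coBeta_lt_beta_iff (i := i) (j := j)
  have h2 := hf.lt_iff_lt_colLen (i := i) (j := j)
  simp only [beta, coBeta] at h1 ⊢
  omega

lemma hook_eq_beta_sub_coBeta (hf : IsPartition f) {i j : ℕ} (h : j < f i) :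
    (hook f i j : ℤ) = beta f i - coBeta f j := by
  have := hf.lt_iff_lt_colLen.1 h
  simp only [hook, beta, coBeta]
  omega

lemma exists_coBeta_eq (hf : IsPartition f) {x : ℤ} (hx : x ∉ Set.range (beta f)) :
    ∃ j, coBeta f j = x := by
  have hex : ∃ i, beta f i < x := by
    obtain ⟨N, hN⟩ := hf.2
    refine ⟨N + (-x).toNat, ?_⟩
    simp only [beta, hN _ (Nat.le_add_right _ _)]
    omega
  obtain ⟨c, hc, hbefore⟩ : ∃ c, beta f c < x ∧ ∀ i < c, x < beta f i :=
    ⟨Nat.find hex, Nat.find_spec hex, fun i hi =>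
      lt_of_le_of_ne (not_lt.1 (Nat.find_min hex hi)) (fun h => hx ⟨i, h.symm⟩)⟩
  -- `x` is the end of column `x + c`, where `c` is the first row whose bead lies below `x`.
  have hxc : 0 ≤ x + c := by simp only [beta] at hc; omega
  have hcol : colLen f (x + c).toNat = c := by
    refine colLen_eq_of_forall_lt_iff fun i => ?_
    rcases lt_or_ge i c with hi | hi
    · have hlast := hbefore (c - 1) (by omega)
      have := hf.1 (show i ≤ c - 1 by omega)
      simp only [beta] at hlast
      exact iff_of_true (by omega) hi
    · have := hf.1 hi
      simp only [beta] at hc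
      exact iff_of_false (by omega) (by omega)
  refine ⟨(x + c).toNat, ?_⟩
  simp only [coBeta, hcol]
  omega

lemma isCore_iff (hf : IsPartition f) {m : ℕ} :
    IsCore m f ↔ ∀ x ∈ Set.range (beta f), x - m ∈ Set.range (beta f) := by
  constructor
  · rintro hc _ ⟨i, rfl⟩
    by_contra hgap
    obtain ⟨j, hj⟩ := hf.exists_coBeta_eq hgap
    have hm : 0 < m := Nat.pos_of_ne_zero (by rintro rfl; simp at hgap)
    have hbox : j < f i := hf.coBeta_lt_beta_iff.1 (by omega)
    have := hf.hook_eq_beta_sub_coBeta hbox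
    exact hc i j hbox ⟨1, by omega⟩
  · intro hcl i j hbox ⟨q, hq⟩
    have hhook := hf.hook_eq_beta_sub_coBeta hbox
    rw [hq] at hhook
    push_cast at hhook
    obtain ⟨i', hi'⟩ := mem_of_forall_sub_mem_of_modEq (x := coBeta f j) hcl ⟨i, rfl⟩
      (Int.modEq_iff_dvd.2 ⟨q, hhook.symm⟩) (hf.coBeta_lt_beta_iff.2 hbox).le
    exact hf.beta_ne_coBeta i' j hi'

end IsPartition

namespace IsSymmetric

variable {f : ℕ → ℕ} {k : ℕ}

lemma coBeta_eq (hs : IsSymmetric f) (j : ℕ) : coBeta f j = -1 - beta f j := by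
  simp only [coBeta, beta, hs j]
  ring

lemma lt_comm (hs : IsSymmetric f) (hf : IsPartition f) {i j : ℕ} : j < f i ↔ i < f j := by
  rw [hf.lt_iff_lt_colLen, hs]

lemma mem_range_beta_iff (hs : IsSymmetric f) (hf : IsPartition f) {x : ℤ} :
    x ∈ Set.range (beta f) ↔ -1 - x ∉ Set.range (beta f) := by
  constructor
  · rintro ⟨i, rfl⟩ ⟨t, ht⟩
    exact hf.beta_ne_coBeta t i (by rw [ht, hs.coBeta_eq])
  · intro hx
    by_contra hgap
    obtain ⟨j, hj⟩ := hf.exists_coBeta_eq hgap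
    exact hx ⟨j, by rw [← hj, hs.coBeta_eq]; ring⟩

lemma pos_iff_lt (hs : IsSymmetric f) (hf : IsPartition f) (hk : f 0 = k) {i : ℕ} :
    0 < f i ↔ i < k := by
  rw [hs.lt_comm hf, hk]

lemma exists_lt_beta_eq (hs : IsSymmetric f) (hf : IsPartition f) (hk : f 0 = k) {x : ℤ}
    (hx : x ∈ Set.range (beta f)) (hxk : -(k : ℤ) ≤ x) : ∃ i < k, beta f i = x := by
  obtain ⟨i, rfl⟩ := hx
  refine ⟨i, ?_, rfl⟩
  by_contra hik
  have : f i = 0 := by have := (hs.pos_iff_lt hf hk).not.2 hik; omega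
  simp only [beta, this] at hxk
  omega

end IsSymmetric

section Runners

variable {f : ℕ → ℕ} {m k : ℕ}

lemma mem_range_beta_of_modEq (hf : IsPartition f) (hc : IsCore m f) (hk : f 0 = k) {x : ℤ}
    (hx : x ≤ k - 1) (hmod : x ≡ k - 1 [ZMOD m]) : x ∈ Set.range (beta f) :=
  mem_of_forall_sub_mem_of_modEq (hf.isCore_iff.1 hc) ⟨0, by simp [beta, hk]⟩ hmod hx

lemma notMem_range_beta_of_modEq (hf : IsPartition f) (hs : IsSymmetric f) (hc : IsCore m f)
    (hk : f 0 = k) {x : ℤ} (hx : -(k : ℤ) ≤ x) (hmod : x ≡ -k [ZMOD m]) :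
    x ∉ Set.range (beta f) := by
  have hrefl : -1 - x ∈ Set.range (beta f) :=
    mem_range_beta_of_modEq hf hc hk (by omega) (by
      convert (hmod.neg).add_left (-1) using 1 <;> ring)
  simpa using (hs.mem_range_beta_iff hf).1 hrefl

end Runners

section Phi

variable {n k : ℕ} {f : ℕ → ℕ}

lemma rowRes_eq_rowRes_zero_iff (hk : f 0 = k) {i : ℕ} :
    rowRes n f i = rowRes n f 0 ↔ beta f i ≡ k - 1 [ZMOD 2 * n] := by
  rw [rowRes, rowRes, ZMod.intCast_eq_intCast_iff, hk]
  push_cast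
  simp only [beta, sub_zero]

lemma keptRow_iff (hf : IsPartition f) (hs : IsSymmetric f) (hk : f 0 = k) {i : ℕ} :
    keptRow n f i ↔ i < k ∧ ¬ beta f i ≡ k - 1 [ZMOD 2 * n] := by
  rw [keptRow, hs.pos_iff_lt hf hk, Ne, rowRes_eq_rowRes_zero_iff hk]

lemma keptCol_iff_keptRow (hs : IsSymmetric f) {j : ℕ} : keptCol n f j ↔ keptRow n f j := by
  have hres : ∀ j, colRes n f j = -rowRes n f j := fun j => by
    simp only [colRes, rowRes, hs j]
    push_cast
    ring
  simp only [keptCol, keptRow, hs j, hres, ne_eq, neg_inj]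

lemma finite_setOf_keptRow (hf : IsPartition f) : (Set.ofPred (keptRow n f)).Finite := by
  obtain ⟨N, hN⟩ := hf.2
  refine (Set.finite_Iio N).subset fun i hi => ?_
  by_contra hiN
  exact (hN i (not_lt.1 hiN)).not_gt hi.1

lemma card_toFinset_keptRow (hf : IsPartition f) (hs : IsSymmetric f) (hk : f 0 = k) :
    #(finite_setOf_keptRow (n := n) hf).toFinset = Nat.count (keptRow n f) k := by
  rw [Nat.count_eq_card_filter_range]
  congr 1
  ext i
  simp only [Set.Finite.mem_toFinset, mem_filter, mem_range]
  exact ⟨fun h => ⟨((keptRow_iff hf hs hk).1 h).1, h⟩, And.right⟩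

lemma PhiCore_of_lt (hf : IsPartition f) (hs : IsSymmetric f) (hk : f 0 = k) {i : ℕ}
    (hi : i < Nat.count (keptRow n f) k) :
    PhiCore n f i = Nat.count (keptRow n f) (f (Nat.nth (keptRow n f) i)) := by
  rw [← card_toFinset_keptRow (n := n) hf hs hk] at hi
  have hkept := Nat.nth_mem_of_lt_card (finite_setOf_keptRow hf) hi
  simp only [PhiCore, hkept, true_and, keptCol_iff_keptRow hs, Nat.card_setOf_and_lt]

lemma PhiCore_of_le (hf : IsPartition f) (hs : IsSymmetric f) (hk : f 0 = k) {i : ℕ}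
    (hi : Nat.count (keptRow n f) k ≤ i) : PhiCore n f i = 0 := by
  rw [← card_toFinset_keptRow (n := n) hf hs hk] at hi
  have hkept : ¬ keptRow n f 0 := fun h => h.2 rfl
  simp [PhiCore, Nat.nth_of_card_le (finite_setOf_keptRow hf) hi, hkept]

lemma lt_PhiCore_iff (hf : IsPartition f) (hs : IsSymmetric f) (hk : f 0 = k) {i j : ℕ} :
    j < PhiCore n f i ↔ i < Nat.count (keptRow n f) k ∧ j < Nat.count (keptRow n f) k ∧
      Nat.nth (keptRow n f) j < f (Nat.nth (keptRow n f) i) := by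
  rcases lt_or_ge i (Nat.count (keptRow n f) k) with hi | hi
  · rw [PhiCore_of_lt hf hs hk hi, Nat.lt_count_iff_nth_lt (finite_setOf_keptRow hf),
      card_toFinset_keptRow hf hs hk]
    tauto
  · rw [PhiCore_of_le hf hs hk hi]
    omega

lemma isPartition_PhiCore (hf : IsPartition f) (hs : IsSymmetric f) (hk : f 0 = k) :
    IsPartition (PhiCore n f) := by
  refine ⟨fun i i' hii' => le_of_forall_lt fun j hj => ?_,
    ⟨_, fun i hi => PhiCore_of_le hf hs hk hi⟩⟩
  rw [lt_PhiCore_iff hf hs hk] at hj ⊢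
  obtain ⟨hi', hj, hlt⟩ := hj
  refine ⟨by omega, hj, hlt.trans_le (hf.1 ?_)⟩
  rw [← card_toFinset_keptRow (n := n) hf hs hk] at hi'
  exact Nat.nth_le_nth_of_lt_card (finite_setOf_keptRow hf) hii' hi'

lemma isSymmetric_PhiCore (hf : IsPartition f) (hs : IsSymmetric f) (hk : f 0 = k) :
    IsSymmetric (PhiCore n f) := fun j => colLen_eq_of_forall_lt_iff fun i => by
  rw [lt_PhiCore_iff hf hs hk, lt_PhiCore_iff hf hs hk, hs.lt_comm hf]
  tauto

lemma PhiCore_le (hf : IsPartition f) (hs : IsSymmetric f) (hk : f 0 = k) (i : ℕ) :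
    PhiCore n f i ≤ Nat.count (keptRow n f) k :=
  le_of_forall_lt fun _ hj => ((lt_PhiCore_iff hf hs hk).1 hj).2.1

end Phi

section DeletedRows

variable {n k : ℕ} {f : ℕ → ℕ}

def deletedRows (n k : ℕ) (f : ℕ → ℕ) : Finset ℕ := {i ∈ range k | beta f i ≡ k - 1 [ZMOD 2 * n]}

lemma count_keptRow_add_card_filter_deletedRows (hf : IsPartition f) (hs : IsSymmetric f)
    (hk : f 0 = k) {s : ℕ} (hsk : s ≤ k) :
    Nat.count (keptRow n f) s + #{i ∈ deletedRows n k f | i < s} = s := by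
  have hdel : {i ∈ deletedRows n k f | i < s} = {i ∈ range s | ¬ keptRow n f i} := by
    ext i
    simp only [deletedRows, mem_filter, mem_range, keptRow_iff hf hs hk]
    constructor
    · rintro ⟨⟨-, hi⟩, his⟩; exact ⟨his, fun h => h.2 hi⟩
    · rintro ⟨his, hi⟩; exact ⟨⟨by omega, not_not.1 fun h => hi ⟨by omega, h⟩⟩, his⟩
  rw [Nat.count_eq_card_filter_range, hdel, card_filter_add_card_filter_not, card_range]

lemma count_keptRow_add_card_deletedRows (hf : IsPartition f) (hs : IsSymmetric f)
    (hk : f 0 = k) : Nat.count (keptRow n f) k + #(deletedRows n k f) = k := by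
  have hD : {i ∈ deletedRows n k f | i < k} = deletedRows n k f :=
    filter_true_of_mem fun i hi => by simpa [deletedRows] using (mem_filter.1 hi).1
  simpa [hD] using count_keptRow_add_card_filter_deletedRows (n := n) hf hs hk le_rfl

lemma image_beta_deletedRows (hf : IsPartition f) (hs : IsSymmetric f) (hc : IsCore (2 * n) f)
    (hk : f 0 = k) (t : ℕ) :
    {i ∈ deletedRows n k f | t ≤ i}.image (beta f) =
      {z ∈ Ioc (-(k : ℤ) - 1) (beta f t) | z ≡ k - 1 [ZMOD 2 * n]} := by
  ext z
  simp only [deletedRows, mem_image, mem_filter, mem_range, mem_Ioc]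
  constructor
  · rintro ⟨i, ⟨⟨hik, hmod⟩, hti⟩, rfl⟩
    refine ⟨⟨?_, (strictAnti_beta hf.1).antitone hti⟩, hmod⟩
    simp only [beta]
    omega
  · rintro ⟨⟨hz, hzt⟩, hmod⟩
    have hbead := mem_range_beta_of_modEq hf hc hk
      (hzt.trans (beta_le hf.1 hk t))
      (by exact_mod_cast hmod)
    obtain ⟨i, hik, rfl⟩ := hs.exists_lt_beta_eq hf hk hbead (by omega)
    exact ⟨i, ⟨⟨hik, hmod⟩, (strictAnti_beta hf.1).le_iff_ge.1 hzt⟩, rfl⟩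

lemma image_neg_one_sub_beta_deletedRows (hf : IsPartition f) (hs : IsSymmetric f)
    (hc : IsCore (2 * n) f) (hk : f 0 = k) (t : ℕ) :
    {i ∈ deletedRows n k f | i < f t}.image (fun i => -1 - beta f i) =
      {z ∈ Ioc (-(k : ℤ) - 1) (beta f t) | z ≡ -k [ZMOD 2 * n]} := by
  ext z
  simp only [deletedRows, mem_image, mem_filter, mem_range, mem_Ioc]
  constructor
  · rintro ⟨i, ⟨⟨hik, hmod⟩, hit⟩, rfl⟩
    have hle := beta_le hf.1 hk i
    have hlt := hf.coBeta_lt_beta_iff.2 hit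
    rw [hs.coBeta_eq] at hlt
    refine ⟨⟨by omega, hlt.le⟩, ?_⟩
    convert (hmod.neg).add_left (-1) using 1 <;> ring
  · rintro ⟨⟨hz, hzt⟩, hmod⟩
    have hkt := beta_le hf.1 hk t
    have hgap := notMem_range_beta_of_modEq (x := z) hf hs hc hk (by omega) (by exact_mod_cast hmod)
    have hbead : -1 - z ∈ Set.range (beta f) := (hs.mem_range_beta_iff hf).2 (by simpa using hgap)
    obtain ⟨i, hik, hi⟩ := hs.exists_lt_beta_eq hf hk hbead (by omega)
    have hit : i < f t := by
      rw [← hf.coBeta_lt_beta_iff, hs.coBeta_eq, hi, sub_sub_cancel]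
      exact lt_of_le_of_ne hzt fun h => hgap ⟨t, h.symm⟩
    refine ⟨i, ⟨⟨hik, ?_⟩, hit⟩, by rw [hi]; ring⟩
    rw [hi]
    convert (hmod.neg).add_left (-1) using 1 <;> ring

lemma le_card_deletedRows (hf : IsPartition f) (hs : IsSymmetric f) (hc : IsCore (2 * n) f)
    (hk : f 0 = k) : (k + n - 1) / n ≤ #(deletedRows n k f) := by
  rcases Nat.eq_zero_or_pos n with rfl | hn
  · simp
  have hD : #(deletedRows n k f) = #{z ∈ Ioc (-(k : ℤ) - 1) (k - 1) | z ≡ k - 1 [ZMOD 2 * n]} := by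
    have himage := image_beta_deletedRows hf hs hc hk 0
    rw [show beta f 0 = k - 1 by simp [beta, hk]] at himage
    rw [← himage, card_image_of_injective _ (strictAnti_beta hf.1).injective]
    simp
  have hinj : Function.Injective fun t : ℕ => (k : ℤ) - 1 - 2 * n * t := fun a b h => by
    have : (2 * n : ℤ) * a = 2 * n * b := by linarith
    exact_mod_cast mul_left_cancel₀ (by positivity) this
  rw [hD, ← card_range ((k + n - 1) / n), ← card_image_of_injective _ hinj]
  refine card_le_card fun z hz => ?_
  obtain ⟨t, ht, rfl⟩ := mem_image.1 hz
  have htn : (t + 1) * n ≤ k + n - 1 := (Nat.le_div_iff_mul_le hn).1 (mem_range.1 ht)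
  have htn' : (t : ℤ) * n + 1 ≤ k := by
    have : t * n + 1 ≤ k := by rw [add_mul, one_mul] at htn; omega
    exact_mod_cast this
  simp only [mem_filter, mem_Ioc]
  refine ⟨⟨by linarith, by nlinarith⟩, Int.modEq_iff_dvd.2 ⟨t, by ring⟩⟩

end DeletedRows

section Collapse

variable {n k : ℕ} {f : ℕ → ℕ}

/-- Where the bead at abacus position `z ≥ -k - 1` of `f` lands when the runners of residues
`k - 1` and `-k` modulo `2n` are deleted. -/
noncomputable def collapse (n k : ℕ) (f : ℕ → ℕ) (z : ℤ) : ℤ :=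
  z - #{w ∈ Ioc (-(k : ℤ) - 1) z | w ≡ k - 1 [ZMOD 2 * n]}
    - #{w ∈ Ioc (-(k : ℤ) - 1) z | w ≡ -k [ZMOD 2 * n]} + #(deletedRows n k f)

lemma collapse_sub (hn : 0 < n) {z : ℤ} (hz : -(k : ℤ) - 1 ≤ z - 2 * n) :
    collapse n k f (z - 2 * n) = collapse n k f z - (2 * n - 2) := by
  have h1 := card_Ioc_filter_modEq_sub (v := k - 1) (show (0 : ℤ) < 2 * n by omega) hz
  have h2 := card_Ioc_filter_modEq_sub (v := -k) (show (0 : ℤ) < 2 * n by omega) hz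
  simp only [collapse]
  omega

lemma collapse_le {z : ℤ} (hz : -(k : ℤ) ≤ z) :
    collapse n k f z ≤ z - 1 + #(deletedRows n k f) := by
  have : 0 < #{w ∈ Ioc (-(k : ℤ) - 1) z | w ≡ -k [ZMOD 2 * n]} :=
    card_pos.2 ⟨-k, by simp [hz]⟩
  simp only [collapse]
  omega

lemma beta_PhiCore_count (hf : IsPartition f) (hs : IsSymmetric f) (hc : IsCore (2 * n) f)
    (hk : f 0 = k) {t : ℕ} (ht : keptRow n f t) :
    beta (PhiCore n f) (Nat.count (keptRow n f) t) = collapse n k f (beta f t) := by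
  have hcount := Nat.count_lt_card (finite_setOf_keptRow hf) ht
  rw [card_toFinset_keptRow hf hs hk] at hcount
  have htk := ((keptRow_iff hf hs hk).1 ht).1
  have hrow := count_keptRow_add_card_filter_deletedRows (n := n) hf hs hk
    (hk ▸ hf.1 (Nat.zero_le t))
  have hcol := count_keptRow_add_card_filter_deletedRows (n := n) hf hs hk htk.le
  have hsplit := card_filter_add_card_filter_not (s := deletedRows n k f) (· < t)
  simp only [not_lt] at hsplit
  have hup := congrArg card (image_beta_deletedRows hf hs hc hk t)
  have hdown := congrArg card (image_neg_one_sub_beta_deletedRows hf hs hc hk t)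
  rw [card_image_of_injective _ (strictAnti_beta hf.1).injective] at hup
  rw [card_image_of_injective _ fun a b h => (strictAnti_beta hf.1).injective (by simpa using h)]
    at hdown
  rw [beta, PhiCore_of_lt hf hs hk hcount, Nat.nth_count ht, collapse, ← hup, ← hdown]
  simp only [beta]
  omega

lemma collapse_neg_sub_one (hf : IsPartition f) (hs : IsSymmetric f) (hk : f 0 = k) :
    collapse n k f (-(k : ℤ) - 1) = -1 - Nat.count (keptRow n f) k := by
  have := count_keptRow_add_card_deletedRows (n := n) hf hs hk
  simp only [collapse, Ioc_self, filter_empty, card_empty]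
  omega

lemma mem_range_beta_PhiCore_of_le (hf : IsPartition f) (hs : IsSymmetric f) (hk : f 0 = k)
    {z : ℤ} (hz : z ≤ -1 - Nat.count (keptRow n f) k) : z ∈ Set.range (beta (PhiCore n f)) := by
  refine ⟨(-1 - z).toNat, ?_⟩
  rw [beta, PhiCore_of_le hf hs hk (by omega)]
  omega

lemma collapse_sub_mem_range_beta_PhiCore (hn : 0 < n) (hf : IsPartition f) (hs : IsSymmetric f)
    (hc : IsCore (2 * n) f) (hk : f 0 = k) {t : ℕ} (ht : keptRow n f t) :
    collapse n k f (beta f t) - (2 * n - 2) ∈ Set.range (beta (PhiCore n f)) := by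
  have htk := ((keptRow_iff hf hs hk).1 ht).1
  have hxk : -(k : ℤ) ≤ beta f t := by simp only [beta]; omega
  rcases lt_or_ge (beta f t - 2 * n) (-(k : ℤ) - 1) with hlow | hhigh
  · refine mem_range_beta_PhiCore_of_le hf hs hk ?_
    have := collapse_le (n := n) (f := f) hxk
    have := count_keptRow_add_card_deletedRows (n := n) hf hs hk
    omega
  rw [← collapse_sub hn hhigh]
  rcases hhigh.eq_or_lt with heq | hgt
  · rw [← heq, collapse_neg_sub_one hf hs hk]
    exact mem_range_beta_PhiCore_of_le hf hs hk le_rfl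
  have hbead : beta f t - 2 * n ∈ Set.range (beta f) := by
    exact_mod_cast (hf.isCore_iff.1 hc) _ ⟨t, rfl⟩
  obtain ⟨j, hjk, hj⟩ := hs.exists_lt_beta_eq hf hk hbead (by omega)
  have hj_kept : keptRow n f j := by
    refine (keptRow_iff hf hs hk).2 ⟨hjk, fun hmod => ((keptRow_iff hf hs hk).1 ht).2 ?_⟩
    rw [hj] at hmod
    exact (Int.modEq_iff_dvd.2 ⟨-1, by ring⟩).trans hmod
  exact ⟨_, (beta_PhiCore_count hf hs hc hk hj_kept).trans (by rw [hj])⟩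

lemma isCore_PhiCore (hn : 2 ≤ n) (hf : IsPartition f) (hs : IsSymmetric f)
    (hc : IsCore (2 * n) f) (hk : f 0 = k) : IsCore (2 * n - 2) (PhiCore n f) := by
  rw [(isPartition_PhiCore hf hs hk).isCore_iff]
  rintro _ ⟨i, rfl⟩
  rw [show ((2 * n - 2 : ℕ) : ℤ) = 2 * n - 2 by omega]
  rcases lt_or_ge i (Nat.count (keptRow n f) k) with hi | hi
  · rw [← card_toFinset_keptRow hf hs hk] at hi
    have ht := Nat.nth_mem_of_lt_card (finite_setOf_keptRow hf) hi
    have hbeta := beta_PhiCore_count hf hs hc hk ht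
    rw [Nat.count_nth_of_lt_card_finite _ hi] at hbeta
    rw [hbeta]
    exact collapse_sub_mem_range_beta_PhiCore (by omega) hf hs hc hk ht
  · refine mem_range_beta_PhiCore_of_le hf hs hk ?_
    rw [beta, PhiCore_of_le hf hs hk hi]
    omega

end Collapse

theorem stmt3_general (n k : ℕ) (hn : 2 ≤ n) :
    Set.MapsTo (PhiCore n)
      {f : ℕ → ℕ | IsPartition f ∧ IsCore (2*n) f ∧ IsSymmetric f ∧ f 0 = k}
      {f : ℕ → ℕ | IsPartition f ∧ IsCore (2*n-2) f ∧ IsSymmetric f ∧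
        f 0 ≤ k - (k + n - 1)/n} := by
  rintro f ⟨hf, hc, hs, hk⟩
  refine ⟨isPartition_PhiCore hf hs hk, isCore_PhiCore hn hf hs hc hk, isSymmetric_PhiCore hf hs hk,
    ?_⟩
  have hfirst := PhiCore_le (n := n) hf hs hk 0
  have hrows := count_keptRow_add_card_deletedRows (n := n) hf hs hk
  have hdeleted := le_card_deletedRows hf hs hc hk
  omega

/-- The image of `Φₙ` restricted to symmetric `2n`-cores with first part `k` is contained in
the set of symmetric `(2n-2)`-cores with first part at most `k - ⌈k/n⌉`. -/
theorem stmt3 (n k : ℕ) (hn : 2 ≤ n) (hk : 1 ≤ k) :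
    Set.MapsTo (PhiCore n)
      {f : ℕ → ℕ | IsPartition f ∧ IsCore (2*n) f ∧ IsSymmetric f ∧ f 0 = k}
      {f : ℕ → ℕ | IsPartition f ∧ IsCore (2*n-2) f ∧ IsSymmetric f ∧
        f 0 ≤ k - (k + n - 1)/n} :=
  stmt3_general n k hn
end

section
/- In a balanced flush abacus a corresponding to a core partition, deleting the leftmost runner whose largest bead lies at the smallest level yields an abacus whose corresponding core partition is obtained from the original core by deleting all columns that end with the same residue mod 2n as the first column. -/
open scoped Classical

namespace Stmt5Aux

open Set

/-- number of elements of `C` above `b`. -/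
noncomputable def ubZ (C : Set ℤ) (b : ℤ) : ℕ := Nat.card {x : ℤ | x ∈ C ∧ b < x}

/-- number of non-elements of `B` below `g`. -/
noncomputable def lbZ (B : Set ℤ) (g : ℤ) : ℕ := Nat.card {x : ℤ | x ∉ B ∧ x < g}

lemma fin_above {C : Set ℤ} {K : ℤ} (hK : ∀ x ∈ C, x ≤ K) (b : ℤ) :
    {x : ℤ | x ∈ C ∧ b < x}.Finite :=
  (Set.finite_Ioc b K).subset (fun x hx => ⟨hx.2, hK x hx.1⟩)

lemma fin_below {B : Set ℤ} {L : ℤ} (hL : ∀ x, x ∉ B → L ≤ x) (g : ℤ) :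
    {x : ℤ | x ∉ B ∧ x < g}.Finite :=
  (Set.finite_Ico L g).subset (fun x hx => ⟨hL x hx.1, hx.2⟩)

lemma ubZ_eq_ncard (C : Set ℤ) (b : ℤ) : ubZ C b = {x : ℤ | x ∈ C ∧ b < x}.ncard :=
  Nat.card_coe_set_eq _

lemma lbZ_eq_ncard (B : Set ℤ) (g : ℤ) : lbZ B g = {x : ℤ | x ∉ B ∧ x < g}.ncard :=
  Nat.card_coe_set_eq _

section beadEnum

variable {C : Set ℤ} {K : ℤ}

/-- the `i`-th largest element of `C` (when `C` is infinite with upper bound `K`). -/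
noncomputable def beadFn (C : Set ℤ) (K : ℤ) (i : ℕ) : ℤ :=
  K - (Nat.nth (fun m => (K - (m : ℤ)) ∈ C) i : ℤ)

variable (hK : ∀ x ∈ C, x ≤ K) (hinf : C.Infinite)

include hK hinf in
lemma bead_pred_infinite : {m : ℕ | (K - (m : ℤ)) ∈ C}.Infinite := by
  have hinj : Set.InjOn (fun x : ℤ => (K - x).toNat) C := by
    intro x hx y hy hxy
    have hx' : x ≤ K := hK x hx
    have hy' : y ≤ K := hK y hy
    simp only at hxy
    omega
  refine ((hinf.image hinj).mono ?_)
  rintro m ⟨x, hx, rfl⟩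
  have : x ≤ K := hK x hx
  simp only [Set.mem_setOf_eq]
  have : (K - (((K - x).toNat : ℤ))) = x := by omega
  rwa [this]

include hK in
lemma ubZ_eq_count {b : ℤ} (hb : b ∈ C) :
    ubZ C b = Nat.count (fun m => (K - (m : ℤ)) ∈ C) (K - b).toNat := by
  have hbK : b ≤ K := hK b hb
  have himg : (fun x : ℤ => (K - x).toNat) '' {x : ℤ | x ∈ C ∧ b < x}
      = {m : ℕ | (K - (m : ℤ)) ∈ C ∧ m < (K - b).toNat} := by
    ext m
    constructor
    · rintro ⟨x, ⟨hxC, hbx⟩, rfl⟩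
      have hxK : x ≤ K := hK x hxC
      constructor
      · dsimp only
        have : (K - (((K - x).toNat : ℤ))) = x := by omega
        rwa [this]
      · dsimp only; omega
    · rintro ⟨hm, hlt⟩
      exact ⟨K - (m : ℤ), ⟨hm, by omega⟩, by dsimp only; omega⟩
  have hinj : Set.InjOn (fun x : ℤ => (K - x).toNat) {x : ℤ | x ∈ C ∧ b < x} := by
    intro x hx y hy hxy
    have := hK x hx.1; have := hK y hy.1
    simp only at hxy; omega
  have h1 : ubZ C b = ({m : ℕ | (K - (m : ℤ)) ∈ C ∧ m < (K - b).toNat}).ncard := by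
    rw [ubZ_eq_ncard, ← himg, Set.ncard_image_of_injOn hinj]
  rw [h1, Nat.count_eq_card_filter_range]
  congr 1
  rw [← Set.ncard_coe_finset]
  congr 1
  ext m
  simp [and_comm]

include hK hinf in
lemma beadFn_mem (i : ℕ) : beadFn C K i ∈ C :=
  Nat.nth_mem_of_infinite (bead_pred_infinite hK hinf) i

include hK hinf in
lemma ubZ_beadFn (i : ℕ) : ubZ C (beadFn C K i) = i := by
  have hmem := beadFn_mem hK hinf i
  rw [ubZ_eq_count hK hmem]
  have hnn : (0:ℤ) ≤ (Nat.nth (fun m => (K - (m : ℤ)) ∈ C) i : ℤ) := by positivity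
  have : (K - beadFn C K i).toNat = Nat.nth (fun m => (K - (m : ℤ)) ∈ C) i := by
    unfold beadFn; omega
  rw [this]
  exact Nat.count_nth (fun hf => absurd hf (bead_pred_infinite hK hinf))

include hK hinf in
lemma beadFn_eq {b : ℤ} {i : ℕ} (hb : b ∈ C) (hub : ubZ C b = i) : beadFn C K i = b := by
  have h1 : ubZ C (beadFn C K i) = i := ubZ_beadFn hK hinf i
  have h2 := beadFn_mem hK hinf i
  -- injectivity of ubZ on C
  by_contra hne
  rcases lt_or_gt_of_ne hne with h | h
  · have hss : {x : ℤ | x ∈ C ∧ b < x} ⊂ {x : ℤ | x ∈ C ∧ beadFn C K i < x} := by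
      constructor
      · intro x hx; exact ⟨hx.1, lt_trans h hx.2⟩
      · intro hsub
        have : b ∈ {x : ℤ | x ∈ C ∧ b < x} := hsub ⟨hb, h⟩
        exact absurd this.2 (lt_irrefl b)
    have := Set.ncard_lt_ncard hss (fin_above hK _)
    rw [← ubZ_eq_ncard, ← ubZ_eq_ncard, h1, hub] at this
    exact absurd this (lt_irrefl i)
  · have hss : {x : ℤ | x ∈ C ∧ beadFn C K i < x} ⊂ {x : ℤ | x ∈ C ∧ b < x} := by
      constructor
      · intro x hx; exact ⟨hx.1, lt_trans h hx.2⟩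
      · intro hsub
        have : beadFn C K i ∈ {x : ℤ | x ∈ C ∧ beadFn C K i < x} := hsub ⟨h2, h⟩
        exact absurd this.2 (lt_irrefl _)
    have := Set.ncard_lt_ncard hss (fin_above hK _)
    rw [← ubZ_eq_ncard, ← ubZ_eq_ncard, h1, hub] at this
    exact absurd this (lt_irrefl i)

include hK hinf in
lemma lt_beadFn_iff (i : ℕ) (x : ℤ) : x < beadFn C K i ↔ i < ubZ C x := by
  constructor
  · intro h
    have hsub : insert (beadFn C K i) {y : ℤ | y ∈ C ∧ beadFn C K i < y} ⊆ {y : ℤ | y ∈ C ∧ x < y} := by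
      intro y hy
      rcases hy with rfl | hy
      · exact ⟨beadFn_mem hK hinf i, h⟩
      · exact ⟨hy.1, lt_trans h hy.2⟩
    have hfin := fin_above hK x
    have hcard := Set.ncard_le_ncard hsub hfin
    rw [Set.ncard_insert_of_notMem (by simp) ((fin_above hK _))] at hcard
    rw [ubZ_eq_ncard]
    have := ubZ_beadFn hK hinf i
    rw [ubZ_eq_ncard] at this
    omega
  · intro h
    by_contra hle
    push_neg at hle
    have hsub : {y : ℤ | y ∈ C ∧ x < y} ⊆ {y : ℤ | y ∈ C ∧ beadFn C K i < y} := by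
      intro y hy; exact ⟨hy.1, lt_of_le_of_lt hle hy.2⟩
    have := Set.ncard_le_ncard hsub (fin_above hK _)
    rw [← ubZ_eq_ncard, ← ubZ_eq_ncard, ubZ_beadFn hK hinf i] at this
    omega

include hK hinf in
lemma beadFn_injective : Function.Injective (beadFn C K) := by
  intro i i' h
  have := ubZ_beadFn hK hinf i
  rw [h, ubZ_beadFn hK hinf i'] at this
  omega

end beadEnum

section gapEnum

variable {B : Set ℤ} {K g₀ : ℤ}

/-- the `c`-th smallest non-element of `B` (when `Bᶜ` has minimum `g₀`). -/
noncomputable def gapFn (B : Set ℤ) (g₀ : ℤ) (c : ℕ) : ℤ :=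
  g₀ + (Nat.nth (fun m => (g₀ + (m : ℤ)) ∉ B) c : ℤ)

variable (hKB : ∀ x ∈ B, x ≤ K) (hg₀ : ∀ x, x ∉ B → g₀ ≤ x)

include hKB in
lemma gap_pred_infinite : {m : ℕ | (g₀ + (m : ℤ)) ∉ B}.Infinite := by
  apply Set.infinite_of_not_bddAbove
  rintro ⟨N, hN⟩
  have h1 : ((K - g₀).toNat + N + 1 : ℕ) ∈ {m : ℕ | (g₀ + (m : ℤ)) ∉ B} := by
    simp only [Set.mem_setOf_eq]
    intro hmem
    have := hKB _ hmem
    omega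
  have := hN h1
  omega

include hKB hg₀ in
lemma lbZ_eq_count {g : ℤ} (hg : g ∉ B) :
    lbZ B g = Nat.count (fun m => (g₀ + (m : ℤ)) ∉ B) (g - g₀).toNat := by
  have hgg : g₀ ≤ g := hg₀ g hg
  have himg : (fun x : ℤ => (x - g₀).toNat) '' {x : ℤ | x ∉ B ∧ x < g}
      = {m : ℕ | (g₀ + (m : ℤ)) ∉ B ∧ m < (g - g₀).toNat} := by
    ext m
    constructor
    · rintro ⟨x, ⟨hxB, hxg⟩, rfl⟩
      have hx0 : g₀ ≤ x := hg₀ x hxB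
      dsimp only
      constructor
      · have : (g₀ + (((x - g₀).toNat : ℤ))) = x := by omega
        rwa [this]
      · omega
    · rintro ⟨hm, hlt⟩
      exact ⟨g₀ + (m : ℤ), ⟨hm, by omega⟩, by dsimp only; omega⟩
  have hinj : Set.InjOn (fun x : ℤ => (x - g₀).toNat) {x : ℤ | x ∉ B ∧ x < g} := by
    intro x hx y hy hxy
    have := hg₀ x hx.1; have := hg₀ y hy.1
    simp only at hxy; omega
  have h1 : lbZ B g = ({m : ℕ | (g₀ + (m : ℤ)) ∉ B ∧ m < (g - g₀).toNat}).ncard := by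
    rw [lbZ_eq_ncard, ← himg, Set.ncard_image_of_injOn hinj]
  rw [h1, Nat.count_eq_card_filter_range]
  rw [← Set.ncard_coe_finset]
  congr 1
  ext m
  simp [and_comm]

include hKB in
lemma gapFn_notMem (c : ℕ) : gapFn B g₀ c ∉ B := by
  have := Nat.nth_mem_of_infinite (gap_pred_infinite hKB (g₀ := g₀)) c
  exact this

include hKB hg₀ in
lemma lbZ_gapFn (c : ℕ) : lbZ B (gapFn B g₀ c) = c := by
  have hmem := gapFn_notMem hKB (g₀ := g₀) c
  rw [lbZ_eq_count hKB hg₀ hmem]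
  have : (gapFn B g₀ c - g₀).toNat = Nat.nth (fun m => (g₀ + (m : ℤ)) ∉ B) c := by
    unfold gapFn
    have : (0:ℤ) ≤ (Nat.nth (fun m => (g₀ + (m : ℤ)) ∉ B) c : ℤ) := by positivity
    omega
  rw [this]
  exact Nat.count_nth (fun hf => absurd hf (gap_pred_infinite hKB))

include hKB hg₀ in
lemma gapFn_eq {g : ℤ} {c : ℕ} (hg : g ∉ B) (hlb : lbZ B g = c) : gapFn B g₀ c = g := by
  have h1 : lbZ B (gapFn B g₀ c) = c := lbZ_gapFn hKB hg₀ c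
  have h2 := gapFn_notMem hKB (g₀ := g₀) c
  by_contra hne
  rcases lt_or_gt_of_ne hne with h | h
  · have hss : {x : ℤ | x ∉ B ∧ x < gapFn B g₀ c} ⊂ {x : ℤ | x ∉ B ∧ x < g} := by
      constructor
      · intro x hx; exact ⟨hx.1, lt_trans hx.2 h⟩
      · intro hsub
        have : gapFn B g₀ c ∈ {x : ℤ | x ∉ B ∧ x < gapFn B g₀ c} := hsub ⟨h2, h⟩
        exact absurd this.2 (lt_irrefl _)
    have := Set.ncard_lt_ncard hss (fin_below hg₀ _)
    rw [← lbZ_eq_ncard, ← lbZ_eq_ncard, h1, hlb] at this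
    exact absurd this (lt_irrefl c)
  · have hss : {x : ℤ | x ∉ B ∧ x < g} ⊂ {x : ℤ | x ∉ B ∧ x < gapFn B g₀ c} := by
      constructor
      · intro x hx; exact ⟨hx.1, lt_trans hx.2 h⟩
      · intro hsub
        have : g ∈ {x : ℤ | x ∉ B ∧ x < g} := hsub ⟨hg, h⟩
        exact absurd this.2 (lt_irrefl _)
    have := Set.ncard_lt_ncard hss (fin_below hg₀ _)
    rw [← lbZ_eq_ncard, ← lbZ_eq_ncard, h1, hlb] at this
    exact absurd this (lt_irrefl c)

include hKB hg₀ in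
lemma gapFn_lt_iff (c : ℕ) (x : ℤ) : gapFn B g₀ c < x ↔ c < lbZ B x := by
  constructor
  · intro h
    have hsub : insert (gapFn B g₀ c) {y : ℤ | y ∉ B ∧ y < gapFn B g₀ c} ⊆ {y : ℤ | y ∉ B ∧ y < x} := by
      intro y hy
      rcases hy with rfl | hy
      · exact ⟨gapFn_notMem hKB c, h⟩
      · exact ⟨hy.1, lt_trans hy.2 h⟩
    have hcard := Set.ncard_le_ncard hsub (fin_below hg₀ x)
    rw [Set.ncard_insert_of_notMem (by simp) (fin_below hg₀ _)] at hcard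
    rw [lbZ_eq_ncard]
    have := lbZ_gapFn hKB hg₀ c
    rw [lbZ_eq_ncard] at this
    omega
  · intro h
    by_contra hle
    push_neg at hle
    have hsub : {y : ℤ | y ∉ B ∧ y < x} ⊆ {y : ℤ | y ∉ B ∧ y < gapFn B g₀ c} := by
      intro y hy; exact ⟨hy.1, lt_of_lt_of_le hy.2 hle⟩
    have := Set.ncard_le_ncard hsub (fin_below hg₀ _)
    rw [← lbZ_eq_ncard, ← lbZ_eq_ncard, lbZ_gapFn hKB hg₀ c] at this
    omega

include hKB hg₀ in
lemma gapFn_injective : Function.Injective (gapFn B g₀) := by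
  intro c c' h
  have := lbZ_gapFn hKB hg₀ c
  rw [h, lbZ_gapFn hKB hg₀ c'] at this
  omega

include hKB hg₀ in
lemma gapFn_zero (hg0 : g₀ ∉ B) : gapFn B g₀ 0 = g₀ := by
  apply gapFn_eq hKB hg₀ hg0
  have : {x : ℤ | x ∉ B ∧ x < g₀} = ∅ := by
    ext x
    simp only [Set.mem_setOf_eq, Set.mem_empty_iff_false, iff_false, not_and]
    intro hx hlt
    exact absurd (hg₀ x hx) (by omega)
  rw [lbZ_eq_ncard, this, Set.ncard_empty]

end gapEnum

/-- the core of a bead-set in reading coordinates. -/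
noncomputable def coreR (C : Set ℤ) (i : ℕ) : ℕ :=
  Nat.card {k : ℤ | k ∉ C ∧ ∃ b, b ∈ C ∧ ubZ C b = i ∧ k < b}

lemma ubZ_image (σ : ℤ → ℤ) (hσ : StrictMono σ) (C : Set ℤ) (k : ℤ) :
    ubZ (σ '' C) (σ k) = ubZ C k := by
  have himg : {x : ℤ | x ∈ σ '' C ∧ σ k < x} = σ '' {x : ℤ | x ∈ C ∧ k < x} := by
    ext y
    constructor
    · rintro ⟨⟨c, hc, rfl⟩, hlt⟩
      exact ⟨c, ⟨hc, hσ.lt_iff_lt.mp hlt⟩, rfl⟩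
    · rintro ⟨c, ⟨hc, hlt⟩, rfl⟩
      exact ⟨⟨c, hc, rfl⟩, hσ.lt_iff_lt.mpr hlt⟩
  rw [ubZ_eq_ncard, ubZ_eq_ncard, himg, Set.ncard_image_of_injOn (hσ.injective.injOn)]

lemma transport (σ : ℤ → ℤ) (hσ : StrictMono σ) (C : Set ℤ) (i : ℕ) :
    Nat.card {g : ℤ | (g ∈ Set.range σ ∧ g ∉ σ '' C) ∧
        ∃ b, b ∈ σ '' C ∧ ubZ (σ '' C) b = i ∧ g < b}
      = coreR C i := by
  have hseteq : {g : ℤ | (g ∈ Set.range σ ∧ g ∉ σ '' C) ∧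
      ∃ b, b ∈ σ '' C ∧ ubZ (σ '' C) b = i ∧ g < b}
      = σ '' {k : ℤ | k ∉ C ∧ ∃ b, b ∈ C ∧ ubZ C b = i ∧ k < b} := by
    ext y
    constructor
    · rintro ⟨⟨⟨k, rfl⟩, hnot⟩, b, ⟨c, hcC, rfl⟩, hub, hlt⟩
      refine ⟨k, ⟨?_, c, hcC, ?_, hσ.lt_iff_lt.mp hlt⟩, rfl⟩
      · intro hkC; exact hnot ⟨k, hkC, rfl⟩
      · rwa [ubZ_image σ hσ C c] at hub
    · rintro ⟨k, ⟨hknot, b, hbC, hub, hlt⟩, rfl⟩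
      refine ⟨⟨⟨k, rfl⟩, ?_⟩, σ b, ⟨b, hbC, rfl⟩, ?_, hσ.lt_iff_lt.mpr hlt⟩
      · rintro ⟨c, hcC, hckeq⟩
        exact hknot (hσ.injective hckeq ▸ hcC)
      · rw [ubZ_image σ hσ C b]; exact hub
  unfold coreR
  rw [Nat.card_coe_set_eq, Nat.card_coe_set_eq, hseteq,
    Set.ncard_image_of_injOn (hσ.injective.injOn)]

/-- when the bead of index `i` is unique, the core counts gaps below it. -/
lemma core_count_eq {C : Set ℤ} {K : ℤ} (hK : ∀ x ∈ C, x ≤ K) (hinf : C.Infinite) (i : ℕ) :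
    coreR C i = Nat.card {k : ℤ | k ∉ C ∧ k < beadFn C K i} := by
  unfold coreR
  have hseteq : {k : ℤ | k ∉ C ∧ ∃ b, b ∈ C ∧ ubZ C b = i ∧ k < b}
      = {k : ℤ | k ∉ C ∧ k < beadFn C K i} := by
    ext k
    simp only [Set.mem_setOf_eq]
    constructor
    · rintro ⟨hk, b, hbC, hub, hlt⟩
      exact ⟨hk, by rwa [beadFn_eq hK hinf hbC hub]⟩
    · rintro ⟨hk, hlt⟩
      exact ⟨hk, beadFn C K i, beadFn_mem hK hinf i, ubZ_beadFn hK hinf i, hlt⟩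
  rw [hseteq]

section reading

/-- the inverse reading-order coordinate map: position `k` on `r` runners gets value `σ k`. -/
def sigmaF (r : ℤ) : ℤ → ℤ := fun k => k + k / r + 1

/-- bead set in reading coordinates. -/
def Bset (r : ℕ) (a : Fin r → ℤ) : Set ℤ :=
  {k : ℤ | k / (r : ℤ) ≤ aget r a (k % (r : ℤ)).toNat}

lemma dmod {r m u : ℤ} (hr : 0 < r) (h0 : 0 ≤ u) (h1 : u < r) :
    (m * r + u) / r = m ∧ (m * r + u) % r = u := by
  constructor
  · have h2 : m * r + u = u + m * r := by ring
    rw [h2, Int.add_mul_ediv_right _ _ (by omega : r ≠ 0),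
      Int.ediv_eq_zero_of_lt h0 h1, zero_add]
  · have h2 : m * r + u = u + r * m := by ring
    rw [h2, Int.add_mul_emod_self_left, Int.emod_eq_of_lt h0 h1]

lemma sigmaF_eq {r : ℤ} (k : ℤ) :
    sigmaF r k = (k / r) * (r + 1) + (k % r + 1) := by
  have h := Int.mul_ediv_add_emod k r
  unfold sigmaF
  linear_combination -h

lemma sigmaF_mono {r : ℤ} (hr : 0 < r) : StrictMono (sigmaF r) := by
  intro k k' h
  have := Int.ediv_le_ediv hr h.le
  unfold sigmaF
  omega

lemma mem_range_sigmaF {r : ℤ} (hr : 0 < r) (v : ℤ) :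
    v ∈ Set.range (sigmaF r) ↔ v % (r + 1) ≠ 0 := by
  constructor
  · rintro ⟨k, rfl⟩
    have hu0 : 0 ≤ k % r := Int.emod_nonneg k (by omega)
    have hur : k % r < r := Int.emod_lt_of_pos k hr
    rw [sigmaF_eq]
    rw [(dmod (by omega : (0:ℤ) < r + 1) (by omega) (by omega : k % r + 1 < r + 1)).2]
    omega
  · intro hv
    have hw0 : 0 ≤ v % (r+1) := Int.emod_nonneg v (by omega)
    have hwr : v % (r+1) < r + 1 := Int.emod_lt_of_pos v (by omega)
    have hve := Int.mul_ediv_add_emod v (r+1)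
    refine ⟨(v / (r+1)) * r + (v % (r+1) - 1), ?_⟩
    rw [sigmaF_eq]
    rw [(dmod hr (by omega) (by omega)).1, (dmod hr (by omega) (by omega)).2]
    linear_combination hve
lemma bead_iff {r : ℕ} (hr : 0 < r) (a : Fin r → ℤ) (k : ℤ) :
    IsBead r a (sigmaF (r : ℤ) k) ↔ k ∈ Bset r a := by
  have hrz : (0:ℤ) < (r:ℤ) := by exact_mod_cast hr
  set m := k / (r:ℤ) with hm
  set u := k % (r:ℤ) with hu
  have hu0 : 0 ≤ u := Int.emod_nonneg k (by omega)
  have hur : u < r := Int.emod_lt_of_pos k hrz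
  have hs : sigmaF (r:ℤ) k = m * ((r:ℤ) + 1) + (u + 1) := sigmaF_eq k
  have hmod : sigmaF (r:ℤ) k % ((r:ℤ) + 1) = u + 1 := by
    rw [hs]; exact (dmod (by omega) (by omega) (by omega)).2
  have hunat : ((u.toNat : ℕ) : ℤ) = u := Int.toNat_of_nonneg hu0
  have hulf : u.toNat < r := by omega
  constructor
  · rintro ⟨i, h1, h2⟩
    rw [hmod] at h1
    have hiu : ((i : ℕ) : ℤ) = u := by omega
    have hile : m ≤ a i := by nlinarith [hs, h2]
    show k / (r:ℤ) ≤ aget r a (k % (r:ℤ)).toNat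
    rw [← hu, ← hm]
    have hieq : i = ⟨u.toNat, hulf⟩ := by
      apply Fin.ext; simp only; omega
    rw [aget, dif_pos hulf, ← hieq]
    exact hile
  · intro hk
    have hk' : m ≤ aget r a u.toNat := hk
    rw [aget, dif_pos hulf] at hk'
    refine ⟨⟨u.toNat, hulf⟩, ?_, ?_⟩
    · rw [hmod]; simp only; omega
    · have : ((⟨u.toNat, hulf⟩ : Fin r) : ℤ) = u := by simp only; omega
      rw [hs, this]
      nlinarith [hk']

lemma bead_nonmult {r : ℕ} (a : Fin r → ℤ) (v : ℤ) (h : IsBead r a v) :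
    v % ((r:ℤ) + 1) ≠ 0 := by
  obtain ⟨i, h1, _⟩ := h
  have : (0:ℤ) ≤ (i : ℤ) := by positivity
  omega

lemma image_Bset {r : ℕ} (hr : 0 < r) (a : Fin r → ℤ) :
    sigmaF (r:ℤ) '' (Bset r a) = {v : ℤ | IsBead r a v} := by
  ext v
  constructor
  · rintro ⟨k, hk, rfl⟩
    exact (bead_iff hr a k).mpr hk
  · intro hv
    have hnm : v % ((r:ℤ)+1) ≠ 0 := bead_nonmult a v hv
    obtain ⟨k, rfl⟩ := (mem_range_sigmaF (by exact_mod_cast hr) v).mpr hnm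
    exact ⟨k, (bead_iff hr a k).mp hv, rfl⟩

lemma abacusCore_eq {r : ℕ} (hr : 0 < r) (a : Fin r → ℤ) (i : ℕ) :
    abacusCore r a i = coreR (Bset r a) i := by
  rw [← transport (sigmaF (r:ℤ)) (sigmaF_mono (by exact_mod_cast hr)) (Bset r a) i]
  unfold abacusCore
  have hseteq : {g : ℤ | IsGap r a g ∧ ∃ b : ℤ, IsBead r a b ∧
      Nat.card {b' : ℤ | IsBead r a b' ∧ b < b'} = i ∧ g < b}
      = {g : ℤ | (g ∈ Set.range (sigmaF (r:ℤ)) ∧ g ∉ sigmaF (r:ℤ) '' (Bset r a)) ∧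
        ∃ b, b ∈ sigmaF (r:ℤ) '' (Bset r a) ∧ ubZ (sigmaF (r:ℤ) '' (Bset r a)) b = i ∧ g < b} := by
    rw [image_Bset hr a]
    ext g
    simp only [Set.mem_setOf_eq, IsGap, mem_range_sigmaF (show (0:ℤ) < (r:ℤ) by exact_mod_cast hr)]
    have hub : ∀ b : ℤ, {b' : ℤ | IsBead r a b' ∧ b < b'}
        = {x : ℤ | x ∈ {v : ℤ | IsBead r a v} ∧ b < x} := fun b => rfl
    constructor
    · rintro ⟨⟨hnm, hnb⟩, b, hb, hcard, hlt⟩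
      exact ⟨⟨hnm, hnb⟩, b, hb, by rw [ubZ]; rw [← hub b]; exact hcard, hlt⟩
    · rintro ⟨⟨hnm, hnb⟩, b, hb, hcard, hlt⟩
      exact ⟨⟨hnm, hnb⟩, b, hb, by rw [ubZ] at hcard; rw [hub b]; exact hcard, hlt⟩
  rw [hseteq]
/-- reading-coordinate map induced by deleting runner `jz` (of `r'+1` runners, leaving `r'`). -/
def tauF (r' jz : ℤ) : ℤ → ℤ := fun k => k + k / r' + (if k % r' < jz then 0 else 1)

lemma tauF_eq {r' jz : ℤ} (k : ℤ) :
    tauF r' jz k = (k / r') * (r' + 1) + (k % r' + (if k % r' < jz then 0 else 1)) := by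
  have h := Int.mul_ediv_add_emod k r'
  unfold tauF
  split_ifs <;> linear_combination -h

lemma tauF_divmod {r' jz : ℤ} (hr : 0 < r') (hj0 : 0 ≤ jz) (hjr : jz ≤ r') (k : ℤ) :
    tauF r' jz k / (r' + 1) = k / r' ∧
    tauF r' jz k % (r' + 1) = k % r' + (if k % r' < jz then 0 else 1) := by
  have hu0 : 0 ≤ k % r' := Int.emod_nonneg k (by omega)
  have hur : k % r' < r' := Int.emod_lt_of_pos k hr
  rw [tauF_eq]
  constructor
  · refine (dmod (by omega) ?_ ?_).1 <;> split_ifs <;> omega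
  · refine (dmod (by omega) ?_ ?_).2 <;> split_ifs <;> omega

lemma tauF_mono {r' jz : ℤ} (hr : 0 < r') : StrictMono (tauF r' jz) := by
  intro k k' h
  have hdiv : k / r' ≤ k' / r' := Int.ediv_le_ediv hr h.le
  have hk := Int.mul_ediv_add_emod k r'
  have hk' := Int.mul_ediv_add_emod k' r'
  have hu0 : 0 ≤ k % r' := Int.emod_nonneg k (by omega)
  have hur : k % r' < r' := Int.emod_lt_of_pos k hr
  have hu0' : 0 ≤ k' % r' := Int.emod_nonneg k' (by omega)
  have hur' : k' % r' < r' := Int.emod_lt_of_pos k' hr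
  rcases eq_or_lt_of_le hdiv with heq | hlt
  · unfold tauF
    rw [← heq] at hk' ⊢
    split_ifs <;> omega
  · have hmul : r' * (k / r') + r' ≤ r' * (k' / r') := by
      have h1 : r' * (k / r' + 1) ≤ r' * (k' / r') :=
        mul_le_mul_of_nonneg_left (by omega) (by omega)
      linarith
    unfold tauF
    split_ifs <;> omega

lemma tauF_range {r' jz : ℤ} (hr : 0 < r') (hj0 : 0 ≤ jz) (hjr : jz ≤ r') (g : ℤ) :
    g ∈ Set.range (tauF r' jz) ↔ g % (r' + 1) ≠ jz := by
  constructor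
  · rintro ⟨k, rfl⟩
    rw [(tauF_divmod hr hj0 hjr k).2]
    have hu0 : 0 ≤ k % r' := Int.emod_nonneg k (by omega)
    have hur : k % r' < r' := Int.emod_lt_of_pos k hr
    split_ifs <;> omega
  · intro hg
    have hU0 : 0 ≤ g % (r'+1) := Int.emod_nonneg g (by omega)
    have hUr : g % (r'+1) < r' + 1 := Int.emod_lt_of_pos g (by omega)
    have hge := Int.mul_ediv_add_emod g (r'+1)
    set U := g % (r'+1) with hU
    refine ⟨(g / (r'+1)) * r' + (if U < jz then U else U - 1), ?_⟩
    rw [tauF_eq]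
    have ht0 : 0 ≤ (if U < jz then U else U - 1) := by split_ifs <;> omega
    have htr : (if U < jz then U else U - 1) < r' := by split_ifs <;> omega
    rw [(dmod hr ht0 htr).1, (dmod hr ht0 htr).2]
    have hge' : (g / (r'+1)) * (r'+1) + U = g := by linear_combination hge
    split_ifs <;> omega

lemma tau_bead_iff {r : ℕ} (hr : 2 ≤ r) {jn : ℕ} (hj : jn < r) (a : Fin r → ℤ) (k : ℤ) :
    k ∈ Bset (r - 1) (deleteOne r a jn) ↔
      tauF ((r:ℤ) - 1) (jn : ℤ) k ∈ Bset r a := by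
  have hr' : (0:ℤ) < (r:ℤ) - 1 := by
    have : (2:ℤ) ≤ (r:ℤ) := by exact_mod_cast hr
    omega
  have hj0 : (0:ℤ) ≤ (jn:ℤ) := by positivity
  have hjr : (jn:ℤ) ≤ (r:ℤ) - 1 := by
    have : (jn:ℤ) < (r:ℤ) := by exact_mod_cast hj
    omega
  have hcast : ((r - 1 : ℕ) : ℤ) = (r:ℤ) - 1 := by omega
  have hdm := tauF_divmod hr' hj0 hjr k
  have hu0 : 0 ≤ k % ((r:ℤ) - 1) := Int.emod_nonneg k (by omega)
  have hur : k % ((r:ℤ) - 1) < (r:ℤ) - 1 := Int.emod_lt_of_pos k hr'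
  set t := k % ((r:ℤ) - 1) with ht
  set u := t + (if t < (jn:ℤ) then 0 else 1) with hudef
  have hru : (r:ℤ) - 1 + 1 = (r:ℤ) := by ring
  rw [hru] at hdm
  have hBr : (tauF ((r:ℤ) - 1) (jn : ℤ) k ∈ Bset r a)
      ↔ k / ((r:ℤ)-1) ≤ aget r a u.toNat := by
    show (tauF ((r:ℤ)-1) (jn:ℤ) k / (r:ℤ) ≤ aget r a ((tauF ((r:ℤ)-1) (jn:ℤ) k) % (r:ℤ)).toNat) ↔ _
    rw [hdm.1, hdm.2]
  rw [hBr]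
  have hBl : (k ∈ Bset (r-1) (deleteOne r a jn))
      ↔ k / ((r:ℤ)-1) ≤ aget (r-1) (deleteOne r a jn) t.toNat := by
    show (k / ((r-1:ℕ):ℤ) ≤ aget (r-1) (deleteOne r a jn) (k % ((r-1:ℕ):ℤ)).toNat) ↔ _
    rw [hcast]
  rw [hBl]
  have hagree : aget (r-1) (deleteOne r a jn) t.toNat = aget r a u.toNat := by
    have htlt : t.toNat < r - 1 := by omega
    rw [aget, dif_pos htlt]
    show aget r a (if t.toNat < jn then t.toNat else t.toNat + 1) = aget r a u.toNat
    congr 1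
    have hcond : t < (jn:ℤ) ↔ t.toNat < jn := by omega
    split_ifs with h1 <;> rw [hudef] <;> [rw [if_pos (hcond.mpr h1)]; rw [if_neg (fun hc => h1 (hcond.mp hc))]] <;> omega
  rw [hagree]

lemma tau_image_Bset {r : ℕ} (hr : 2 ≤ r) {jn : ℕ} (hj : jn < r) (a : Fin r → ℤ) :
    tauF ((r:ℤ) - 1) (jn : ℤ) '' (Bset (r-1) (deleteOne r a jn))
      = {x : ℤ | x ∈ Bset r a ∧ x % (r:ℤ) ≠ (jn:ℤ)} := by
  have hr' : (0:ℤ) < (r:ℤ) - 1 := by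
    have : (2:ℤ) ≤ (r:ℤ) := by exact_mod_cast hr
    omega
  have hj0 : (0:ℤ) ≤ (jn:ℤ) := by positivity
  have hjr : (jn:ℤ) ≤ (r:ℤ) - 1 := by
    have : (jn:ℤ) < (r:ℤ) := by exact_mod_cast hj
    omega
  have hru : (r:ℤ) - 1 + 1 = (r:ℤ) := by ring
  ext x
  constructor
  · rintro ⟨k, hk, rfl⟩
    refine ⟨(tau_bead_iff hr hj a k).mp hk, ?_⟩
    have := (tauF_range hr' hj0 hjr _).mp ⟨k, rfl⟩
    rwa [hru] at this
  · rintro ⟨hxB, hxm⟩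
    have : x ∈ Set.range (tauF ((r:ℤ)-1) (jn:ℤ)) := by
      rw [tauF_range hr' hj0 hjr, hru]; exact hxm
    obtain ⟨k, rfl⟩ := this
    exact ⟨k, (tau_bead_iff hr hj a k).mpr hxB, rfl⟩

end reading
end Stmt5Aux

open Stmt5Aux in
/-- Deleting the leftmost runner whose largest bead lies at the smallest level from a
balanced flush abacus on `2n` runners yields the abacus of the core obtained by deleting all
columns ending in the same residue mod `2n` as the first column. -/
theorem stmt5 (n : ℕ) (hn : 2 ≤ n) (a : Fin (2*n) → ℤ) (hbal : BalancedAbacus n a)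
    (j : Fin (2*n)) (hmin : ∀ i, a j ≤ a i) (hleft : ∀ i, a i = a j → j ≤ i) :
    abacusCore (2*n-1) (deleteOne (2*n) a j.val) = deleteColsCore n (abacusCore (2*n) a) := by
  classical
  funext i
  have hr4 : 4 ≤ 2*n := by omega
  have hrz : (0:ℤ) < ((2*n:ℕ):ℤ) := by exact_mod_cast (by omega : 0 < 2*n)
  have hj : (j:ℕ) < 2*n := j.isLt
  set jz : ℤ := ((j:ℕ) : ℤ) with hjz
  have hjz0 : 0 ≤ jz := by positivity
  have hjzr : jz < ((2*n:ℕ):ℤ) := by rw [hjz]; exact_mod_cast hj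
  set B : Set ℤ := Bset (2*n) a with hB
  have hmemB : ∀ x : ℤ, x ∈ B ↔ x / ((2*n:ℕ):ℤ) ≤ aget (2*n) a (x % ((2*n:ℕ):ℤ)).toNat :=
    fun x => Iff.rfl
  have hmod_lt : ∀ x : ℤ, (x % ((2*n:ℕ):ℤ)).toNat < 2*n := by
    intro x
    have h1 : 0 ≤ x % ((2*n:ℕ):ℤ) := Int.emod_nonneg x (by omega)
    have h2 : x % ((2*n:ℕ):ℤ) < ((2*n:ℕ):ℤ) := Int.emod_lt_of_pos x hrz
    omega
  have hagetA : ∀ x : ℤ, ∃ i' : Fin (2*n),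
      aget (2*n) a (x % ((2*n:ℕ):ℤ)).toNat = a i' ∧ ((i' : ℕ) : ℤ) = x % ((2*n:ℕ):ℤ) := by
    intro x
    refine ⟨⟨(x % ((2*n:ℕ):ℤ)).toNat, hmod_lt x⟩, ?_, ?_⟩
    · rw [aget, dif_pos (hmod_lt x)]
    · have h1 : 0 ≤ x % ((2*n:ℕ):ℤ) := Int.emod_nonneg x (by omega)
      simp only
      omega
  have hbound : ∀ i' : Fin (2*n), a i' ≤ -(a j) := by
    intro i'
    have h1 := hbal i'
    have h2 := hmin i'.rev
    omega
  -- upper bound for B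
  set K : ℤ := ((2*n:ℕ):ℤ) * (-(a j)) + ((2*n:ℕ):ℤ) with hKdef
  have hK : ∀ x ∈ B, x ≤ K := by
    intro x hx
    rw [hmemB] at hx
    obtain ⟨ix, hix1, hix2⟩ := hagetA x
    rw [hix1] at hx
    have h1 : x % ((2*n:ℕ):ℤ) < ((2*n:ℕ):ℤ) := Int.emod_lt_of_pos x hrz
    have h2 := hbound ix
    have h3 := Int.mul_ediv_add_emod x ((2*n:ℕ):ℤ)
    have h4 : ((2*n:ℕ):ℤ) * (x / ((2*n:ℕ):ℤ)) ≤ ((2*n:ℕ):ℤ) * (-(a j)) :=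
      mul_le_mul_of_nonneg_left (le_trans hx h2) (by omega)
    linarith
  -- B is infinite
  have hlowB : ∀ x : ℤ, x ≤ ((2*n:ℕ):ℤ) * a j → x ∈ B := by
    intro x hx
    rw [hmemB]
    obtain ⟨ix, hix1, hix2⟩ := hagetA x
    rw [hix1]
    have h1 : x / ((2*n:ℕ):ℤ) ≤ (((2*n:ℕ):ℤ) * a j) / ((2*n:ℕ):ℤ) := Int.ediv_le_ediv hrz hx
    have h2 : (((2*n:ℕ):ℤ) * a j) / ((2*n:ℕ):ℤ) = a j := Int.mul_ediv_cancel_left _ (by omega)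
    exact le_trans (by omega) (hmin ix)
  have hBinf : B.Infinite := by
    apply Set.Infinite.mono (s := Set.Iic (((2*n:ℕ):ℤ) * a j))
    · intro x hx; exact hlowB x hx
    · exact Set.Iic_infinite _
  -- the smallest gap
  set g₀ : ℤ := (a j + 1) * ((2*n:ℕ):ℤ) + jz with hg₀def
  have hg₀dm : g₀ / ((2*n:ℕ):ℤ) = a j + 1 ∧ g₀ % ((2*n:ℕ):ℤ) = jz := dmod hrz hjz0 hjzr
  have hagetj : aget (2*n) a (g₀ % ((2*n:ℕ):ℤ)).toNat = a j := by
    have harg : (g₀ % ((2*n:ℕ):ℤ)).toNat = (j:ℕ) := by rw [hg₀dm.2]; omega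
    rw [harg, aget, dif_pos hj]
  have hg₀notB : g₀ ∉ B := by
    intro hmem
    rw [hmemB, hagetj, hg₀dm.1] at hmem
    omega
  have hg₀min : ∀ x, x ∉ B → g₀ ≤ x := by
    intro x hx
    rw [hmemB] at hx
    obtain ⟨ix, hix1, hix2⟩ := hagetA x
    rw [hix1] at hx
    push_neg at hx
    have h1 : 0 ≤ x % ((2*n:ℕ):ℤ) := Int.emod_nonneg x (by omega)
    have h2 : x % ((2*n:ℕ):ℤ) < ((2*n:ℕ):ℤ) := Int.emod_lt_of_pos x hrz
    have h3 := Int.mul_ediv_add_emod x ((2*n:ℕ):ℤ)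
    have h4 := hmin ix
    rcases lt_or_ge (a j + 1) (x / ((2*n:ℕ):ℤ)) with h5 | h5
    · have h6 : ((2*n:ℕ):ℤ) * (a j + 2) ≤ ((2*n:ℕ):ℤ) * (x / ((2*n:ℕ):ℤ)) :=
        mul_le_mul_of_nonneg_left (by omega) (by omega)
      linarith
    · have h6 : x / ((2*n:ℕ):ℤ) = a j + 1 := by omega
      have h7 : a ix = a j := by omega
      have h8 := hleft _ h7
      rw [Fin.le_def] at h8
      have h9 : jz ≤ x % ((2*n:ℕ):ℤ) := by omega
      rw [h6] at h3
      linarith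
  -- beads above the smallest gap avoid runner j
  have hF4 : ∀ x ∈ B, g₀ < x → x % ((2*n:ℕ):ℤ) ≠ jz := by
    intro x hx hgx hmod
    rw [hmemB] at hx
    obtain ⟨ix, hix1, hix2⟩ := hagetA x
    rw [hix1] at hx
    have hixj : ix = j := by
      apply Fin.ext
      omega
    rw [hixj] at hx
    have h3 := Int.mul_ediv_add_emod x ((2*n:ℕ):ℤ)
    have h4 : ((2*n:ℕ):ℤ) * (x / ((2*n:ℕ):ℤ)) ≤ ((2*n:ℕ):ℤ) * a j :=
      mul_le_mul_of_nonneg_left hx (by omega)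
    rw [hmod] at h3
    linarith
  -- BS = beads avoiding runner j
  set BS : Set ℤ := {x : ℤ | x ∈ B ∧ x % ((2*n:ℕ):ℤ) ≠ jz} with hBS
  have hK' : ∀ x ∈ BS, x ≤ K := fun x hx => hK x hx.1
  have hBSinf : BS.Infinite := by
    have hinj : Set.InjOn (fun m : ℤ => m * ((2*n:ℕ):ℤ) + (if (j:ℕ) = 0 then 1 else 0))
        (Set.Iic (a j)) := by
      intro x _ y _ hxy
      simp only at hxy
      have : x * ((2*n:ℕ):ℤ) = y * ((2*n:ℕ):ℤ) := by omega
      exact mul_right_cancel₀ (by omega) this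
    apply Set.Infinite.mono (s := (fun m : ℤ => m * ((2*n:ℕ):ℤ) + (if (j:ℕ) = 0 then 1 else 0))
      '' (Set.Iic (a j)))
    · rintro x ⟨m, hm, rfl⟩
      have hu0 : (0:ℤ) ≤ (if (j:ℕ) = 0 then 1 else 0) := by split_ifs <;> omega
      have hur : (if (j:ℕ) = 0 then (1:ℤ) else 0) < ((2*n:ℕ):ℤ) := by split_ifs <;> omega
      have hdm := dmod (r := ((2*n:ℕ):ℤ)) hrz hu0 hur (m := m)
      obtain ⟨ix, hix1, hix2⟩ := hagetA (m * ((2*n:ℕ):ℤ) + (if (j:ℕ) = 0 then 1 else 0))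
      refine ⟨?_, ?_⟩
      · show (m * ((2*n:ℕ):ℤ) + (if (j:ℕ) = 0 then 1 else 0)) / ((2*n:ℕ):ℤ)
            ≤ aget (2*n) a (((m * ((2*n:ℕ):ℤ) + (if (j:ℕ) = 0 then 1 else 0)) % ((2*n:ℕ):ℤ)).toNat)
        rw [hix1, hdm.1]
        exact le_trans hm (hmin ix)
      · show (m * ((2*n:ℕ):ℤ) + (if (j:ℕ) = 0 then 1 else 0)) % ((2*n:ℕ):ℤ) ≠ jz
        rw [hdm.2, hjz]
        split_ifs with h0 <;> omega
    · exact (Set.Iic_infinite (a j)).image hinj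
  -- row formula
  have hf : ∀ i' : ℕ, abacusCore (2*n) a i' = lbZ B ((beadFn B K) i') := by
    intro i'
    rw [abacusCore_eq (by omega : 0 < 2*n) a i', core_count_eq hK hBinf i']
    rfl
  -- column length formula
  have hcolLen : ∀ c : ℕ, colLen (abacusCore (2*n) a) c = ubZ B ((gapFn B g₀) c) := by
    intro c
    have hseteq : {i' : ℕ | c < abacusCore (2*n) a i'} = {i' : ℕ | (gapFn B g₀) c < (beadFn B K) i'} := by
      ext i'
      simp only [Set.mem_setOf_eq]
      rw [hf i']
      exact (gapFn_lt_iff hK hg₀min c ((beadFn B K) i')).symm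
    have himg : (beadFn B K) '' {i' : ℕ | (gapFn B g₀) c < (beadFn B K) i'} = {x : ℤ | x ∈ B ∧ (gapFn B g₀) c < x} := by
      ext x
      constructor
      · rintro ⟨i', hi', rfl⟩
        exact ⟨beadFn_mem hK hBinf i', hi'⟩
      · rintro ⟨hxB, hlt⟩
        exact ⟨ubZ B x, by rw [Set.mem_setOf_eq, beadFn_eq hK hBinf hxB rfl]; exact hlt,
          beadFn_eq hK hBinf hxB rfl⟩
    show Nat.card {i' : ℕ | c < abacusCore (2*n) a i'} = ubZ B ((gapFn B g₀) c)
    rw [Nat.card_coe_set_eq, hseteq, ← Set.ncard_image_of_injOn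
      ((beadFn_injective hK hBinf).injOn), himg, ← ubZ_eq_ncard]
  -- interval identity
  have hIco : ∀ c : ℕ, (gapFn B g₀) c - g₀ = (c:ℤ) + (ubZ B g₀ : ℤ) - (ubZ B ((gapFn B g₀) c) : ℤ) := by
    intro c
    have hgc_notB : (gapFn B g₀) c ∉ B := gapFn_notMem hK c
    have hg₀gc : g₀ ≤ (gapFn B g₀) c := hg₀min _ hgc_notB
    set mid : Set ℤ := {x : ℤ | x ∈ B ∧ g₀ < x ∧ x < (gapFn B g₀) c} with hmid
    have h₁ : {x : ℤ | x ∈ B ∧ g₀ < x} = mid ∪ {x : ℤ | x ∈ B ∧ (gapFn B g₀) c < x} := by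
      ext x
      simp only [hmid, Set.mem_setOf_eq, Set.mem_union]
      constructor
      · rintro ⟨hxB, hgx⟩
        rcases lt_trichotomy x ((gapFn B g₀) c) with h | h | h
        · exact Or.inl ⟨hxB, hgx, h⟩
        · exact absurd (h ▸ hxB) hgc_notB
        · exact Or.inr ⟨hxB, h⟩
      · rintro (⟨hxB, hgx, _⟩ | ⟨hxB, hgx⟩)
        · exact ⟨hxB, hgx⟩
        · exact ⟨hxB, lt_of_le_of_lt hg₀gc hgx⟩
    have hdisj : Disjoint mid {x : ℤ | x ∈ B ∧ (gapFn B g₀) c < x} := by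
      rw [Set.disjoint_left]
      rintro x ⟨_, _, h1⟩ ⟨_, h2⟩
      omega
    have hfin1 : mid.Finite := (fin_above hK g₀).subset (fun x hx => ⟨hx.1, hx.2.1⟩)
    have hfin2 : {x : ℤ | x ∈ B ∧ (gapFn B g₀) c < x}.Finite := fin_above hK _
    have hcard1 : ubZ B g₀ = mid.ncard + ubZ B ((gapFn B g₀) c) := by
      rw [ubZ_eq_ncard, ubZ_eq_ncard, h₁, Set.ncard_union_eq hdisj hfin1 hfin2]
    have h₂ : Set.Ico g₀ ((gapFn B g₀) c) = mid ∪ {x : ℤ | x ∉ B ∧ x < (gapFn B g₀) c} := by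
      ext x
      simp only [hmid, Set.mem_Ico, Set.mem_union, Set.mem_setOf_eq]
      constructor
      · rintro ⟨hge, hlt⟩
        by_cases hxB : x ∈ B
        · refine Or.inl ⟨hxB, ?_, hlt⟩
          rcases eq_or_lt_of_le hge with rfl | h
          · exact absurd hxB hg₀notB
          · exact h
        · exact Or.inr ⟨hxB, hlt⟩
      · rintro (⟨_, hgx, hlt⟩ | ⟨hxB, hlt⟩)
        · exact ⟨le_of_lt hgx, hlt⟩
        · exact ⟨hg₀min x hxB, hlt⟩
    have hdisj2 : Disjoint mid {x : ℤ | x ∉ B ∧ x < (gapFn B g₀) c} := by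
      rw [Set.disjoint_left]
      rintro x ⟨hxB, _, _⟩ ⟨hxB', _⟩
      exact hxB' hxB
    have hfin3 : {x : ℤ | x ∉ B ∧ x < (gapFn B g₀) c}.Finite := fin_below hg₀min _
    have hcard2 : ((gapFn B g₀) c - g₀).toNat = mid.ncard + c := by
      have hIcoc : (Set.Ico g₀ ((gapFn B g₀) c)).ncard = ((gapFn B g₀) c - g₀).toNat := by
        rw [← Finset.coe_Ico, Set.ncard_coe_finset, Int.card_Ico]
      rw [← hIcoc, h₂, Set.ncard_union_eq hdisj2 hfin1 hfin3]
      have := lbZ_gapFn hK hg₀min c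
      rw [lbZ_eq_ncard] at this
      rw [this]
    omega
  -- residue formula
  have hres : ∀ c : ℕ, (colRes n (abacusCore (2*n) a) c = colRes n (abacusCore (2*n) a) 0)
      ↔ (gapFn B g₀) c % ((2*n:ℕ):ℤ) = jz := by
    intro c
    have hg0eq : (gapFn B g₀) 0 = g₀ := gapFn_zero hK hg₀min hg₀notB
    unfold colRes
    rw [ZMod.intCast_eq_intCast_iff, Int.ModEq, Int.emod_eq_emod_iff_emod_sub_eq_zero]
    have hABl : (((c:ℕ):ℤ) - ((colLen (abacusCore (2*n) a) c : ℤ) - 1))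
        - ((((0:ℕ):ℕ):ℤ) - ((colLen (abacusCore (2*n) a) 0 : ℤ) - 1)) = (gapFn B g₀) c - g₀ := by
      have h1 := hIco c
      rw [hcolLen c, hcolLen 0, hg0eq] at *
      omega
    rw [hABl, ← Int.emod_eq_emod_iff_emod_sub_eq_zero, hg₀dm.2]
  -- kept columns
  have hkeptCol : ∀ c : ℕ, keptCol n (abacusCore (2*n) a) c
      ↔ (0 < ubZ B ((gapFn B g₀) c) ∧ (gapFn B g₀) c % ((2*n:ℕ):ℤ) ≠ jz) := by
    intro c
    unfold keptCol
    rw [hcolLen c]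
    exact and_congr Iff.rfl (not_congr (hres c))
  -- RHS computation
  have hRHS : deleteColsCore n (abacusCore (2*n) a) i
      = Nat.card {g : ℤ | (g ∉ B ∧ g < (beadFn B K) i) ∧ g % ((2*n:ℕ):ℤ) ≠ jz} := by
    show Nat.card {c : ℕ | keptCol n (abacusCore (2*n) a) c ∧ c < abacusCore (2*n) a i} = _
    have hset1 : {c : ℕ | keptCol n (abacusCore (2*n) a) c ∧ c < abacusCore (2*n) a i}
        = {c : ℕ | c < abacusCore (2*n) a i ∧ (gapFn B g₀) c % ((2*n:ℕ):ℤ) ≠ jz} := by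
      ext c
      simp only [Set.mem_setOf_eq]
      rw [hkeptCol c]
      constructor
      · rintro ⟨⟨_, hmod⟩, hlt⟩
        exact ⟨hlt, hmod⟩
      · rintro ⟨hlt, hmod⟩
        refine ⟨⟨?_, hmod⟩, hlt⟩
        have hlt' : (gapFn B g₀) c < (beadFn B K) i := by
          rw [hf i] at hlt
          exact (gapFn_lt_iff hK hg₀min c ((beadFn B K) i)).mpr hlt
        rw [ubZ_eq_ncard]
        exact (Set.ncard_pos (fin_above hK _)).mpr ⟨(beadFn B K) i, beadFn_mem hK hBinf i, hlt'⟩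
    have himg : (gapFn B g₀) '' {c : ℕ | c < abacusCore (2*n) a i ∧ (gapFn B g₀) c % ((2*n:ℕ):ℤ) ≠ jz}
        = {g : ℤ | (g ∉ B ∧ g < (beadFn B K) i) ∧ g % ((2*n:ℕ):ℤ) ≠ jz} := by
      ext g
      constructor
      · rintro ⟨c, ⟨hlt, hmod⟩, rfl⟩
        refine ⟨⟨gapFn_notMem hK c, ?_⟩, hmod⟩
        rw [hf i] at hlt
        exact (gapFn_lt_iff hK hg₀min c ((beadFn B K) i)).mpr hlt
      · rintro ⟨⟨hgB, hlt⟩, hmod⟩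
        have hge : (gapFn B g₀) (lbZ B g) = g := gapFn_eq hK hg₀min hgB rfl
        refine ⟨lbZ B g, ⟨?_, ?_⟩, hge⟩
        · rw [hf i]
          rw [← hge] at hlt
          exact (gapFn_lt_iff hK hg₀min _ (beadFn B K i)).mp hlt
        · rw [hge]; exact hmod
    rw [Nat.card_coe_set_eq, hset1, ← Set.ncard_image_of_injOn
      ((gapFn_injective hK hg₀min).injOn), himg, ← Nat.card_coe_set_eq]
  -- LHS computation
  have hcastr : ((2*n:ℕ):ℤ) - 1 + 1 = ((2*n:ℕ):ℤ) := by ring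
  have hr'pos : (0:ℤ) < ((2*n:ℕ):ℤ) - 1 := by omega
  have hLHS : abacusCore (2*n-1) (deleteOne (2*n) a j.val) i
      = Nat.card {g : ℤ | (g % ((2*n:ℕ):ℤ) ≠ jz ∧ g ∉ B) ∧
          ∃ b, b ∈ BS ∧ ubZ BS b = i ∧ g < b} := by
    rw [abacusCore_eq (by omega : 0 < 2*n-1) (deleteOne (2*n) a j.val) i]
    rw [← transport (tauF (((2*n:ℕ):ℤ) - 1) jz) (tauF_mono hr'pos)
      (Bset (2*n-1) (deleteOne (2*n) a j.val)) i]
    have himg3 : tauF (((2*n:ℕ):ℤ) - 1) jz '' (Bset (2*n-1) (deleteOne (2*n) a j.val)) = BS := by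
      have := tau_image_Bset (r := 2*n) (by omega) hj a
      rw [hjz, hBS]
      exact this
    rw [himg3]
    apply congrArg (fun s : Set ℤ => Nat.card s)
    ext g
    have hrange : g ∈ Set.range (tauF (((2*n:ℕ):ℤ) - 1) jz) ↔ g % ((2*n:ℕ):ℤ) ≠ jz := by
      rw [tauF_range hr'pos hjz0 (by omega), hcastr]
    simp only [Set.mem_setOf_eq]
    rw [hrange]
    constructor
    · rintro ⟨⟨hmod, hnBS⟩, hex⟩
      exact ⟨⟨hmod, fun hgB => hnBS ⟨hgB, hmod⟩⟩, hex⟩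
    · rintro ⟨⟨hmod, hnB⟩, hex⟩
      exact ⟨⟨hmod, fun hBS' => hnB hBS'.1⟩, hex⟩
  -- bead uniqueness for BS
  have hLHS2 : abacusCore (2*n-1) (deleteOne (2*n) a j.val) i
      = Nat.card {g : ℤ | (g % ((2*n:ℕ):ℤ) ≠ jz ∧ g ∉ B) ∧ g < (beadFn BS K) i} := by
    rw [hLHS]
    apply congrArg (fun s : Set ℤ => Nat.card s)
    ext g
    simp only [Set.mem_setOf_eq]
    constructor
    · rintro ⟨hg, b, hbBS, hub, hlt⟩
      exact ⟨hg, by rwa [beadFn_eq hK' hBSinf hbBS hub]⟩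
    · rintro ⟨hg, hlt⟩
      exact ⟨hg, (beadFn BS K) i, beadFn_mem hK' hBSinf i, ubZ_beadFn hK' hBSinf i, hlt⟩
  rw [hLHS2, hRHS]
  -- case split on whether row i survives above the first gap
  by_cases hcase : i < ubZ B g₀
  · -- the i-th kept bead is the i-th bead
    have hgb : g₀ < (beadFn B K) i := (lt_beadFn_iff hK hBinf i g₀).mpr hcase
    have hmemBS : (beadFn B K) i ∈ BS := ⟨beadFn_mem hK hBinf i, hF4 _ (beadFn_mem hK hBinf i) hgb⟩
    have hub : ubZ BS ((beadFn B K) i) = i := by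
      have hseteq : {x : ℤ | x ∈ BS ∧ (beadFn B K) i < x} = {x : ℤ | x ∈ B ∧ (beadFn B K) i < x} := by
        ext x
        simp only [hBS, Set.mem_setOf_eq]
        constructor
        · rintro ⟨⟨hxB, _⟩, hlt⟩; exact ⟨hxB, hlt⟩
        · rintro ⟨hxB, hlt⟩
          exact ⟨⟨hxB, hF4 x hxB (lt_trans hgb hlt)⟩, hlt⟩
      rw [ubZ_eq_ncard, hseteq, ← ubZ_eq_ncard]
      exact ubZ_beadFn hK hBinf i
    have hbeq : (beadFn BS K) i = (beadFn B K) i := beadFn_eq hK' hBSinf hmemBS hub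
    rw [hbeq]
    apply congrArg (fun s : Set ℤ => Nat.card s)
    ext g
    simp only [Set.mem_setOf_eq]
    tauto
  · -- both sides are empty
    have hble : (beadFn B K) i ≤ g₀ := by
      by_contra h
      push_neg at h
      exact hcase ((lt_beadFn_iff hK hBinf i g₀).mp h)
    have hubBS : ubZ BS g₀ = ubZ B g₀ := by
      have hseteq : {x : ℤ | x ∈ BS ∧ g₀ < x} = {x : ℤ | x ∈ B ∧ g₀ < x} := by
        ext x
        simp only [hBS, Set.mem_setOf_eq]
        constructor
        · rintro ⟨⟨hxB, _⟩, hlt⟩; exact ⟨hxB, hlt⟩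
        · rintro ⟨hxB, hlt⟩; exact ⟨⟨hxB, hF4 x hxB hlt⟩, hlt⟩
      rw [ubZ_eq_ncard, hseteq, ← ubZ_eq_ncard]
    have hble' : (beadFn BS K) i ≤ g₀ := by
      by_contra h
      push_neg at h
      have := (lt_beadFn_iff hK' hBSinf i g₀).mp h
      rw [hubBS] at this
      exact hcase this
    have hempty1 : {g : ℤ | (g % ((2*n:ℕ):ℤ) ≠ jz ∧ g ∉ B) ∧ g < (beadFn BS K) i} = ∅ := by
      ext g
      simp only [Set.mem_setOf_eq, Set.mem_empty_iff_false, iff_false, not_and]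
      rintro ⟨_, hgB⟩ hlt
      have := hg₀min g hgB
      omega
    have hempty2 : {g : ℤ | (g ∉ B ∧ g < (beadFn B K) i) ∧ g % ((2*n:ℕ):ℤ) ≠ jz} = ∅ := by
      ext g
      simp only [Set.mem_setOf_eq, Set.mem_empty_iff_false, iff_false, not_and]
      rintro ⟨hgB, hlt⟩
      have := hg₀min g hgB
      omega
    rw [hempty1, hempty2]
end

section
/- Fix n ≥ 2 and k ≥ 1, write ℓ1 = k mod n with 1 ≤ ℓ1 ≤ n and ℓ2 = k mod 2n with 1 ≤ ℓ2 ≤ 2n, and suppose 1 ≤ ℓ2 ≤ n. Then under the correspondence between symmetric (2n)-cores and coroot lattice points in ℤ^n, the symmetric (2n)-cores λ with first part λ_1 = k correspond exactly to the lattice points (a_1,…,a_n) ∈ ℤ^n satisfying a_{ℓ1} = ⌈k/(2n)⌉, −⌈k/(2n)⌉ < a_i ≤ ⌈k/(2n)⌉ for 1 ≤ i ≤ ℓ1−1, and −⌈k/(2n)⌉ < a_i < ⌈k/(2n)⌉ for ℓ1+1 ≤ i ≤ n. -/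
private lemma emod_helper {R m x : ℤ} (h0 : 0 ≤ x) (h1 : x < R) :
    (R * m + x) % R = x := by
  rw [add_comm, Int.add_mul_emod_self_left, Int.emod_eq_of_lt h0 h1]

private lemma bead_iff {r : ℕ} (a : Fin r → ℤ) (v : ℤ) :
    IsBead r a v ↔ ∃ (j : Fin r) (m : ℤ), m ≤ a j ∧ v = ((r:ℤ)+1) * m + ((j:ℤ)+1) := by
  constructor
  · rintro ⟨i, h1, h2⟩
    have hR : (0:ℤ) < (r:ℤ)+1 := by positivity
    have hv : ((r:ℤ)+1) * (v / ((r:ℤ)+1)) + v % ((r:ℤ)+1) = v := Int.mul_ediv_add_emod v _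
    refine ⟨i, v / ((r:ℤ)+1), ?_, by rw [← h1]; linarith⟩
    nlinarith [h2, hv, h1]
  · rintro ⟨j, m, hm, rfl⟩
    have hR : (0:ℤ) < (r:ℤ)+1 := by positivity
    have hj1 : (0:ℤ) ≤ (j:ℤ)+1 := by positivity
    have hj2 : ((j:ℤ)+1) < (r:ℤ)+1 := by have := j.isLt; omega
    exact ⟨j, emod_helper hj1 hj2, by nlinarith⟩

private lemma gap_iff {r : ℕ} (a : Fin r → ℤ) (v : ℤ) :
    IsGap r a v ↔ ∃ (j : Fin r) (m : ℤ), a j < m ∧ v = ((r:ℤ)+1) * m + ((j:ℤ)+1) := by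
  constructor
  · rintro ⟨h0, hnb⟩
    have hR : (0:ℤ) < (r:ℤ)+1 := by positivity
    have hm0 : 0 ≤ v % ((r:ℤ)+1) := Int.emod_nonneg v (by positivity)
    have hm1 : v % ((r:ℤ)+1) < (r:ℤ)+1 := Int.emod_lt_of_pos v hR
    have h1 : 1 ≤ v % ((r:ℤ)+1) := lt_of_le_of_ne hm0 (Ne.symm h0)
    have hjlt : (v % ((r:ℤ)+1)).toNat - 1 < r := by omega
    set j : Fin r := ⟨(v % ((r:ℤ)+1)).toNat - 1, hjlt⟩ with hj
    have hjv : ((j:ℤ)+1) = v % ((r:ℤ)+1) := by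
      simp only [hj]
      omega
    have hv : ((r:ℤ)+1) * (v / ((r:ℤ)+1)) + v % ((r:ℤ)+1) = v := Int.mul_ediv_add_emod v _
    refine ⟨j, v / ((r:ℤ)+1), ?_, by rw [hjv]; linarith⟩
    by_contra hle
    push_neg at hle
    exact hnb ⟨j, by rw [hjv], by nlinarith⟩
  · rintro ⟨j, m, hm, rfl⟩
    have hR : (0:ℤ) < (r:ℤ)+1 := by positivity
    have hj1 : (0:ℤ) ≤ (j:ℤ)+1 := by positivity
    have hj2 : ((j:ℤ)+1) < (r:ℤ)+1 := by have := j.isLt; omega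
    have hmod : (((r:ℤ)+1) * m + ((j:ℤ)+1)) % ((r:ℤ)+1) = (j:ℤ)+1 := emod_helper hj1 hj2
    refine ⟨by rw [hmod]; positivity, ?_⟩
    rintro ⟨i, hi1, hi2⟩
    rw [hmod] at hi1
    have hij : j = i := by
      ext
      have : (j:ℤ) = (i:ℤ) := by linarith
      exact_mod_cast this
    subst hij
    nlinarith

private lemma repr_uniq {r : ℕ} {j j' : Fin r} {m m' : ℤ}
    (h : ((r:ℤ)+1) * m + ((j:ℤ)+1) = ((r:ℤ)+1) * m' + ((j':ℤ)+1)) : j = j' ∧ m = m' := by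
  have hR : (0:ℤ) < (r:ℤ)+1 := by positivity
  have hj : ((j:ℤ)+1) < (r:ℤ)+1 := by have := j.isLt; omega
  have hj' : ((j':ℤ)+1) < (r:ℤ)+1 := by have := j'.isLt; omega
  have h1 : ((j:ℤ)+1) = ((j':ℤ)+1) := by
    have e1 := emod_helper (by positivity : (0:ℤ) ≤ (j:ℤ)+1) hj (m := m)
    have e2 := emod_helper (by positivity : (0:ℤ) ≤ (j':ℤ)+1) hj' (m := m')
    rw [← e1, ← e2, h]
  have hjj : j = j' := by
    ext; exact_mod_cast (by linarith : (j:ℤ) = (j':ℤ))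
  refine ⟨hjj, ?_⟩
  subst hjj
  nlinarith

set_option maxHeartbeats 2000000 in
/-- Case `1 ≤ (k mod 2n) ≤ n`: under the correspondence between symmetric `2n`-cores and
coroot lattice points `(a₁, …, aₙ) ∈ ℤⁿ` (the levels of the first `n` runners of the
balanced flush abacus), the cores with first part `k` correspond exactly to the points with
`a_{ℓ₁} = ⌈k/2n⌉`, `-⌈k/2n⌉ < aᵢ ≤ ⌈k/2n⌉` for `i < ℓ₁` and `-⌈k/2n⌉ < aᵢ < ⌈k/2n⌉` for
`i > ℓ₁` (1-indexed). -/
theorem stmt6 (n k ℓ1 ℓ2 : ℕ) (hn : 2 ≤ n) (hk : 1 ≤ k)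
    (h11 : 1 ≤ ℓ1) (h12 : ℓ1 ≤ n) (h1m : ℓ1 ≡ k [MOD n])
    (h21 : 1 ≤ ℓ2) (h22 : ℓ2 ≤ n) (h2m : ℓ2 ≡ k [MOD 2*n])
    (c : ℤ) (hc : c = (((k + 2*n - 1)/(2*n) : ℕ) : ℤ))
    (a : Fin (2*n) → ℤ) (hbal : BalancedAbacus n a) :
    abacusCore (2*n) a 0 = k ↔
      (aget (2*n) a (ℓ1 - 1) = c ∧
       (∀ i : ℕ, i < ℓ1 - 1 → -c < aget (2*n) a i ∧ aget (2*n) a i ≤ c) ∧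
       (∀ i : ℕ, ℓ1 ≤ i → i < n → -c < aget (2*n) a i ∧ aget (2*n) a i < c)) := by
  classical
  have hr0 : 0 < 2*n := by omega
  haveI : Nonempty (Fin (2*n)) := Fin.pos_iff_nonempty.mp hr0
  have hRpos : (0:ℤ) < ((2*n:ℕ):ℤ)+1 := by positivity
  set f : Fin (2*n) → ℤ := fun j => (((2*n:ℕ):ℤ)+1) * a j + ((j:ℤ)+1) with hf
  obtain ⟨is, hmax⟩ := Finite.exists_max f
  -- basic consequences of maximality
  have hle : ∀ j, a j ≤ a is := by
    intro j
    by_contra hlt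
    push_neg at hlt
    have h1 : a is + 1 ≤ a j := hlt
    have h2 := hmax j
    simp only [hf] at h2
    have hj : (0:ℤ) ≤ ((j:ℕ):ℤ) := by positivity
    have his : ((is:ℕ):ℤ) < ((2*n:ℕ):ℤ) := by exact_mod_cast is.isLt
    nlinarith [mul_le_mul_of_nonneg_left h1 hRpos.le]
  have hstrict : ∀ j : Fin (2*n), is.val < j.val → a j < a is := by
    intro j hj
    rcases lt_or_eq_of_le (hle j) with h | h
    · exact h
    · exfalso
      have h2 := hmax j
      simp only [hf, h] at h2
      have : ((is:ℕ):ℤ) < ((j:ℕ):ℤ) := by exact_mod_cast hj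
      linarith
  -- sum of levels is zero
  have hsum : ∑ j, a j = 0 := by
    have h1 : ∑ j : Fin (2*n), (a j + a j.rev) = 0 := by
      have : ∀ j : Fin (2*n), a j + a j.rev = 0 := hbal
      simp [this]
    have h2 : ∑ j : Fin (2*n), a j.rev = ∑ j, a j := by
      have := Equiv.sum_comp (Fin.revPerm (n := 2*n)) a
      simpa using this
    rw [Finset.sum_add_distrib, h2] at h1
    linarith
  -- every bead is at most f is
  have hbead_le : ∀ v, IsBead (2*n) a v → v ≤ f is := by
    intro v hv
    obtain ⟨j, m, hm, rfl⟩ := (bead_iff a v).1 hv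
    have h1 : (((2*n:ℕ):ℤ)+1) * m ≤ (((2*n:ℕ):ℤ)+1) * a j :=
      mul_le_mul_of_nonneg_left hm hRpos.le
    calc (((2*n:ℕ):ℤ)+1) * m + ((j:ℤ)+1) ≤ f j := by simp only [hf]; linarith
      _ ≤ f is := hmax j
  have hBbead : IsBead (2*n) a (f is) := (bead_iff a _).2 ⟨is, a is, le_refl _, rfl⟩
  -- step 1: the core's first part counts gaps below the largest bead
  have hcore : abacusCore (2*n) a 0 = Nat.card {g : ℤ | IsGap (2*n) a g ∧ g < f is} := by
    have hset : {g : ℤ | IsGap (2*n) a g ∧ ∃ b : ℤ, IsBead (2*n) a b ∧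
        Nat.card {b' : ℤ | IsBead (2*n) a b' ∧ b < b'} = 0 ∧ g < b}
        = {g : ℤ | IsGap (2*n) a g ∧ g < f is} := by
      ext g
      simp only [Set.mem_setOf_eq]
      constructor
      · rintro ⟨hg, b, hb, hc0, hgb⟩
        refine ⟨hg, ?_⟩
        rcases lt_or_eq_of_le (hbead_le b hb) with hlt | heq
        · exfalso
          have hfin : {b' : ℤ | IsBead (2*n) a b' ∧ b < b'}.Finite :=
            (Set.finite_Ioc b (f is)).subset
              (fun x hx => Set.mem_Ioc.mpr ⟨hx.2, hbead_le x hx.1⟩)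
          haveI := hfin.to_subtype
          haveI : Nonempty {b' : ℤ | IsBead (2*n) a b' ∧ b < b'} :=
            ⟨⟨f is, hBbead, hlt⟩⟩
          have hpos := Nat.card_pos (α := {b' : ℤ | IsBead (2*n) a b' ∧ b < b'})
          omega
        · rw [← heq]; exact hgb
      · rintro ⟨hg, hlt⟩
        refine ⟨hg, f is, hBbead, ?_, hlt⟩
        have he : {b' : ℤ | IsBead (2*n) a b' ∧ f is < b'} = ∅ := by
          ext x
          simp only [Set.mem_setOf_eq, Set.mem_empty_iff_false, iff_false, not_and, not_lt]
          exact fun hx => hbead_le x hx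
        rw [he]
        simp
    show Nat.card _ = _
    rw [hset]
  -- step 2: count the gaps below f is
  set cnt : Fin (2*n) → ℕ :=
    fun j => (a is - a j - (if is.val < j.val then 1 else 0)).toNat with hcnt
  set G : Finset ℤ := Finset.univ.biUnion
    (fun j : Fin (2*n) => (Finset.range (cnt j)).image
      (fun t : ℕ => (((2*n:ℕ):ℤ)+1) * (a j + 1 + t) + ((j:ℤ)+1))) with hG
  have hGmem : ∀ g : ℤ, g ∈ G ↔ ∃ j : Fin (2*n), ∃ t : ℕ, t < cnt j ∧
      g = (((2*n:ℕ):ℤ)+1) * (a j + 1 + t) + ((j:ℤ)+1) := by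
    intro g
    simp only [hG, Finset.mem_biUnion, Finset.mem_univ, true_and, Finset.mem_image,
      Finset.mem_range]
    constructor
    · rintro ⟨j, t, ht, rfl⟩; exact ⟨j, t, ht, rfl⟩
    · rintro ⟨j, t, ht, rfl⟩; exact ⟨j, t, ht, rfl⟩
  have hsetG : {g : ℤ | IsGap (2*n) a g ∧ g < f is} = ↑G := by
    ext g
    simp only [Set.mem_setOf_eq, Finset.mem_coe]
    rw [hGmem]
    constructor
    · rintro ⟨hg, hlt⟩
      obtain ⟨j, m, hm, rfl⟩ := (gap_iff a _).1 hg
      simp only [hf] at hlt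
      have hjlt : ((j:ℕ):ℤ) < ((2*n:ℕ):ℤ) := by exact_mod_cast j.isLt
      have hj0 : (0:ℤ) ≤ ((j:ℕ):ℤ) := by positivity
      have hislt : ((is:ℕ):ℤ) < ((2*n:ℕ):ℤ) := by exact_mod_cast is.isLt
      have his0 : (0:ℤ) ≤ ((is:ℕ):ℤ) := by positivity
      rcases lt_trichotomy j.val is.val with hcase | hcase | hcase
      · -- j before is : m ≤ a is
        have hml : m ≤ a is := by
          by_contra hmle
          push_neg at hmle
          have h1 : a is + 1 ≤ m := hmle
          nlinarith [mul_le_mul_of_nonneg_left h1 hRpos.le]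
        refine ⟨j, (m - a j - 1).toNat, ?_, ?_⟩
        · have hc0 : cnt j = (a is - a j).toNat := by
            simp only [hcnt]
            rw [if_neg (by omega)]
            norm_num
          rw [hc0]
          have : m - a j - 1 < a is - a j := by linarith
          omega
        · have : ((m - a j - 1).toNat : ℤ) = m - a j - 1 :=
            Int.toNat_of_nonneg (by linarith)
          rw [this]; ring
      · -- j = is : impossible
        exfalso
        have hji : j = is := Fin.ext hcase
        subst hji
        have : (((2*n:ℕ):ℤ)+1) * m < (((2*n:ℕ):ℤ)+1) * a j := by linarith
        have := lt_of_mul_lt_mul_left this hRpos.le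
        linarith
      · -- j after is : m ≤ a is - 1
        have hml : m ≤ a is - 1 := by
          by_contra hmle
          push_neg at hmle
          have h1 : a is ≤ m := by linarith
          nlinarith [mul_le_mul_of_nonneg_left h1 hRpos.le]
        refine ⟨j, (m - a j - 1).toNat, ?_, ?_⟩
        · have hc0 : cnt j = (a is - a j - 1).toNat := by
            simp only [hcnt]
            rw [if_pos (by omega)]
          rw [hc0]
          have : m - a j - 1 < a is - a j - 1 := by linarith
          omega
        · have : ((m - a j - 1).toNat : ℤ) = m - a j - 1 :=
            Int.toNat_of_nonneg (by linarith)
          rw [this]; ring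
    · rintro ⟨j, t, ht, rfl⟩
      have hjlt : ((j:ℕ):ℤ) < ((2*n:ℕ):ℤ) := by exact_mod_cast j.isLt
      have hj0 : (0:ℤ) ≤ ((j:ℕ):ℤ) := by positivity
      have hislt : ((is:ℕ):ℤ) < ((2*n:ℕ):ℤ) := by exact_mod_cast is.isLt
      have his0 : (0:ℤ) ≤ ((is:ℕ):ℤ) := by positivity
      have ht0 : (0:ℤ) ≤ (t:ℤ) := by positivity
      constructor
      · exact (gap_iff a _).2 ⟨j, a j + 1 + t, by linarith, rfl⟩
      · simp only [hf]
        by_cases hcase : is.val < j.val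
        · have hcz : cnt j = (a is - a j - 1).toNat := by
            simp only [hcnt]; rw [if_pos hcase]
          rw [hcz] at ht
          have htz : (t:ℤ) < a is - a j - 1 := Int.lt_toNat.mp ht
          have hmle : a j + 1 + (t:ℤ) ≤ a is - 1 := by linarith
          have := mul_le_mul_of_nonneg_left hmle hRpos.le
          linarith
        · have hne : j ≠ is := by
            intro hji
            subst hji
            have hcz : cnt j = 0 := by
              simp only [hcnt]; rw [if_neg hcase]; norm_num
            omega
          have hjlt2 : (j:ℕ) < is.val := by
            rcases Nat.lt_or_ge j.val is.val with h | h
            · exact h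
            · exact absurd (Fin.ext (by omega : j.val = is.val)) hne
          have hcz : cnt j = (a is - a j).toNat := by
            simp only [hcnt]; rw [if_neg hcase]; norm_num
          rw [hcz] at ht
          have htz : (t:ℤ) < a is - a j := Int.lt_toNat.mp ht
          have hjlt3 : ((j:ℕ):ℤ) < ((is:ℕ):ℤ) := by exact_mod_cast hjlt2
          have hmle : a j + 1 + (t:ℤ) ≤ a is := by linarith
          have := mul_le_mul_of_nonneg_left hmle hRpos.le
          linarith
  -- step 2b: cardinality of G
  have hdisj : ∀ x ∈ (Finset.univ : Finset (Fin (2*n))), ∀ y ∈ Finset.univ, x ≠ y →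
      Disjoint ((Finset.range (cnt x)).image
          (fun t : ℕ => (((2*n:ℕ):ℤ)+1) * (a x + 1 + t) + ((x:ℤ)+1)))
        ((Finset.range (cnt y)).image
          (fun t : ℕ => (((2*n:ℕ):ℤ)+1) * (a y + 1 + t) + ((y:ℤ)+1))) := by
    intro x _ y _ hxy
    rw [Finset.disjoint_left]
    intro v hv1 hv2
    simp only [Finset.mem_image, Finset.mem_range] at hv1 hv2
    obtain ⟨t, _, ht⟩ := hv1
    obtain ⟨u, _, hu⟩ := hv2
    exact hxy (repr_uniq (ht.trans hu.symm)).1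
  have hcardG : G.card = ∑ j, cnt j := by
    rw [hG, Finset.card_biUnion hdisj]
    refine Finset.sum_congr rfl (fun j _ => ?_)
    rw [Finset.card_image_of_injective _ ?_, Finset.card_range]
    intro t u htu
    have htu' : (((2*n:ℕ):ℤ)+1) * (a j + 1 + t) + ((j:ℤ)+1)
        = (((2*n:ℕ):ℤ)+1) * (a j + 1 + u) + ((j:ℤ)+1) := htu
    have h1 : (((2*n:ℕ):ℤ)+1) * (a j + 1 + t) = (((2*n:ℕ):ℤ)+1) * (a j + 1 + u) := by
      linarith
    have h2 : a j + 1 + (t:ℤ) = a j + 1 + (u:ℤ) := mul_left_cancel₀ (ne_of_gt hRpos) h1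
    have : (t:ℤ) = (u:ℤ) := by linarith
    exact_mod_cast this
  have hNcard : Nat.card {g : ℤ | IsGap (2*n) a g ∧ g < f is} = ∑ j, cnt j := by
    rw [hsetG, Nat.card_coe_set_eq, Set.ncard_coe_finset, hcardG]
  -- step 3: evaluate the sum
  have hchi : ∀ j : Fin (2*n),
      ((cnt j : ℕ) : ℤ) = a is - a j - (if is.val < j.val then 1 else 0) := by
    intro j
    simp only [hcnt]
    by_cases h : is.val < j.val
    · rw [if_pos h]
      exact Int.toNat_of_nonneg (by have := hstrict j h; omega)
    · rw [if_neg h]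
      have hja : a j ≤ a is := hle j
      simp only [sub_zero]
      exact Int.toNat_of_nonneg (by omega)
  have hchisum : (∑ j : Fin (2*n), (if is.val < j.val then (1:ℤ) else 0))
      = ((2*n:ℕ):ℤ) - 1 - (is.val:ℤ) := by
    rw [Fin.sum_univ_eq_sum_range (fun i => if is.val < i then (1:ℤ) else 0)]
    rw [Finset.range_eq_Ico,
      ← Finset.sum_Ico_consecutive _ (Nat.zero_le (is.val+1)) (by omega : is.val+1 ≤ 2*n)]
    have e1 : ∑ i ∈ Finset.Ico 0 (is.val+1), (if is.val < i then (1:ℤ) else 0) = 0 :=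
      Finset.sum_eq_zero (fun i hi => by
        simp only [Finset.mem_Ico] at hi
        rw [if_neg (by omega)])
    have e2 : ∑ i ∈ Finset.Ico (is.val+1) (2*n), (if is.val < i then (1:ℤ) else 0)
        = ((2*n - (is.val+1) : ℕ) : ℤ) := by
      rw [Finset.sum_congr rfl (fun i hi => by
        simp only [Finset.mem_Ico] at hi
        rw [if_pos (by omega)])]
      rw [Finset.sum_const, Nat.card_Ico]
      simp
    rw [e1, e2]
    have hlt := is.isLt
    omega
  have hS : ((∑ j, cnt j : ℕ) : ℤ)
      = ((2*n:ℕ):ℤ) * a is + ((is.val:ℤ) + 1) - ((2*n:ℕ):ℤ) := by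
    rw [Nat.cast_sum]
    rw [Finset.sum_congr rfl (fun j _ => hchi j)]
    rw [Finset.sum_sub_distrib, Finset.sum_sub_distrib, Finset.sum_const, Finset.card_univ,
      Fintype.card_fin, hsum, hchisum]
    simp only [nsmul_eq_mul]
    push_cast
    ring
  -- step 4: number theory for k, c, ℓ1, ℓ2
  have hkmod : k % (2*n) = ℓ2 := by
    have h := h2m
    rw [Nat.ModEq] at h
    rw [← h, Nat.mod_eq_of_lt (by omega : ℓ2 < 2*n)]
  obtain ⟨q, hq⟩ : ∃ q, k = 2*n*q + ℓ2 :=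
    ⟨k/(2*n), by rw [← hkmod]; exact (Nat.div_add_mod k (2*n)).symm⟩
  have hcq : (k + 2*n - 1)/(2*n) = q + 1 := by
    have e2 : k - 1 = 2*n*q + (ℓ2 - 1) := by rw [hq, Nat.add_sub_assoc h21]
    have e1 : k + 2*n - 1 = (k - 1) + 2*n := by omega
    rw [e1, Nat.add_div_right _ hr0, e2, Nat.mul_add_div hr0,
      Nat.div_eq_of_lt (by omega : ℓ2 - 1 < 2*n)]
  have hcval : c = (q:ℤ) + 1 := by rw [hc, hcq]; push_cast; ring
  have hc1' : (1:ℤ) ≤ c := by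
    rw [hcval]
    have : (0:ℤ) ≤ (q:ℤ) := by positivity
    linarith
  have hl12 : ℓ1 = ℓ2 := by
    have e1 : ℓ1 % n = ℓ2 % n := by
      have d1 : ℓ1 % n = k % n := h1m
      have d2 : k % n = ℓ2 % n := by
        have hdvd : n ∣ 2*n := ⟨2, by ring⟩
        have hmm := Nat.mod_mod_of_dvd k hdvd
        rw [← hmm, hkmod]
      rw [d1, d2]
    rcases lt_or_eq_of_le h12 with h | h
    · rcases lt_or_eq_of_le h22 with h' | h'
      · rwa [Nat.mod_eq_of_lt h, Nat.mod_eq_of_lt h'] at e1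
      · rw [h', Nat.mod_self, Nat.mod_eq_of_lt h] at e1
        omega
    · rcases lt_or_eq_of_le h22 with h' | h'
      · rw [h, Nat.mod_self, Nat.mod_eq_of_lt h'] at e1
        omega
      · rw [h, h']
  have hkz : (k:ℤ) = ((2*n:ℕ):ℤ) * (c - 1) + (ℓ1:ℤ) := by
    rw [hcval, hl12, hq]; push_cast; ring
  -- step 5: middle equivalence
  have hislt : ((is.val:ℕ):ℤ) < ((2*n:ℕ):ℤ) := by exact_mod_cast is.isLt
  have his0 : (0:ℤ) ≤ (is.val:ℤ) := by positivity
  have hl1a : (1:ℤ) ≤ (ℓ1:ℤ) := by exact_mod_cast h11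
  have hl1b : (ℓ1:ℤ) ≤ (n:ℤ) := by exact_mod_cast h12
  have hn2 : (2:ℤ) ≤ (n:ℤ) := by exact_mod_cast hn
  have h2n : ((2*n:ℕ):ℤ) = 2*(n:ℤ) := by push_cast; ring
  have h2npos : (0:ℤ) < ((2*n:ℕ):ℤ) := by rw [h2n]; linarith
  have hmid : (∑ j, cnt j) = k ↔ (a is = c ∧ is.val = ℓ1 - 1) := by
    constructor
    · intro h
      have hz : ((∑ j, cnt j : ℕ):ℤ) = (k:ℤ) := by exact_mod_cast h
      rw [hS, hkz] at hz
      have hd : a is = c := by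
        by_contra hd0
        rcases lt_or_gt_of_ne hd0 with hlt | hgt
        · have h1 : a is ≤ c - 1 := by omega
          have h2 := mul_le_mul_of_nonneg_left h1 h2npos.le
          linarith
        · have h1 : c ≤ a is - 1 := by omega
          have h2 := mul_le_mul_of_nonneg_left h1 h2npos.le
          linarith
      refine ⟨hd, ?_⟩
      rw [hd] at hz
      have hx : (is.val:ℤ) + 1 = (ℓ1:ℤ) := by linarith
      omega
    · rintro ⟨h1, h2⟩
      have hz : ((∑ j, cnt j : ℕ):ℤ) = (k:ℤ) := by
        rw [hS, hkz, h1]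
        have hx : (is.val:ℤ) = (ℓ1:ℤ) - 1 := by omega
        rw [hx]; ring
      exact_mod_cast hz
  -- step 6: final equivalence
  have hl1n : ℓ1 - 1 < 2*n := by omega
  have haget : ∀ (i : ℕ) (h : i < 2*n), aget (2*n) a i = a ⟨i, h⟩ := fun i h => dif_pos h
  rw [hcore, hNcard, hmid]
  constructor
  · rintro ⟨h1, h2⟩
    refine ⟨?_, ?_, ?_⟩
    · rw [haget _ hl1n]
      have he : (⟨ℓ1-1, hl1n⟩ : Fin (2*n)) = is := Fin.ext h2.symm
      rw [he, h1]
    · intro i hi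
      have hilt : i < 2*n := by omega
      rw [haget _ hilt]
      constructor
      · have hrevb := hbal ⟨i, hilt⟩
        have hrv : ((⟨i, hilt⟩ : Fin (2*n)).rev).val = 2*n - 1 - i := by
          rw [Fin.val_rev]
          show 2*n - (i+1) = 2*n - 1 - i
          omega
        have hgt : is.val < ((⟨i, hilt⟩ : Fin (2*n)).rev).val := by rw [hrv]; omega
        have hlt2 := hstrict _ hgt
        rw [h1] at hlt2
        linarith
      · have hlt2 := hle ⟨i, hilt⟩
        rw [h1] at hlt2
        exact hlt2
    · intro i hi1 hi2
      have hilt : i < 2*n := by omega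
      rw [haget _ hilt]
      constructor
      · have hrevb := hbal ⟨i, hilt⟩
        have hrv : ((⟨i, hilt⟩ : Fin (2*n)).rev).val = 2*n - 1 - i := by
          rw [Fin.val_rev]
          show 2*n - (i+1) = 2*n - 1 - i
          omega
        have hgt : is.val < ((⟨i, hilt⟩ : Fin (2*n)).rev).val := by rw [hrv]; omega
        have hlt2 := hstrict _ hgt
        rw [h1] at hlt2
        linarith
      · have hgt : is.val < i := by omega
        have hlt2 := hstrict ⟨i, hilt⟩ hgt
        rw [h1] at hlt2
        exact hlt2
  · rintro ⟨hA, hB, hC⟩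
    set i0 : Fin (2*n) := ⟨ℓ1-1, hl1n⟩ with hi0
    rw [haget _ hl1n] at hA
    have hi0cast : ((i0:ℕ):ℤ) = (ℓ1:ℤ) - 1 := by
      simp only [hi0]
      omega
    have haget' : ∀ j : Fin (2*n), aget (2*n) a j.val = a j := by
      intro j
      rw [haget _ j.isLt]
    have hbound : ∀ j : Fin (2*n), j ≠ i0 → f j < f i0 := by
      intro j hj
      have hjlt : ((j:ℕ):ℤ) < ((2*n:ℕ):ℤ) := by exact_mod_cast j.isLt
      have hj0 : (0:ℤ) ≤ ((j:ℕ):ℤ) := by positivity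
      simp only [hf]
      rw [hA, hi0cast]
      have hstep : a j ≤ c - 1 ∨ (a j ≤ c ∧ ((j:ℕ):ℤ) < (ℓ1:ℤ) - 1) := by
        rcases Nat.lt_or_ge j.val n with hjn | hjn
        · rcases Nat.lt_trichotomy j.val (ℓ1-1) with h | h | h
          · right
            have hx := (hB j.val h).2
            rw [haget' j] at hx
            exact ⟨hx, by omega⟩
          · exact absurd (Fin.ext h : j = i0) hj
          · left
            have hx := (hC j.val (by omega) hjn).2
            rw [haget' j] at hx
            omega
        · left
          have hrv : (j.rev).val = 2*n - 1 - j.val := by rw [Fin.val_rev]; omega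
          have hrevlt : j.rev.val < n := by omega
          have hbalj := hbal j
          rcases Nat.lt_trichotomy (j.rev.val) (ℓ1-1) with h | h | h
          · have hx := (hB _ h).1
            rw [haget' j.rev] at hx
            omega
          · have hx : a j.rev = c := by
              rw [show j.rev = i0 from Fin.ext h, hA]
            omega
          · have hx := (hC _ (by omega) hrevlt).1
            rw [haget' j.rev] at hx
            omega
      rcases hstep with hcase | ⟨hc1, hc2⟩
      · have hmul := mul_le_mul_of_nonneg_left hcase hRpos.le
        linarith
      · have hmul := mul_le_mul_of_nonneg_left hc1 hRpos.le
        linarith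
    have hfeq : f i0 = f is := by
      refine le_antisymm (hmax i0) ?_
      rcases eq_or_ne is i0 with h | h
      · rw [h]
      · exact (hbound is h).le
    simp only [hf] at hfeq
    obtain ⟨hfin, hm⟩ := repr_uniq (j := i0) (j' := is) hfeq
    constructor
    · rw [← hfin, hA]
    · rw [← hfin]
end

section
/- In the affine hyperplane arrangement of type C_n, the projection π(v) = Σ_{j≠ℓ} ⟨v,ε_j⟩ε_j + ⌈k/(2n)⌉ε_ℓ of ℝ^n onto the hyperplane H = {v : ⟨v,ε_ℓ⟩ = ⌈k/(2n)⌉}, followed by the identification of H with ℝ^{n−1} via the basis {ε_j : j ≠ ℓ}, maps every alcove of the type C_n affine arrangement to an alcove of the type C_{n−1} affine arrangement. -/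
/-! The affine hyperplane arrangement of type `Cₙ` in `ℝⁿ = Fin n → ℝ`. -/

noncomputable def dotp (n : ℕ) (x y : Fin n → ℝ) : ℝ := ∑ i, x i * y i

def stdBasis (n : ℕ) (i : Fin n) : Fin n → ℝ := fun j => if j = i then 1 else 0

/-- The positive roots of type `Cₙ`: `2εᵢ` and `εᵢ ± εⱼ` for `i < j`. -/
def PosRoot (n : ℕ) : Set (Fin n → ℝ) :=
  {α | (∃ i, α = (2 : ℝ) • stdBasis n i) ∨
       (∃ i j : Fin n, i < j ∧ (α = stdBasis n i + stdBasis n j ∨ α = stdBasis n i - stdBasis n j))}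

/-- The complement of the affine arrangement `{x : (x, α) = m}`, `α` a positive root, `m ∈ ℤ`. -/
def ArrComp (n : ℕ) : Set (Fin n → ℝ) :=
  {x | ∀ α ∈ PosRoot n, ∀ m : ℤ, dotp n x α ≠ (m : ℝ)}

/-- An alcove is a connected component of the complement of the arrangement. -/
def IsAlcove (n : ℕ) (A : Set (Fin n → ℝ)) : Prop :=
  ∃ x ∈ ArrComp n, A = connectedComponentIn (ArrComp n) x

/-- The translate by `p` of the fundamental region (the closed cube of side 1 around `p`). -/
def cube (n : ℕ) (p : Fin n → ℝ) : Set (Fin n → ℝ) := {x | ∀ i, |x i - p i| ≤ 1/2}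

/-- The fundamental alcove: `0 < (x, α) < 1` for every positive root `α`. -/
def FundAlcove (n : ℕ) : Set (Fin n → ℝ) :=
  {x | ∀ α ∈ PosRoot n, 0 < dotp n x α ∧ dotp n x α < 1}

/-- The hyperplane `{x : (x, α) = m}` separates `A` and `B`. -/
def Separates (n : ℕ) (α : Fin n → ℝ) (m : ℤ) (A B : Set (Fin n → ℝ)) : Prop :=
  ((∀ x ∈ A, dotp n x α < (m : ℝ)) ∧ (∀ x ∈ B, (m : ℝ) < dotp n x α)) ∨
  ((∀ x ∈ B, dotp n x α < (m : ℝ)) ∧ (∀ x ∈ A, (m : ℝ) < dotp n x α))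

/-- The number of arrangement hyperplanes separating `A` from `B`. -/
noncomputable def sepCount (n : ℕ) (A B : Set (Fin n → ℝ)) : ℕ :=
  Nat.card {q : (Fin n → ℝ) × ℤ | q.1 ∈ PosRoot n ∧ Separates n q.1 q.2 A B}

def rget (n : ℕ) (x : Fin n → ℝ) (i : ℕ) : ℝ := if h : i < n then x ⟨i, h⟩ else 0

/-- Orthogonal projection onto the hyperplane `{v : v (ℓ-1) = c}` (1-indexed coordinate `ℓ`). -/
def piMap (n : ℕ) (ℓ : ℕ) (c : ℝ) (x : Fin n → ℝ) : Fin n → ℝ :=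
  fun j => if j.val = ℓ - 1 then c else x j

/-- Identification of the hyperplane with `ℝⁿ⁻¹` via the basis `{εⱼ : j ≠ ℓ}`:
delete the (1-indexed) `ℓ`-th coordinate. -/
def delCoordR (n : ℕ) (ℓ : ℕ) (x : Fin n → ℝ) : Fin (n-1) → ℝ :=
  fun t => rget n x (if t.val < ℓ - 1 then t.val else t.val + 1)

/-- Points of the open chain region `1/2 > x₀ > x₁ > ⋯ > x_{n-1} > 0`. -/
def ChainSet (n : ℕ) : Set (Fin n → ℝ) :=
  {x | rget n x 0 < 1/2 ∧ (∀ i j : Fin n, i < j → x j < x i) ∧ 0 < rget n x (n-1)}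

/-!
Off the arrangement, the hyperplanes `2xᵢ ∈ ℤ` fix the half-integer strip of every coordinate,
and the hyperplanes `xᵢ ± xⱼ ∈ ℤ` are exactly where two coordinates are at the same distance
from `ℤ`. So the alcove of a generic point `x` is the set of points in the same strips whose
coordinates have their distances to `ℤ` in the same order as those of `x`. On a strip the distance
to `ℤ` is affine, so these sets are open and convex; as they partition the complement, they are
its connected components. Deleting one coordinate maps such a set onto the corresponding set for
the projected point: a value of the deleted coordinate can always be placed in the prescribed slot
of the order.
-/

open Function Set

namespace TypeCAlcove

noncomputable def intDist (z : ℝ) : ℝ := min (Int.fract z) (1 - Int.fract z)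

lemma intDist_add_intCast (z : ℝ) (m : ℤ) : intDist (z + m) = intDist z := by
  rw [intDist, intDist, Int.fract_add_intCast]

lemma intDist_neg (z : ℝ) : intDist (-z) = intDist z := by
  rcases eq_or_ne (Int.fract z) 0 with h | h
  · rw [intDist, intDist, h, Int.fract_neg_eq_zero.2 h]
  · rw [intDist, intDist, Int.fract_neg h, sub_sub_cancel, min_comm]

lemma intDist_eq_intDist_iff {z w : ℝ} :
    intDist z = intDist w ↔ ∃ m : ℤ, z - w = m ∨ z + w = m := by
  constructor
  · intro h
    rw [intDist, intDist, ← Int.self_sub_floor, ← Int.self_sub_floor] at h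
    rcases min_choice (z - ⌊z⌋) (1 - (z - ⌊z⌋)) with hz | hz <;>
      rcases min_choice (w - ⌊w⌋) (1 - (w - ⌊w⌋)) with hw | hw <;> rw [hz, hw] at h
    exacts [⟨⌊z⌋ - ⌊w⌋, Or.inl (by push_cast; linarith)⟩,
      ⟨⌊z⌋ + ⌊w⌋ + 1, Or.inr (by push_cast; linarith)⟩,
      ⟨⌊z⌋ + ⌊w⌋ + 1, Or.inr (by push_cast; linarith)⟩,
      ⟨⌊z⌋ - ⌊w⌋, Or.inl (by push_cast; linarith)⟩]
  · rintro ⟨m, h | h⟩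
    · rw [show z = w + m by linarith, intDist_add_intCast]
    · rw [show z = -w + m by linarith, intDist_add_intCast, intDist_neg]

/-- The affine function that agrees with `intDist` on the strip `b < 2z < b + 1`. -/
noncomputable def stripDist (b : ℤ) (z : ℝ) : ℝ := if Even b then z - b / 2 else (b + 1) / 2 - z

lemma intDist_eq_stripDist {b : ℤ} {z : ℝ} (h₁ : (b : ℝ) < 2 * z) (h₂ : 2 * z < b + 1) :
    intDist z = stripDist b z := by
  obtain ⟨a, rfl | rfl⟩ := Int.even_or_odd' b <;> push_cast at h₁ h₂ <;>
    have hfloor : ⌊z⌋ = a := Int.floor_eq_iff.2 ⟨by linarith, by linarith⟩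
  · rw [intDist, stripDist, if_pos (even_two_mul a), ← Int.self_sub_floor, hfloor,
      min_eq_left (by linarith)]
    push_cast; ring
  · rw [intDist, stripDist, if_neg (Int.not_even_two_mul_add_one a), ← Int.self_sub_floor,
      hfloor, min_eq_right (by linarith)]
    push_cast; ring

lemma stripDist_mem_Ioo {b : ℤ} {z : ℝ} (h₁ : (b : ℝ) < 2 * z) (h₂ : 2 * z < b + 1) :
    stripDist b z ∈ Ioo (0 : ℝ) (1 / 2) := by
  unfold stripDist
  split_ifs <;> constructor <;> linarith

lemma exists_stripDist_eq (b : ℤ) {τ : ℝ} (hτ : τ ∈ Ioo (0 : ℝ) (1 / 2)) :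
    ∃ z : ℝ, ((b : ℝ) < 2 * z ∧ 2 * z < b + 1) ∧ stripDist b z = τ := by
  obtain ⟨h₀, h₁⟩ := hτ
  by_cases hb : Even b
  · exact ⟨b / 2 + τ, ⟨by linarith, by linarith⟩, by rw [stripDist, if_pos hb]; ring⟩
  · exact ⟨(b + 1) / 2 - τ, ⟨by linarith, by linarith⟩, by rw [stripDist, if_neg hb]; ring⟩

lemma stripDist_combo (b : ℤ) {p q : ℝ} (hpq : p + q = 1) (z w : ℝ) :
    stripDist b (p * z + q * w) = p * stripDist b z + q * stripDist b w := by
  obtain rfl : q = 1 - p := by linarith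
  unfold stripDist
  split_ifs <;> ring

@[fun_prop]
lemma continuous_stripDist (b : ℤ) : Continuous (stripDist b) := by
  unfold stripDist
  split_ifs <;> fun_prop

lemma combo_lt_combo {p q a b a' b' : ℝ} (hp : 0 ≤ p) (hq : 0 ≤ q) (hpq : p + q = 1)
    (ha : a < a') (hb : b < b') : p * a + q * b < p * a' + q * b' := by
  have := convex_Ioi (0 : ℝ) (sub_pos.2 ha) (sub_pos.2 hb) hp hq hpq
  simp only [smul_eq_mul, mem_Ioi] at this
  linarith

lemma floor_lt_and_lt_floor_add_one {r : ℝ} (h : ∀ m : ℤ, r ≠ m) :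
    (⌊r⌋ : ℝ) < r ∧ r < ⌊r⌋ + 1 :=
  ⟨(Int.floor_le r).lt_of_ne (h _).symm, Int.lt_floor_add_one r⟩

section Alcoves

variable {ι κ : Type*}

/-- `x` lies on no hyperplane `2xᵢ = m`, `xᵢ ± xⱼ = m` (`i ≠ j`). -/
def IsGeneric (x : ι → ℝ) : Prop :=
  (∀ i (m : ℤ), 2 * x i ≠ m) ∧ Injective fun i => intDist (x i)

lemma IsGeneric.comp {x : ι → ℝ} (hx : IsGeneric x) {e : κ → ι} (he : Injective e) :
    IsGeneric (x ∘ e) :=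
  ⟨fun t => hx.1 (e t), hx.2.comp he⟩

def alcoveOf (x : ι → ℝ) : Set (ι → ℝ) :=
  {y | (∀ i, (⌊2 * x i⌋ : ℝ) < 2 * y i ∧ 2 * y i < ⌊2 * x i⌋ + 1) ∧
    ∀ i j, intDist (x i) < intDist (x j) →
      stripDist ⌊2 * x i⌋ (y i) < stripDist ⌊2 * x j⌋ (y j)}

lemma intDist_lt_of_mem_alcoveOf {x y : ι → ℝ} (hy : y ∈ alcoveOf x) {i j : ι}
    (h : intDist (x i) < intDist (x j)) : intDist (y i) < intDist (y j) := by
  rw [intDist_eq_stripDist (hy.1 i).1 (hy.1 i).2, intDist_eq_stripDist (hy.1 j).1 (hy.1 j).2]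
  exact hy.2 i j h

lemma intDist_lt_iff_of_mem_alcoveOf {x y : ι → ℝ} (hx : IsGeneric x) (hy : y ∈ alcoveOf x)
    (i j : ι) : intDist (y i) < intDist (y j) ↔ intDist (x i) < intDist (x j) := by
  refine ⟨fun h => ?_, intDist_lt_of_mem_alcoveOf hy⟩
  rcases lt_trichotomy (intDist (x i)) (intDist (x j)) with hlt | heq | hgt
  · exact hlt
  · cases hx.2 heq
    exact absurd h (lt_irrefl _)
  · exact absurd h (intDist_lt_of_mem_alcoveOf hy hgt).asymm

lemma mem_alcoveOf_self {x : ι → ℝ} (hx : IsGeneric x) : x ∈ alcoveOf x := by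
  have hstrip i := floor_lt_and_lt_floor_add_one (hx.1 i)
  refine ⟨hstrip, fun i j h => ?_⟩
  rwa [← intDist_eq_stripDist (hstrip i).1 (hstrip i).2,
    ← intDist_eq_stripDist (hstrip j).1 (hstrip j).2]

lemma alcoveOf_subset {x : ι → ℝ} (hx : IsGeneric x) : alcoveOf x ⊆ {y | IsGeneric y} := by
  intro y hy
  refine ⟨fun i m hm => ?_, fun i j hij => by_contra fun hne => ?_⟩
  · have h₁ := (hy.1 i).1
    have h₂ := (hy.1 i).2
    rw [hm] at h₁ h₂
    norm_cast at h₁ h₂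
    omega
  · rcases (hx.2.ne hne).lt_or_gt with h | h
    · exact (intDist_lt_of_mem_alcoveOf hy h).ne hij
    · exact (intDist_lt_of_mem_alcoveOf hy h).ne' hij

lemma alcoveOf_eq_of_mem {x y : ι → ℝ} (hx : IsGeneric x) (hy : y ∈ alcoveOf x) :
    alcoveOf y = alcoveOf x := by
  have hfloor i : ⌊2 * y i⌋ = ⌊2 * x i⌋ :=
    Int.floor_eq_iff.2 ⟨(hy.1 i).1.le, (hy.1 i).2⟩
  simp only [alcoveOf, hfloor, intDist_lt_iff_of_mem_alcoveOf hx hy]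

lemma isOpen_alcoveOf [Finite ι] (x : ι → ℝ) : IsOpen (alcoveOf x) := by
  simp only [alcoveOf, ofPred_and, ofPred_forall]
  exact (isOpen_iInter_of_finite fun i => (isOpen_lt (by fun_prop) (by fun_prop)).inter
      (isOpen_lt (by fun_prop) (by fun_prop))).inter
    (isOpen_iInter_of_finite fun i => isOpen_iInter_of_finite fun j =>
      isOpen_iInter_of_finite fun _ => isOpen_lt (by fun_prop) (by fun_prop))

lemma convex_alcoveOf (x : ι → ℝ) : Convex ℝ (alcoveOf x) := by
  intro y hy z hz p q hp hq hpq
  have happly i : (p • y + q • z) i = p * y i + q * z i := rfl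
  refine ⟨fun i => ?_, fun i j h => ?_⟩
  · have h₁ := hy.1 i
    have h₂ := hz.1 i
    have hconv := convex_Ioo (⌊2 * x i⌋ / 2 : ℝ) ((⌊2 * x i⌋ + 1) / 2)
      (x := y i) ⟨by linarith, by linarith⟩ (y := z i) ⟨by linarith, by linarith⟩ hp hq hpq
    simp only [smul_eq_mul, mem_Ioo] at hconv
    rw [happly]
    constructor <;> linarith
  · rw [happly, happly, stripDist_combo _ hpq, stripDist_combo _ hpq]
    exact combo_lt_combo hp hq hpq (hy.2 i j h) (hz.2 i j h)

theorem connectedComponentIn_eq_alcoveOf [Finite ι] {x : ι → ℝ} (hx : IsGeneric x) :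
    connectedComponentIn {y | IsGeneric y} x = alcoveOf x := by
  set G := {y : ι → ℝ | IsGeneric y}
  refine subset_antisymm ?_ ((convex_alcoveOf x).isPreconnected.subset_connectedComponentIn
    (mem_alcoveOf_self hx) (alcoveOf_subset hx))
  have hopen : IsOpen (G \ alcoveOf x) := by
    refine isOpen_iff_forall_mem_open.2 fun y ⟨hy, hyx⟩ =>
      ⟨alcoveOf y, fun z hz => ⟨alcoveOf_subset hy hz, fun hzx => hyx ?_⟩,
        isOpen_alcoveOf y, mem_alcoveOf_self hy⟩
    rw [← alcoveOf_eq_of_mem hx hzx, alcoveOf_eq_of_mem hy hz]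
    exact mem_alcoveOf_self hy
  exact isPreconnected_connectedComponentIn.subset_left_of_subset_union (isOpen_alcoveOf x)
    hopen disjoint_sdiff_right
    ((connectedComponentIn_subset _ _).trans (by rw [union_sdiff_self]; exact subset_union_right))
    ⟨x, mem_connectedComponentIn hx, mem_alcoveOf_self hx⟩

lemma exists_mem_Ioo_separating {α β : Type*} [LinearOrder α] [DenselyOrdered α]
    [LinearOrder β] [Finite κ] {a b : α} (hab : a < b) (key : κ → β) (v : κ → α)
    (hv : ∀ t, v t ∈ Ioo a b) (hmono : ∀ s t, key s < key t → v s < v t) (k : β) :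
    ∃ τ ∈ Ioo a b, (∀ t, key t < k → v t < τ) ∧ ∀ t, k < key t → τ < v t := by
  classical
  have := Fintype.ofFinite κ
  let L := insert a ((Finset.univ.filter fun t => key t < k).image v)
  let U := insert b ((Finset.univ.filter fun t => k < key t).image v)
  have hLU : ∀ l ∈ L, ∀ u ∈ U, l < u := by
    intro l hl u hu
    simp only [L, U, Finset.mem_insert, Finset.mem_image, Finset.mem_filter, Finset.mem_univ,
      true_and] at hl hu
    rcases hl with rfl | ⟨s, hs, rfl⟩ <;> rcases hu with rfl | ⟨t, ht, rfl⟩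
    exacts [hab, (hv t).1, (hv s).2, hmono s t (hs.trans ht)]
  obtain ⟨τ, hLτ, hτU⟩ := exists_between <| (L.max'_lt_iff (Finset.insert_nonempty _ _)).2 fun l hl =>
    (U.lt_min'_iff (Finset.insert_nonempty _ _)).2 (hLU l hl)
  have hL x (hx : x ∈ L) : x < τ := (L.le_max' x hx).trans_lt hLτ
  have hU x (hx : x ∈ U) : τ < x := hτU.trans_le (U.min'_le x hx)
  refine ⟨τ, ⟨hL a (Finset.mem_insert_self _ _), hU b (Finset.mem_insert_self _ _)⟩,
    fun t ht => hL _ ?_, fun t ht => hU _ ?_⟩ <;>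
  exact Finset.mem_insert_of_mem (Finset.mem_image_of_mem _ (by simpa using ht))

theorem image_comp_alcoveOf [Finite κ] {e : κ → ι} (he : Injective e)
    (hcompl : (range e)ᶜ.Subsingleton) (x : ι → ℝ) :
    (· ∘ e) '' alcoveOf x = alcoveOf (x ∘ e) := by
  refine subset_antisymm (image_subset_iff.2 fun y hy => ⟨fun t => hy.1 (e t),
    fun s t h => hy.2 _ _ h⟩) fun w hw => ?_
  have hτ i := exists_mem_Ioo_separating (by norm_num : (0 : ℝ) < 1 / 2)
    (fun t => intDist (x (e t))) (fun t => stripDist ⌊2 * x (e t)⌋ (w t))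
    (fun t => stripDist_mem_Ioo (hw.1 t).1 (hw.1 t).2) hw.2 (intDist (x i))
  choose τ hτ hlt hgt using hτ
  choose z hz using fun i => exists_stripDist_eq ⌊2 * x i⌋ (hτ i)
  refine ⟨extend e w z, ⟨fun i => ?_, fun i j hij => ?_⟩, extend_comp he w z⟩
  · by_cases hi : i ∈ range e
    · obtain ⟨t, rfl⟩ := hi
      rw [he.extend_apply]
      exact hw.1 t
    · rw [extend_apply' _ _ _ hi]
      exact (hz i).1
  · by_cases hi : i ∈ range e <;> by_cases hj : j ∈ range e
    · obtain ⟨s, rfl⟩ := hi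
      obtain ⟨t, rfl⟩ := hj
      rw [he.extend_apply, he.extend_apply]
      exact hw.2 s t hij
    · obtain ⟨s, rfl⟩ := hi
      rw [he.extend_apply, extend_apply' _ _ _ hj, (hz j).2]
      exact hlt j s hij
    · obtain ⟨t, rfl⟩ := hj
      rw [he.extend_apply, extend_apply' _ _ _ hi, (hz i).2]
      exact hgt i t hij
    · cases hcompl hi hj
      exact absurd hij (lt_irrefl _)

end Alcoves

lemma dotp_stdBasis {n : ℕ} (x : Fin n → ℝ) (i : Fin n) : dotp n x (stdBasis n i) = x i := by
  simp [dotp, stdBasis]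

lemma dotp_two_smul_stdBasis {n : ℕ} (x : Fin n → ℝ) (i : Fin n) :
    dotp n x ((2 : ℝ) • stdBasis n i) = 2 * x i := by
  simp [dotp, stdBasis, mul_comm]

lemma dotp_add {n : ℕ} (x u v : Fin n → ℝ) : dotp n x (u + v) = dotp n x u + dotp n x v := by
  simp [dotp, mul_add, Finset.sum_add_distrib]

lemma dotp_sub {n : ℕ} (x u v : Fin n → ℝ) : dotp n x (u - v) = dotp n x u - dotp n x v := by
  simp [dotp, mul_sub, Finset.sum_sub_distrib]

theorem arrComp_eq (n : ℕ) : ArrComp n = {x | IsGeneric x} := by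
  ext x
  simp only [ArrComp, PosRoot, mem_ofPred_eq]
  constructor
  · intro hx
    refine ⟨fun i m => by simpa [dotp_two_smul_stdBasis] using hx _ (Or.inl ⟨i, rfl⟩) m,
      fun i j hij => by_contra fun hne => ?_⟩
    wlog hlt : i < j generalizing i j
    · exact this j i hij.symm (Ne.symm hne) ((Ne.symm hne).lt_of_le (not_lt.1 hlt))
    obtain ⟨m, hm | hm⟩ := intDist_eq_intDist_iff.1 hij
    · exact hx _ (Or.inr ⟨i, j, hlt, Or.inr rfl⟩) m (by rwa [dotp_sub, dotp_stdBasis, dotp_stdBasis])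
    · exact hx _ (Or.inr ⟨i, j, hlt, Or.inl rfl⟩) m (by rwa [dotp_add, dotp_stdBasis, dotp_stdBasis])
  · rintro ⟨h2, hinj⟩ α (⟨i, rfl⟩ | ⟨i, j, hlt, rfl | rfl⟩) m hm
    · exact h2 i m (by rwa [dotp_two_smul_stdBasis] at hm)
    · rw [dotp_add, dotp_stdBasis, dotp_stdBasis] at hm
      exact hlt.ne (hinj (intDist_eq_intDist_iff.2 ⟨m, Or.inr hm⟩))
    · rw [dotp_sub, dotp_stdBasis, dotp_stdBasis] at hm
      exact hlt.ne (hinj (intDist_eq_intDist_iff.2 ⟨m, Or.inl hm⟩))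

theorem isAlcove_iff {n : ℕ} {A : Set (Fin n → ℝ)} :
    IsAlcove n A ↔ ∃ x, IsGeneric x ∧ A = alcoveOf x := by
  simp only [IsAlcove, arrComp_eq]
  constructor
  · rintro ⟨x, hx, rfl⟩
    exact ⟨x, hx, connectedComponentIn_eq_alcoveOf hx⟩
  · rintro ⟨x, hx, rfl⟩
    exact ⟨x, hx, (connectedComponentIn_eq_alcoveOf hx).symm⟩

def skipIndex (n ℓ : ℕ) (t : Fin (n - 1)) : Fin n :=
  ⟨if t.val < ℓ - 1 then t.val else t.val + 1, by have := t.isLt; split <;> omega⟩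

lemma skipIndex_injective (n ℓ : ℕ) : Injective (skipIndex n ℓ) := by
  intro s t h
  simp only [skipIndex, Fin.mk.injEq] at h
  ext
  split_ifs at h <;> omega

lemma compl_range_skipIndex_subsingleton (n ℓ : ℕ) : (range (skipIndex n ℓ))ᶜ.Subsingleton := by
  suffices h : ∀ i : Fin n, i ∉ range (skipIndex n ℓ) → i.val = min (ℓ - 1) (n - 1) from
    fun i hi j hj => Fin.ext ((h i hi).trans (h j hj).symm)
  intro i hi
  by_contra hne
  rcases Nat.lt_or_gt_of_ne hne with h | h
  · exact hi ⟨⟨i, by omega⟩, Fin.ext (by simp only [skipIndex]; split_ifs <;> omega)⟩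
  · exact hi ⟨⟨i - 1, by omega⟩, Fin.ext (by simp only [skipIndex]; split_ifs <;> omega)⟩

lemma delCoordR_piMap (n ℓ : ℕ) (c : ℝ) (x : Fin n → ℝ) :
    delCoordR n ℓ (piMap n ℓ c x) = x ∘ skipIndex n ℓ := by
  ext t
  have hne : (skipIndex n ℓ t).val ≠ ℓ - 1 := by simp only [skipIndex]; split_ifs <;> omega
  show rget n (piMap n ℓ c x) (skipIndex n ℓ t) = x (skipIndex n ℓ t)
  rw [rget, dif_pos (skipIndex n ℓ t).isLt, Fin.eta, piMap, if_neg hne]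

end TypeCAlcove

theorem stmt8_general (n ℓ : ℕ) (c : ℝ) (A : Set (Fin n → ℝ)) (hA : IsAlcove n A) :
    IsAlcove (n-1) ((fun x => delCoordR n ℓ (piMap n ℓ c x)) '' A) := by
  open TypeCAlcove in
  obtain ⟨x, hx, rfl⟩ := isAlcove_iff.1 hA
  have hskip := skipIndex_injective n ℓ
  simp only [delCoordR_piMap]
  rw [image_comp_alcoveOf hskip (compl_range_skipIndex_subsingleton n ℓ)]
  exact isAlcove_iff.2 ⟨_, hx.comp hskip, rfl⟩

/-- The projection onto the hyperplane `{v : v_ℓ = ⌈k/2n⌉}`, followed by the identification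
of the hyperplane with `ℝⁿ⁻¹` via the basis `{εⱼ : j ≠ ℓ}`, maps every alcove of the type
`Cₙ` affine arrangement to an alcove of the type `C_{n-1}` affine arrangement. -/
theorem stmt8 (n k ℓ : ℕ) (hn : 2 ≤ n) (hk : 1 ≤ k) (h1 : 1 ≤ ℓ) (h2 : ℓ ≤ n)
    (c : ℝ) (hc : c = (((k + 2*n - 1)/(2*n) : ℕ) : ℝ))
    (A : Set (Fin n → ℝ)) (hA : IsAlcove n A) :
    IsAlcove (n-1) ((fun x => delCoordR n ℓ (piMap n ℓ c x)) '' A) :=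
  stmt8_general n ℓ c A hA
end

section
/- Let w be the minimal length coset representative of the affine Weyl group of type C_n modulo the finite Weyl group whose associated coroot lattice point is ⌈k/(2n)⌉ε_ℓ, where k = 2n(⌈k/(2n)⌉−1)+ℓ with 1 ≤ ℓ ≤ 2n (interpreting the coroot point appropriately when ℓ > n). Then the length of w equals k; equivalently, exactly k hyperplanes of the affine arrangement separate the fundamental alcove from the alcove of w. -/
/-
A hyperplane `(x, α) = m` can separate the fundamental alcove from an alcove through `y` only
if `m` lies strictly between `(0, 1)` and `(y, α)`; these levels form `walls n y`, an upper
bound. Conversely, on the cube around a coweight `p` the value `(x, α)` moves by at most `1`, so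
every hyperplane of `walls n p` separates the fundamental alcove from every alcove in the cube.
Shifting `p` slightly towards the fundamental alcove gives a point `p + u` with
`walls n (p + u) = walls n p` whose alcove lies in the cube, so the minimum is `#(walls n p)`,
a sum over the positive roots, in which for `p = t εᵢ` only the roots through `i` contribute.
-/

open Finset

section

variable {n : ℕ}

lemma dotp_eq_dotProduct (x y : Fin n → ℝ) : dotp n x y = x ⬝ᵥ y := rfl

lemma stdBasis_eq_single (i : Fin n) : stdBasis n i = Pi.single i 1 := by
  ext j; simp [stdBasis, Pi.single_apply]

lemma ite_val_eq_smul_stdBasis {i₀ : ℕ} (hi₀ : i₀ < n) (t : ℝ) :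
    (fun i : Fin n => if i.val = i₀ then t else 0) = t • stdBasis n ⟨i₀, hi₀⟩ := by
  ext i; simp [stdBasis, Fin.ext_iff]

@[simp] lemma dotp_two_smul_stdBasis (x : Fin n → ℝ) (i : Fin n) :
    dotp n x ((2 : ℝ) • stdBasis n i) = 2 * x i := by
  simp [dotp_eq_dotProduct, stdBasis_eq_single, mul_comm]

@[simp] lemma dotp_stdBasis_add_stdBasis (x : Fin n → ℝ) (i j : Fin n) :
    dotp n x (stdBasis n i + stdBasis n j) = x i + x j := by
  simp [dotp_eq_dotProduct, stdBasis_eq_single, dotProduct_add]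

@[simp] lemma dotp_stdBasis_sub_stdBasis (x : Fin n → ℝ) (i j : Fin n) :
    dotp n x (stdBasis n i - stdBasis n j) = x i - x j := by
  simp [dotp_eq_dotProduct, stdBasis_eq_single, dotProduct_sub]

lemma dotp_add_left (x y α : Fin n → ℝ) : dotp n (x + y) α = dotp n x α + dotp n y α :=
  add_dotProduct x y α

lemma continuous_dotp_left (α : Fin n → ℝ) : Continuous fun x : Fin n → ℝ => dotp n x α :=
  continuous_finsetSum _ fun i _ => (continuous_apply i).mul continuous_const

def ltPairs (n : ℕ) : Finset (Fin n × Fin n) := univ.filter fun q => q.1 < q.2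

noncomputable def posRoots (n : ℕ) : Finset (Fin n → ℝ) :=
  univ.image (fun i => (2 : ℝ) • stdBasis n i)
    ∪ (ltPairs n).image (fun q => stdBasis n q.1 + stdBasis n q.2)
    ∪ (ltPairs n).image (fun q => stdBasis n q.1 - stdBasis n q.2)

lemma coe_posRoots : (posRoots n : Set (Fin n → ℝ)) = PosRoot n := by
  ext α
  simp only [posRoots, ltPairs, coe_union, coe_image, coe_filter, Set.mem_union, Set.mem_image,
    Set.mem_ofPred_eq, mem_univ, true_and, PosRoot, Prod.exists]
  constructor
  · rintro ((⟨i, -, rfl⟩ | ⟨i, j, hij, rfl⟩) | ⟨i, j, hij, rfl⟩)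
    exacts [Or.inl ⟨i, rfl⟩, Or.inr ⟨i, j, hij, Or.inl rfl⟩, Or.inr ⟨i, j, hij, Or.inr rfl⟩]
  · rintro (⟨i, rfl⟩ | ⟨i, j, hij, rfl | rfl⟩)
    exacts [Or.inl (Or.inl ⟨i, by simp, rfl⟩), Or.inl (Or.inr ⟨i, j, hij, rfl⟩),
      Or.inr ⟨i, j, hij, rfl⟩]

lemma two_smul_stdBasis_injective :
    Function.Injective fun i : Fin n => (2 : ℝ) • stdBasis n i := by
  intro i j h
  have hi := congrFun h i
  simp only [stdBasis, Pi.smul_apply, smul_eq_mul] at hi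
  grind

lemma stdBasis_add_stdBasis_injOn :
    Set.InjOn (fun q : Fin n × Fin n => stdBasis n q.1 + stdBasis n q.2) (ltPairs n) := by
  rintro ⟨a, b⟩ hab ⟨u, v⟩ huv h
  simp only [ltPairs, coe_filter, mem_univ, true_and, Set.mem_ofPred_eq] at hab huv
  have h1 := congrFun h a; have h2 := congrFun h b; have h3 := congrFun h u
  simp only [stdBasis, Pi.add_apply] at h1 h2 h3
  grind

lemma stdBasis_sub_stdBasis_injOn :
    Set.InjOn (fun q : Fin n × Fin n => stdBasis n q.1 - stdBasis n q.2) (ltPairs n) := by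
  rintro ⟨a, b⟩ hab ⟨u, v⟩ huv h
  simp only [ltPairs, coe_filter, mem_univ, true_and, Set.mem_ofPred_eq] at hab huv
  have h1 := congrFun h a; have h2 := congrFun h b; have h3 := congrFun h u
  simp only [stdBasis, Pi.sub_apply] at h1 h2 h3
  grind

lemma two_smul_stdBasis_ne_add {i a b : Fin n} (hab : a < b) :
    (2 : ℝ) • stdBasis n i ≠ stdBasis n a + stdBasis n b := by
  intro h
  have h1 := congrFun h a; have h2 := congrFun h b
  simp only [stdBasis, Pi.smul_apply, smul_eq_mul, Pi.add_apply] at h1 h2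
  grind

lemma two_smul_stdBasis_ne_sub {i a b : Fin n} (hab : a < b) :
    (2 : ℝ) • stdBasis n i ≠ stdBasis n a - stdBasis n b := by
  intro h
  have h1 := congrFun h b
  simp only [stdBasis, Pi.smul_apply, smul_eq_mul, Pi.sub_apply] at h1
  grind

lemma stdBasis_add_ne_sub {a b u v : Fin n} (huv : u < v) :
    stdBasis n a + stdBasis n b ≠ stdBasis n u - stdBasis n v := by
  intro h
  have h1 := congrFun h v
  simp only [stdBasis, Pi.add_apply, Pi.sub_apply] at h1
  grind

lemma sum_posRoots {M : Type*} [AddCommMonoid M] (f : (Fin n → ℝ) → M) :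
    ∑ α ∈ posRoots n, f α = ∑ i, f ((2 : ℝ) • stdBasis n i)
      + ∑ q ∈ ltPairs n,
          (f (stdBasis n q.1 + stdBasis n q.2) + f (stdBasis n q.1 - stdBasis n q.2)) := by
  have hdisj₁ : Disjoint (univ.image fun i => (2 : ℝ) • stdBasis n i)
      ((ltPairs n).image fun q => stdBasis n q.1 + stdBasis n q.2) := by
    simp only [disjoint_left, mem_image, mem_univ, true_and, ltPairs, mem_filter]
    rintro _ ⟨i, rfl⟩ ⟨q, hq, h⟩
    exact two_smul_stdBasis_ne_add hq h.symm
  have hdisj₂ : Disjoint ((univ.image fun i => (2 : ℝ) • stdBasis n i)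
        ∪ (ltPairs n).image fun q => stdBasis n q.1 + stdBasis n q.2)
      ((ltPairs n).image fun q => stdBasis n q.1 - stdBasis n q.2) := by
    simp only [disjoint_left, mem_union, mem_image, mem_univ, true_and, ltPairs, mem_filter]
    rintro _ (⟨i, rfl⟩ | ⟨q, -, rfl⟩) ⟨q', hq', h⟩
    exacts [two_smul_stdBasis_ne_sub hq' h.symm, stdBasis_add_ne_sub hq' h.symm]
  rw [posRoots, sum_union hdisj₂, sum_union hdisj₁, sum_image two_smul_stdBasis_injective.injOn,
    sum_image stdBasis_add_stdBasis_injOn, sum_image stdBasis_sub_stdBasis_injOn,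
    sum_add_distrib, add_assoc]

noncomputable def wallLevels (d : ℝ) : Finset ℤ := Ico 1 ⌈d⌉ ∪ Ioc ⌊d⌋ 0

lemma mem_wallLevels {d : ℝ} {m : ℤ} :
    m ∈ wallLevels d ↔ (1 ≤ m ∧ (m : ℝ) < d) ∨ (d < m ∧ m ≤ 0) := by
  simp [wallLevels, Int.lt_ceil, Int.floor_lt]

lemma card_wallLevels_intCast (a : ℤ) : (#(wallLevels a) : ℤ) = if 0 < a then a - 1 else -a := by
  have hdisj : Disjoint (Ico 1 a) (Ioc a 0) := by
    simp only [disjoint_left, mem_Ico, mem_Ioc]; omega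
  rw [wallLevels, Int.ceil_intCast, Int.floor_intCast, card_union_of_disjoint hdisj, Int.card_Ico,
    Int.card_Ioc]
  split_ifs <;> omega

/-- `a + e` lies in the open unit interval with endpoint `a` on the side of `(0, 1)`. -/
def InwardOffset (a : ℤ) (e : ℝ) : Prop :=
  (0 < a ∧ -1 < e ∧ e < 0) ∨ (a ≤ 0 ∧ 0 < e ∧ e < 1)

namespace InwardOffset

variable {a : ℤ} {e : ℝ}

lemma floor_add (h : InwardOffset a e) : ⌊(a : ℝ) + e⌋ = if 0 < a then a - 1 else a := by
  rcases h with ⟨ha, he₁, he₂⟩ | ⟨ha, he₁, he₂⟩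
  · rw [if_pos ha, Int.floor_eq_iff]; push_cast; constructor <;> linarith
  · rw [if_neg (by omega), Int.floor_eq_iff]; constructor <;> linarith

lemma add_ne_intCast (h : InwardOffset a e) (m : ℤ) : (a : ℝ) + e ≠ m := by
  intro hm
  have := h.floor_add
  rw [hm, Int.floor_intCast] at this
  rcases h with ⟨-, he₁, he₂⟩ | ⟨-, he₁, he₂⟩ <;> split_ifs at this <;> subst this <;>
    push_cast at hm <;> linarith

lemma wallLevels_add (h : InwardOffset a e) : wallLevels (a + e) = wallLevels a := by
  have hceil : ⌈(a : ℝ) + e⌉ = if 0 < a then a else a + 1 := by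
    rcases h with ⟨ha, he₁, he₂⟩ | ⟨ha, he₁, he₂⟩
    · rw [if_pos ha, Int.ceil_eq_iff]; constructor <;> linarith
    · rw [if_neg (by omega), Int.ceil_eq_iff]; push_cast; constructor <;> linarith
  rw [wallLevels, wallLevels, hceil, h.floor_add, Int.ceil_intCast, Int.floor_intCast]
  split_ifs with ha
  · rw [Ioc_eq_empty (by omega), Ioc_eq_empty (by omega)]
  · rw [Ico_eq_empty (by omega), Ico_eq_empty (by omega)]

end InwardOffset

noncomputable def walls (n : ℕ) (p : Fin n → ℝ) : Finset ((Fin n → ℝ) × ℤ) :=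
  (posRoots n).biUnion fun α => (wallLevels (dotp n p α)).image (Prod.mk α)

lemma mem_walls {p : Fin n → ℝ} {q : (Fin n → ℝ) × ℤ} :
    q ∈ walls n p ↔ q.1 ∈ PosRoot n ∧ q.2 ∈ wallLevels (dotp n p q.1) := by
  rw [← coe_posRoots]
  obtain ⟨α, m⟩ := q
  simp [walls]

lemma card_walls (p : Fin n → ℝ) :
    #(walls n p) = ∑ α ∈ posRoots n, #(wallLevels (dotp n p α)) := by
  rw [walls, card_biUnion]
  · exact sum_congr rfl fun α _ => card_image_of_injective _ (Prod.mk_right_injective α)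
  · intro α _ β _ hαβ
    simp only [disjoint_left, mem_image]
    rintro _ ⟨m, -, rfl⟩ ⟨m', -, h⟩
    exact hαβ (congrArg Prod.fst h).symm

lemma IsPreconnected.floor_eq_floor {S : Set ℝ} (hS : IsPreconnected S)
    (hZ : ∀ m : ℤ, (m : ℝ) ∉ S) {a b : ℝ} (ha : a ∈ S) (hb : b ∈ S) : ⌊a⌋ = ⌊b⌋ := by
  have key : ∀ {a b : ℝ}, a ∈ S → b ∈ S → ¬ ⌊a⌋ < ⌊b⌋ := fun {_ b} ha hb hlt =>
    hZ ⌊b⌋ (hS.Icc_subset ha hb ⟨(Int.floor_lt.mp hlt).le, Int.floor_le b⟩)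
  exact le_antisymm (not_lt.mp (key hb ha)) (not_lt.mp (key ha hb))

lemma floor_dotp_eq_of_mem_connectedComponentIn {α x y : Fin n → ℝ} (hα : α ∈ PosRoot n)
    (hx : x ∈ connectedComponentIn (ArrComp n) y) : ⌊dotp n x α⌋ = ⌊dotp n y α⌋ := by
  have hy : y ∈ connectedComponentIn (ArrComp n) y :=
    mem_connectedComponentIn (connectedComponentIn_nonempty_iff.mp ⟨x, hx⟩)
  refine IsPreconnected.floor_eq_floor
    (isPreconnected_connectedComponentIn.image _ (continuous_dotp_left α).continuousOn) ?_
    ⟨x, hx, rfl⟩ ⟨y, hy, rfl⟩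
  rintro m ⟨z, hz, hzm⟩
  exact connectedComponentIn_subset _ _ hz α hα m hzm

lemma fundAlcove_nonempty (n : ℕ) : (FundAlcove n).Nonempty := by
  refine ⟨fun i => ((n : ℝ) - i) / (2 * n + 1), fun α hα => ?_⟩
  have hden : (0 : ℝ) < 2 * n + 1 := by positivity
  have hlt : ∀ i : Fin n, (i : ℝ) < n := fun i => by exact_mod_cast i.isLt
  have hnonneg : ∀ i : Fin n, (0 : ℝ) ≤ i := fun i => by positivity
  rcases hα with ⟨i, rfl⟩ | ⟨i, j, hij, rfl | rfl⟩ <;>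
    simp only [dotp_two_smul_stdBasis, dotp_stdBasis_add_stdBasis, dotp_stdBasis_sub_stdBasis,
      ← mul_div_assoc, ← add_div, ← sub_div, div_pos_iff_of_pos_right hden,
      div_lt_one hden]
  · constructor <;> linarith [hlt i, hnonneg i]
  all_goals
    have hij' : (i : ℝ) < j := by exact_mod_cast hij
    constructor <;> linarith [hlt j, hnonneg i]

def sepSet (n : ℕ) (A B : Set (Fin n → ℝ)) : Set ((Fin n → ℝ) × ℤ) :=
  {q | q.1 ∈ PosRoot n ∧ Separates n q.1 q.2 A B}

lemma sepCount_eq_ncard (A B : Set (Fin n → ℝ)) : sepCount n A B = (sepSet n A B).ncard :=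
  Nat.card_coe_set_eq _

lemma sepSet_subset_walls {B : Set (Fin n → ℝ)} {y : Fin n → ℝ} (hy : y ∈ B) :
    sepSet n (FundAlcove n) B ⊆ walls n y := by
  obtain ⟨z, hz⟩ := fundAlcove_nonempty n
  rintro ⟨α, m⟩ ⟨hα, hsep | hsep⟩ <;> refine mem_walls.mpr ⟨hα, mem_wallLevels.mpr ?_⟩
  · have : (0 : ℝ) < m := (hz α hα).1.trans (hsep.1 z hz)
    exact Or.inl ⟨by exact_mod_cast this, hsep.2 y hy⟩
  · have : (m : ℝ) < 1 := (hsep.2 z hz).trans (hz α hα).2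
    exact Or.inr ⟨hsep.1 y hy, by exact_mod_cast Int.lt_add_one_iff.mp (by exact_mod_cast this)⟩

lemma abs_dotp_sub_le_one_of_mem_cube {α x p : Fin n → ℝ} (hα : α ∈ PosRoot n)
    (hx : x ∈ cube n p) : |dotp n x α - dotp n p α| ≤ 1 := by
  have h := fun i => abs_le.mp (hx i)
  rw [abs_le]
  rcases hα with ⟨i, rfl⟩ | ⟨i, j, -, rfl | rfl⟩ <;>
    simp only [dotp_two_smul_stdBasis, dotp_stdBasis_add_stdBasis, dotp_stdBasis_sub_stdBasis]
  · constructor <;> linarith [h i]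
  all_goals constructor <;> linarith [h i, h j]

lemma walls_subset_sepSet {p : Fin n → ℝ} (hp : ∀ α ∈ PosRoot n, ∃ a : ℤ, dotp n p α = a)
    {B : Set (Fin n → ℝ)} (hB : B ⊆ cube n p) (hBA : B ⊆ ArrComp n) :
    ↑(walls n p) ⊆ sepSet n (FundAlcove n) B := by
  rintro ⟨α, m⟩ hq
  obtain ⟨hα, hm⟩ := mem_walls.mp hq
  obtain ⟨a, ha⟩ := hp α hα
  have hbound := fun x (hx : x ∈ B) => abs_le.mp (abs_dotp_sub_le_one_of_mem_cube hα (hB hx))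
  refine ⟨hα, ?_⟩
  rw [ha, mem_wallLevels] at hm
  rcases hm with ⟨h1, hma⟩ | ⟨ham, h0⟩
  · have hm1 : (1 : ℝ) ≤ m := by exact_mod_cast h1
    have hma' : (m : ℝ) ≤ a - 1 := by exact_mod_cast Int.le_sub_one_of_lt (by exact_mod_cast hma)
    refine Or.inl ⟨fun x hx => by linarith [(hx α hα).2], fun x hx => ?_⟩
    exact lt_of_le_of_ne (by linarith [hbound x hx]) (hBA hx α hα m).symm
  · have hm0 : (m : ℝ) ≤ 0 := by exact_mod_cast h0
    have ham' : (a : ℝ) + 1 ≤ m := by exact_mod_cast Int.add_one_le_of_lt (by exact_mod_cast ham)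
    refine Or.inr ⟨fun x hx => ?_, fun x hx => by linarith [(hx α hα).1]⟩
    exact lt_of_le_of_ne (by linarith [hbound x hx]) (hBA hx α hα m)

def IsInwardShift (n : ℕ) (p u : Fin n → ℝ) : Prop :=
  ∀ α ∈ PosRoot n, ∃ a : ℤ, dotp n p α = a ∧ InwardOffset a (dotp n u α)

namespace IsInwardShift

variable {p u : Fin n → ℝ}

lemma add_mem_arrComp (h : IsInwardShift n p u) : p + u ∈ ArrComp n := by
  intro α hα m
  obtain ⟨a, ha, hau⟩ := h α hα
  rw [dotp_add_left, ha]
  exact hau.add_ne_intCast m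

lemma walls_add (h : IsInwardShift n p u) : walls n (p + u) = walls n p := by
  ext ⟨α, m⟩
  simp only [mem_walls]
  refine and_congr_right fun hα => ?_
  obtain ⟨a, ha, hau⟩ := h α hα
  rw [dotp_add_left, ha, hau.wallLevels_add]

lemma connectedComponentIn_subset_cube (h : IsInwardShift n p u) :
    connectedComponentIn (ArrComp n) (p + u) ⊆ cube n p := by
  intro x hx i
  have hα : (2 : ℝ) • stdBasis n i ∈ PosRoot n := Or.inl ⟨i, rfl⟩
  obtain ⟨a, ha, hau⟩ := h _ hα
  have hfloor := floor_dotp_eq_of_mem_connectedComponentIn hα hx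
  rw [dotp_add_left, ha, hau.floor_add] at hfloor
  simp only [dotp_two_smul_stdBasis] at ha hfloor
  have hlo : ((a - 1 : ℤ) : ℝ) ≤ 2 * x i :=
    (Int.cast_le.mpr (by split_ifs at hfloor <;> omega)).trans (Int.floor_le _)
  have hhi : 2 * x i < ((a + 1 : ℤ) : ℝ) :=
    (Int.lt_floor_add_one _).trans_le (by exact_mod_cast (by split_ifs at hfloor <;> omega))
  push_cast at hlo hhi
  rw [abs_le]
  constructor <;> linarith

theorem sepCount_eq_card_walls (h : IsInwardShift n p u) {A : Set (Fin n → ℝ)}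
    (hA : IsAlcove n A) (hcube : A ⊆ cube n p)
    (hmin : ∀ B, IsAlcove n B → B ⊆ cube n p →
      sepCount n (FundAlcove n) A ≤ sepCount n (FundAlcove n) B) :
    sepCount n (FundAlcove n) A = #(walls n p) := by
  obtain ⟨x, hx, rfl⟩ := hA
  have hy := h.add_mem_arrComp
  apply le_antisymm
  · calc sepCount n (FundAlcove n) (connectedComponentIn (ArrComp n) x)
        ≤ sepCount n (FundAlcove n) (connectedComponentIn (ArrComp n) (p + u)) :=
          hmin _ ⟨_, hy, rfl⟩ h.connectedComponentIn_subset_cube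
      _ ≤ #(walls n (p + u)) := by
          rw [sepCount_eq_ncard, ← Set.ncard_coe_finset]
          exact Set.ncard_le_ncard (sepSet_subset_walls (mem_connectedComponentIn hy))
            (finite_toSet _)
      _ = #(walls n p) := by rw [h.walls_add]
  · rw [sepCount_eq_ncard, ← Set.ncard_coe_finset]
    exact Set.ncard_le_ncard
      (walls_subset_sepSet (fun α hα => (h α hα).imp fun _ ha => ha.1) hcube
        (connectedComponentIn_subset _ _))
      ((finite_toSet _).subset (sepSet_subset_walls (mem_connectedComponentIn hx)))

end IsInwardShift

lemma sum_ltPairs_of_eq_zero {M : Type*} [AddCommMonoid M] {F : Fin n → Fin n → M} {i₀ : Fin n}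
    {a b : M} (ha : ∀ j, i₀ < j → F i₀ j = a) (hb : ∀ i, i < i₀ → F i i₀ = b)
    (h0 : ∀ i j, i ≠ i₀ → j ≠ i₀ → F i j = 0) :
    ∑ q ∈ ltPairs n, F q.1 q.2 = (n - 1 - i₀) • a + (i₀ : ℕ) • b := by
  have hsplit : ∀ q ∈ ltPairs n,
      F q.1 q.2 = (if q.1 = i₀ then a else 0) + (if q.2 = i₀ then b else 0) := by
    rintro ⟨i, j⟩ hq
    simp only [ltPairs, mem_filter, mem_univ, true_and] at hq
    by_cases hi : i = i₀
    · subst hi; simp [ha j hq, hq.ne']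
    by_cases hj : j = i₀
    · subst hj; simp [hb i hq, hi]
    · simp [h0 i j hi hj, hi, hj]
  have hfst : (ltPairs n).filter (fun q => q.1 = i₀) = {i₀} ×ˢ Ioi i₀ := by
    ext ⟨i, j⟩
    simp only [ltPairs, mem_filter, mem_univ, true_and, mem_product, mem_singleton, mem_Ioi]
    grind
  have hsnd : (ltPairs n).filter (fun q => q.2 = i₀) = Iio i₀ ×ˢ {i₀} := by
    ext ⟨i, j⟩
    simp only [ltPairs, mem_filter, mem_univ, true_and, mem_product, mem_singleton, mem_Iio]
    grind
  rw [sum_congr rfl hsplit, sum_add_distrib, sum_ite, sum_ite, hfst, hsnd]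
  simp [Fin.card_Ioi, Fin.card_Iio]

lemma sum_posRoots_smul_stdBasis {M : Type*} [AddCommMonoid M] (g : ℝ → M) (hg : g 0 = 0)
    (t : ℝ) (i₀ : Fin n) :
    ∑ α ∈ posRoots n, g (dotp n (t • stdBasis n i₀) α)
      = g (2 * t) + (n - 1 - i₀) • (g t + g t) + (i₀ : ℕ) • (g t + g (-t)) := by
  have hx : ∀ i, (t • stdBasis n i₀) i = if i = i₀ then t else 0 := fun i => by
    simp [stdBasis]
  rw [sum_posRoots, add_assoc]
  congr 1
  · rw [sum_eq_single i₀ (fun i _ hi => by simp [hx, hi, hg]) (by simp)]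
    simp [hx]
  · refine sum_ltPairs_of_eq_zero (F := fun i j =>
        g (dotp n (t • stdBasis n i₀) (stdBasis n i + stdBasis n j))
          + g (dotp n (t • stdBasis n i₀) (stdBasis n i - stdBasis n j)))
      (fun j hj => ?_) (fun i hi => ?_) (fun i j hi hj => ?_)
    · simp [hx, hj.ne']
    · simp [hx, hi.ne]
    · simp [hx, hi, hj, hg]

lemma exists_isInwardShift_smul_stdBasis (t : ℤ) (ht : t ≠ 0) (i₀ : Fin n) :
    ∃ u, IsInwardShift n ((t : ℝ) • stdBasis n i₀) u := by
  obtain ⟨z, hz⟩ := fundAlcove_nonempty n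
  have hz₁ : ∀ i, 0 < z i ∧ z i < 1 / 2 := fun i => by
    have := hz _ (Or.inl ⟨i, rfl⟩); simp only [dotp_two_smul_stdBasis] at this
    constructor <;> linarith [this.1, this.2]
  obtain ⟨s, hs⟩ : ∃ s : ℝ, (0 < t ∧ s = 1) ∨ (t < 0 ∧ s = -1) := by
    rcases ht.lt_or_gt with h | h
    exacts [⟨-1, Or.inr ⟨h, rfl⟩⟩, ⟨1, Or.inl ⟨h, rfl⟩⟩]
  have hp : ∀ i, ((t : ℝ) • stdBasis n i₀) i = ((if i = i₀ then t else 0 : ℤ) : ℝ) := fun i => by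
    simp [stdBasis]
  -- Off `i₀`, `u` is half a point of the fundamental alcove, which puts the roots avoiding `i₀`
  -- in `(0, 1/2)`; on every root through `i₀` the entry `-s/4` outweighs the other coordinate.
  refine ⟨fun i => if i = i₀ then -s / 4 else z i / 2, fun α hα => ?_⟩
  have hzα := hz α hα
  rcases hα with ⟨i, rfl⟩ | ⟨i, j, hij, rfl | rfl⟩
  · refine ⟨2 * (if i = i₀ then t else 0),
      by simp only [dotp_two_smul_stdBasis, hp]; push_cast; ring, ?_⟩
    simp only [dotp_two_smul_stdBasis]
    split_ifs <;> rcases hs with ⟨ht, rfl⟩ | ⟨ht, rfl⟩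
    · exact Or.inl ⟨by omega, by norm_num, by norm_num⟩
    · exact Or.inr ⟨by omega, by norm_num, by norm_num⟩
    all_goals exact Or.inr ⟨by omega, by linarith [hz₁ i], by linarith [hz₁ i]⟩
  all_goals
    first
    | refine ⟨(if i = i₀ then t else 0) + (if j = i₀ then t else 0),
        by simp only [dotp_stdBasis_add_stdBasis, hp]; push_cast; ring, ?_⟩
    | refine ⟨(if i = i₀ then t else 0) - (if j = i₀ then t else 0),
        by simp only [dotp_stdBasis_sub_stdBasis, hp]; push_cast; ring, ?_⟩
    simp only [dotp_stdBasis_add_stdBasis, dotp_stdBasis_sub_stdBasis] at hzα ⊢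
    split_ifs with hi hj <;> rcases hs with ⟨ht, rfl⟩ | ⟨ht, rfl⟩ <;>
      first
      | exact absurd (hi.trans hj.symm) hij.ne
      | exact Or.inl ⟨by omega, by linarith [hz₁ i, hz₁ j], by linarith [hz₁ i, hz₁ j]⟩
      | exact Or.inr ⟨by omega, by linarith [hz₁ i, hz₁ j, hzα.1],
          by linarith [hz₁ i, hz₁ j, hzα.2]⟩

theorem sepCount_eq_of_cube_smul_stdBasis (t : ℤ) (ht : t ≠ 0) (i₀ : Fin n)
    {A : Set (Fin n → ℝ)} (hA : IsAlcove n A) (hcube : A ⊆ cube n ((t : ℝ) • stdBasis n i₀))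
    (hmin : ∀ B, IsAlcove n B → B ⊆ cube n ((t : ℝ) • stdBasis n i₀) →
      sepCount n (FundAlcove n) A ≤ sepCount n (FundAlcove n) B) :
    (sepCount n (FundAlcove n) A : ℤ) =
      if 0 < t then 2 * n * (t - 1) + i₀ + 1 else -(2 * n * t) - i₀ := by
  obtain ⟨u, hu⟩ := exists_isInwardShift_smul_stdBasis t ht i₀
  rw [hu.sepCount_eq_card_walls hA hcube hmin, card_walls, Nat.cast_sum,
    sum_posRoots_smul_stdBasis (fun d => (#(wallLevels d) : ℤ)) (by simp [wallLevels]),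
    show (2 : ℝ) * t = ((2 * t : ℤ) : ℝ) by push_cast; ring, ← Int.cast_neg,
    card_wallLevels_intCast, card_wallLevels_intCast, card_wallLevels_intCast, nsmul_eq_mul,
    nsmul_eq_mul]
  push_cast [Nat.cast_sub (show (i₀ : ℕ) ≤ n - 1 by omega), Nat.cast_sub (show 1 ≤ n from i₀.pos)]
  split_ifs <;> first | omega | ring

end

theorem stmt12_general (n k ℓ : ℕ) (h1 : 1 ≤ ℓ) (h2 : ℓ ≤ 2*n)
    (c : ℕ) (hc : c = (k + 2*n - 1)/(2*n)) (hkℓ : k = 2*n*(c-1) + ℓ)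
    (p : Fin n → ℝ)
    (hp : p = if ℓ ≤ n then (fun i => if i.val = ℓ - 1 then (c : ℝ) else 0)
              else (fun i => if i.val = 2*n - ℓ then -(c : ℝ) else 0))
    (A : Set (Fin n → ℝ)) (hA : IsAlcove n A) (hcube : A ⊆ cube n p)
    (hdist : ∀ B, IsAlcove n B → B ⊆ cube n p →
      sepCount n (FundAlcove n) A ≤ sepCount n (FundAlcove n) B) :
    sepCount n (FundAlcove n) A = k := by
  have hc₁ : 1 ≤ c := Nat.pos_of_ne_zero fun hc₀ => by
    rw [hc₀, Nat.mul_zero, zero_add] at hkℓ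
    rw [hc₀, eq_comm, Nat.div_eq_zero_iff] at hc
    omega
  zify [hc₁] at hkℓ ⊢
  split_ifs at hp with hl
  · rw [hp, ite_val_eq_smul_stdBasis (by omega), ← Int.cast_natCast] at hcube hdist
    rw [sepCount_eq_of_cube_smul_stdBasis c (by omega) _ hA hcube hdist, if_pos (by omega), hkℓ]
    push_cast [h1]
    ring
  · rw [hp, ite_val_eq_smul_stdBasis (by omega), show -(c : ℝ) = ((-c : ℤ) : ℝ) by push_cast; rfl]
      at hcube hdist
    rw [sepCount_eq_of_cube_smul_stdBasis (-c) (by omega) _ hA hcube hdist, if_neg (by omega), hkℓ]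
    push_cast [h2]
    ring

/-- Let `w` be the minimal length coset representative whose coroot lattice point is
`⌈k/2n⌉ ε_ℓ` (resp. `-⌈k/2n⌉ ε_{2n-ℓ+1}` when `ℓ > n`), where `k = 2n(⌈k/2n⌉ - 1) + ℓ`,
`1 ≤ ℓ ≤ 2n`.  Then exactly `k` hyperplanes of the arrangement separate the fundamental
alcove from the alcove of `w`; equivalently `ℓ(w) = k`. -/
theorem stmt12 (n k ℓ : ℕ) (hn : 2 ≤ n) (hk : 1 ≤ k) (h1 : 1 ≤ ℓ) (h2 : ℓ ≤ 2*n)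
    (c : ℕ) (hc : c = (k + 2*n - 1)/(2*n)) (hkℓ : k = 2*n*(c-1) + ℓ)
    (p : Fin n → ℝ)
    (hp : p = if ℓ ≤ n then (fun i => if i.val = ℓ - 1 then (c : ℝ) else 0)
              else (fun i => if i.val = 2*n - ℓ then -(c : ℝ) else 0))
    (A : Set (Fin n → ℝ)) (hA : IsAlcove n A) (hcube : A ⊆ cube n p)
    (hdist : ∀ B, IsAlcove n B → B ⊆ cube n p →
      sepCount n (FundAlcove n) A ≤ sepCount n (FundAlcove n) B) :
    sepCount n (FundAlcove n) A = k :=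
  stmt12_general n k ℓ h1 h2 c hc hkℓ p hp A hA hcube hdist
end
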